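/- arXiv:2506.22889 — 13 statements merged into one kernel-verified Lean document; each statement's English description precedes it below -/
import Mathlib

section
/- Let A := {s : G → ℤ | ∏_{g∈G} g^{s(g)} = 1_G} for a finite abelian group G. Then A equals the ℤ-span of S = {δ_1, δ_g + δ_{g⁻¹}, δ_g + δ_h + δ_{(gh)⁻¹} : g,h ∈ G \ {1}} inside the group of integer-valued functions on G. -/
/-- The indicator function `δ_g : G → ℤ`. -/
def indicator {G : Type*} [DecidableEq G] (g : G) : G → ℤ :=
  fun x => if x = g then 1 else 0

section Aux

set_option linter.unusedSectionVars false

variable {G : Type*} [CommGroup G] [Fintype G] [DecidableEq G]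

/-- The "evaluation" map `s ↦ ∏ g, g ^ s g` as an additive monoid hom. -/
def prodHomAux : (G → ℤ) →+ Additive G where
  toFun s := Additive.ofMul (∏ g : G, g ^ s g)
  map_zero' := by simp
  map_add' s t := by
    have : (∏ g : G, g ^ (s + t) g) = (∏ g : G, g ^ s g) * ∏ g : G, g ^ t g := by
      rw [← Finset.prod_mul_distrib]
      exact Finset.prod_congr rfl fun g _ => by
        simp [zpow_add]
    simp only [this, ofMul_mul]

lemma prod_indicator_aux (a : G) : ∏ g : G, g ^ indicator a g = a := by
  rw [Finset.prod_eq_single a]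
  · simp [indicator]
  · intro b _ hb
    simp [indicator, hb]
  · intro h
    exact absurd (Finset.mem_univ a) h

lemma prodHomAux_indicator (a : G) :
    prodHomAux (indicator a) = Additive.ofMul a := by
  show Additive.ofMul (∏ g : G, g ^ indicator a g) = Additive.ofMul a
  rw [prod_indicator_aux]

lemma indicator_decomp_aux (s : G → ℤ) : s = ∑ g : G, s g • indicator g := by
  funext x
  rw [Finset.sum_apply]
  simp [indicator, mul_ite, Finset.sum_ite_eq]

end Aux

theorem productOne_eq_span_length_le_three
    {G : Type*} [CommGroup G] [Fintype G] [DecidableEq G]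
    (S : Set (G → ℤ))
    (hS : S = {f | f = indicator (1 : G)} ∪
      {f | ∃ g : G, g ≠ 1 ∧ f = indicator g + indicator g⁻¹} ∪
      {f | ∃ g h : G, g ≠ 1 ∧ h ≠ 1 ∧
        f = indicator g + indicator h + indicator (g * h)⁻¹}) :
    {s : G → ℤ | ∏ g : G, g ^ s g = 1} = (Submodule.span ℤ S : Set (G → ℤ)) := by
  set N := Submodule.span ℤ S with hN
  -- basic membership facts
  have hδ1 : indicator (1 : G) ∈ N := Submodule.subset_span (by rw [hS]; exact Or.inl (Or.inl rfl))
  have hpair : ∀ g : G, indicator g + indicator g⁻¹ ∈ N := by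
    intro g
    by_cases hg : g = 1
    · subst hg; rw [inv_one]; exact N.add_mem hδ1 hδ1
    · exact Submodule.subset_span (by rw [hS]; exact Or.inl (Or.inr ⟨g, hg, rfl⟩))
  have htriple : ∀ g h : G, indicator g + indicator h + indicator (g * h)⁻¹ ∈ N := by
    intro g h
    by_cases hg : g = 1
    · subst hg
      rw [one_mul, add_assoc]
      exact N.add_mem hδ1 (hpair h)
    · by_cases hh : h = 1
      · subst hh
        rw [mul_one]
        have heq : indicator g + indicator (1 : G) + indicator g⁻¹
            = indicator (1 : G) + (indicator g + indicator g⁻¹) := by abel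
        rw [heq]
        exact N.add_mem hδ1 (hpair g)
      · exact Submodule.subset_span (by rw [hS]; exact Or.inr ⟨g, h, hg, hh, rfl⟩)
  -- the quotient map
  set π := N.mkQ with hπ
  have hπ1 : π (indicator (1 : G)) = 0 := by
    rw [hπ, Submodule.mkQ_apply, Submodule.Quotient.mk_eq_zero]; exact hδ1
  have hπmul : ∀ g h : G, π (indicator (g * h)) = π (indicator g) + π (indicator h) := by
    intro g h
    have hmem : indicator g + indicator h - indicator (g * h) ∈ N := by
      have := N.sub_mem (htriple g h) (hpair (g * h))
      have heq : indicator g + indicator h + indicator (g * h)⁻¹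
          - (indicator (g * h) + indicator (g * h)⁻¹)
          = indicator g + indicator h - indicator (g * h) := by abel
      rwa [heq] at this
    have h0 : π (indicator g + indicator h - indicator (g * h)) = 0 := by
      rw [hπ, Submodule.mkQ_apply, Submodule.Quotient.mk_eq_zero]; exact hmem
    rw [map_sub, map_add, sub_eq_zero] at h0
    exact h0.symm
  -- the induced monoid hom
  let ψ : G →* Multiplicative ((G → ℤ) ⧸ N) :=
    { toFun := fun g => Multiplicative.ofAdd (π (indicator g))
      map_one' := by
        show Multiplicative.ofAdd (π (indicator (1 : G))) = 1
        rw [hπ1]; rfl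
      map_mul' := fun g h => by
        show Multiplicative.ofAdd (π (indicator (g * h))) = _
        rw [hπmul]; rfl }
  ext s
  constructor
  · intro hs
    -- hard direction : s ∈ span S
    have hψ : ∀ g : G, ψ g = Multiplicative.ofAdd (π (indicator g)) := fun g => rfl
    have key : ψ (∏ g : G, g ^ s g) = Multiplicative.ofAdd (π s) := by
      rw [map_prod]
      have h1 : ∀ g : G, ψ g ^ s g = Multiplicative.ofAdd (s g • π (indicator g)) := by
        intro g
        rw [hψ, ← ofAdd_zsmul]
      simp only [map_zpow, h1]
      rw [← ofAdd_sum]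
      congr 1
      conv_rhs => rw [indicator_decomp_aux s]
      rw [map_sum]
      exact Finset.sum_congr rfl fun g _ => (map_smul π (s g) (indicator g)).symm
    rw [hs, map_one] at key
    have hπs : π s = 0 := by
      have := congrArg Multiplicative.toAdd key
      simpa using this.symm
    rw [hπ, Submodule.mkQ_apply, Submodule.Quotient.mk_eq_zero] at hπs
    exact hπs
  · intro hsN
    -- easy direction : span S ⊆ kernel
    have hle : N ≤ (AddSubgroup.toIntSubmodule (prodHomAux.ker : AddSubgroup (G → ℤ))) := by
      rw [hN, Submodule.span_le]
      rw [hS]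
      intro f hf
      simp only [Set.mem_union, Set.mem_setOf_eq] at hf
      obtain (hf | ⟨g, hg, hf⟩) | ⟨g, h, hg, hh, hf⟩ := hf <;> subst hf <;>
        show prodHomAux _ = 0 <;>
        simp only [map_add, prodHomAux_indicator, ← ofMul_mul] <;> simp <;>
        abel
    have h0 : prodHomAux s = 0 := hle hsN
    have : Additive.ofMul (∏ g : G, g ^ s g) = Additive.ofMul (1 : G) := h0
    exact Additive.ofMul.injective this
end

section
/- Let G be a finite abelian group, K a field containing a primitive exp(G)-th root of unity with char K not dividing |G|, and let G act on the K-vector space V with basis {e_χ : χ ∈ Ĝ} by g·e_χ = χ(g)e_χ. Let T be the set of G-invariant monomials {x_{1}, x_χ x_{χ⁻¹}, x_χ x_ρ x_{(χρ)⁻¹} : χ,ρ ∈ Ĝ \ {1}} in the dual variables. If v, w ∈ V have all coordinates v_χ, w_χ nonzero for every nontrivial character χ, then G·v = G·w if and only if f(v) = f(w) for all f ∈ T. -/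
/-!
Translating `v` by `g` multiplies its `χ`-coordinate by `χ g`, so an orbit equality `G·v = G·w`
amounts to a homomorphism `φ : Ĝ → Kˣ` with `φ χ * v χ = w χ`: by duality for finite abelian
groups (available since `K` contains a primitive `exp(G)`-th root of unity), every such `φ` is
evaluation at some `g : G`. Away from the trivial character the ratio `φ = w / v` is forced, and
the agreement of the invariant monomials says precisely that `φ χ * φ χ⁻¹ = 1` and
`φ χ * φ ρ * φ (χ * ρ)⁻¹ = 1`, which together make `φ` multiplicative.
-/

open CommGroup

lemma IsPrimitiveRoot.hasEnoughRootsOfUnity {K : Type*} [CommRing K] [IsDomain K] {ω : K}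
    {n : ℕ} [NeZero n] (hω : IsPrimitiveRoot ω n) : HasEnoughRootsOfUnity K n :=
  ⟨⟨ω, hω⟩, inferInstance⟩

section Characters

variable {G K : Type*} [Group G] [CommMonoid K]

lemma MonoidHom.coe_apply_mul_coe_inv_apply (χ : G →* Kˣ) (g : G) :
    (χ g : K) * (χ⁻¹ g : K) = 1 := by
  rw [← Units.val_mul, ← MonoidHom.mul_apply, mul_inv_cancel, MonoidHom.one_apply, Units.val_one]

lemma MonoidHom.coe_apply_mul_coe_apply_mul_coe_inv_apply (χ ρ : G →* Kˣ) (g : G) :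
    (χ g : K) * (ρ g : K) * ((χ * ρ)⁻¹ g : K) = 1 := by
  rw [← Units.val_mul, ← Units.val_mul, ← MonoidHom.mul_apply, ← MonoidHom.mul_apply,
    mul_inv_cancel, MonoidHom.one_apply, Units.val_one]

end Characters

def MonoidHom.ofMulMulInvEqOne {A M : Type*} [Group A] [CommMonoid M] (f : A → M)
    (h1 : f 1 = 1) (h : ∀ a b, f a * f b * f (a * b)⁻¹ = 1) : A →* M where
  toFun := f
  map_one' := h1
  map_mul' a b := by
    have hpair : f (a * b) * f (a * b)⁻¹ = 1 := by simpa [h1] using h (a * b) 1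
    calc f (a * b) = f (a * b) * (f a * f b * f (a * b)⁻¹) := by rw [h, mul_one]
      _ = f a * f b * (f (a * b) * f (a * b)⁻¹) := by ac_rfl
      _ = f a * f b := by rw [hpair, mul_one]

lemma exists_map_one_mul_eq {A K : Type*} [One A] [GroupWithZero K] (v w : A → K)
    (hv : ∀ a, a ≠ 1 → v a ≠ 0) (h1 : v 1 = w 1) :
    ∃ f : A → K, f 1 = 1 ∧ ∀ a, f a * v a = w a := by
  classical
  refine ⟨fun a => if a = 1 then 1 else w a / v a, if_pos rfl, fun a => ?_⟩
  by_cases ha : a = 1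
  · simp [ha, h1]
  · simp only [if_neg ha]
    exact div_mul_cancel₀ (w a) (hv a ha)

theorem exists_monoidHom_mul_eq_of_monomials_eq {A K : Type*} [Group A] [Field K] (v w : A → K)
    (hv : ∀ a, a ≠ 1 → v a ≠ 0) (h1 : v 1 = w 1) (h2 : ∀ a, a ≠ 1 → v a * v a⁻¹ = w a * w a⁻¹)
    (h3 : ∀ a b, a ≠ 1 → b ≠ 1 → v a * v b * v (a * b)⁻¹ = w a * w b * w (a * b)⁻¹) :
    ∃ φ : A →* Kˣ, ∀ a, (φ a : K) * v a = w a := by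
  obtain ⟨f, hf1, hfv⟩ := exists_map_one_mul_eq v w hv h1
  obtain rfl : w = fun a => f a * v a := funext fun a => (hfv a).symm
  have hpair : ∀ a, f a * f a⁻¹ = 1 := by
    intro a
    by_cases ha : a = 1
    · simp [ha, hf1]
    refine (mul_eq_right₀ (mul_ne_zero (hv a ha) (hv a⁻¹ (inv_ne_one.mpr ha)))).1 ?_
    linear_combination -h2 a ha
  have htriple : ∀ a b, f a * f b * f (a * b)⁻¹ = 1 := by
    intro a b
    by_cases ha : a = 1
    · simp [ha, hf1, hpair]
    by_cases hb : b = 1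
    · simp [hb, hf1, hpair]
    by_cases hab : a * b = 1
    · simp [eq_inv_of_mul_eq_one_right hab, hf1, hpair]
    have hne := mul_ne_zero (mul_ne_zero (hv a ha) (hv b hb)) (hv _ (inv_ne_one.mpr hab))
    refine (mul_eq_right₀ hne).1 ?_
    linear_combination -h3 a b ha hb
  exact ⟨(MonoidHom.ofMulMulInvEqOne f hf1 htriple).toHomUnits, hfv⟩

theorem orbits_eq_iff_deg_three_monomials_agree_general
    {G : Type*} [CommGroup G] [Fintype G]
    {K : Type*} [Field K]
    (ω : K) (hω : orderOf ω = Monoid.exponent G)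
    (v w : (G →* Kˣ) → K)
    (hv : ∀ χ : G →* Kˣ, χ ≠ 1 → v χ ≠ 0) :
    (∃ g : G, ∀ χ : G →* Kˣ, (χ g : K) * v χ = w χ) ↔
      (v 1 = w 1 ∧
       (∀ χ : G →* Kˣ, χ ≠ 1 → v χ * v χ⁻¹ = w χ * w χ⁻¹) ∧
       (∀ χ ρ : G →* Kˣ, χ ≠ 1 → ρ ≠ 1 →
         v χ * v ρ * v (χ * ρ)⁻¹ = w χ * w ρ * w (χ * ρ)⁻¹)) := by
  constructor
  · rintro ⟨g, hg⟩
    obtain rfl : w = fun χ => (χ g : K) * v χ := funext fun χ => (hg χ).symm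
    refine ⟨by simp, fun χ _ => ?_, fun χ ρ _ _ => ?_⟩
    · linear_combination -(v χ * v χ⁻¹) * χ.coe_apply_mul_coe_inv_apply g
    · linear_combination
        -(v χ * v ρ * v (χ * ρ)⁻¹) * χ.coe_apply_mul_coe_apply_mul_coe_inv_apply ρ g
  · rintro ⟨h1, h2, h3⟩
    have : HasEnoughRootsOfUnity K (Monoid.exponent G) :=
      (hω ▸ IsPrimitiveRoot.orderOf ω).hasEnoughRootsOfUnity
    obtain ⟨φ, hφ⟩ := exists_monoidHom_mul_eq_of_monomials_eq v w hv h1 h2 h3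
    exact ⟨monoidHomMonoidHomEquiv G K φ, fun χ => by rw [apply_monoidHomMonoidHomEquiv, hφ]⟩

/-- Degree ≤ 3 invariant monomials separate points of the torus:
for `v, w` with all coordinates at nontrivial characters nonzero,
`G·v = G·w` iff all invariant monomials of degree at most 3 agree on `v` and `w`. -/
theorem orbits_eq_iff_deg_three_monomials_agree
    {G : Type*} [CommGroup G] [Fintype G]
    {K : Type*} [Field K]
    (hchar : (Fintype.card G : K) ≠ 0)
    (ω : K) (hω : orderOf ω = Monoid.exponent G)
    (v w : (G →* Kˣ) → K)
    (hv : ∀ χ : G →* Kˣ, χ ≠ 1 → v χ ≠ 0)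
    (hw : ∀ χ : G →* Kˣ, χ ≠ 1 → w χ ≠ 0) :
    (∃ g : G, ∀ χ : G →* Kˣ, (χ g : K) * v χ = w χ) ↔
      (v 1 = w 1 ∧
       (∀ χ : G →* Kˣ, χ ≠ 1 → v χ * v χ⁻¹ = w χ * w χ⁻¹) ∧
       (∀ χ ρ : G →* Kˣ, χ ≠ 1 → ρ ≠ 1 →
         v χ * v ρ * v (χ * ρ)⁻¹ = w χ * w ρ * w (χ * ρ)⁻¹)) :=
  orbits_eq_iff_deg_three_monomials_agree_general ω hω v w hv
end

section
/- For the regular representation of the cyclic group C_p of prime order p on V = F(C_p, ℚ) (the p-dimensional space of ℚ-valued functions on C_p, with C_p acting by translations), any two points v, w ∈ V with distinct C_p-orbits can be separated by a polynomial C_p-invariant of degree at most 3. -/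
open Finset Polynomial

namespace CPSep

variable {p : ℕ}

/-- `e ζ k = ζ ^ k.val`. -/
noncomputable def e (ζ : ℂ) (k : ZMod p) : ℂ := ζ ^ k.val

lemma pow_val_mod {ζ : ℂ} (hζ1 : ζ ^ p = 1) (n : ℕ) : ζ ^ (n % p) = ζ ^ n := by
  conv_rhs => rw [← Nat.div_add_mod n p]
  rw [pow_add, pow_mul, hζ1, one_pow, one_mul]

lemma e_add (hp : p.Prime) {ζ : ℂ} (hζ : IsPrimitiveRoot ζ p) (a b : ZMod p) :
    e ζ (a + b) = e ζ a * e ζ b := by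
  haveI : NeZero p := ⟨hp.ne_zero⟩
  rw [e, e, e, ZMod.val_add, pow_val_mod hζ.pow_eq_one, pow_add]

lemma e_zero (hp : p.Prime) (ζ : ℂ) : e ζ (0 : ZMod p) = 1 := by
  haveI : NeZero p := ⟨hp.ne_zero⟩
  simp [e]

/-- Discrete Fourier transform of a rational vector. -/
noncomputable def dft [NeZero p] (ζ : ℂ) (u : ZMod p → ℚ) (k : ZMod p) : ℂ :=
  ∑ j : ZMod p, (u j : ℂ) * e ζ (j * k)

lemma dft_zero [NeZero p] (hp : p.Prime) (ζ : ℂ) (u : ZMod p → ℚ) :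
    dft ζ u 0 = ((∑ j : ZMod p, u j : ℚ) : ℂ) := by
  simp [dft, e_zero hp, mul_zero]

lemma zmod_sum_range [NeZero p] (f : ℕ → ℂ) :
    ∑ m : ZMod p, f m.val = ∑ i ∈ range p, f i := by
  refine Finset.sum_nbij' (fun m => m.val) (fun i => (i : ZMod p)) ?_ ?_ ?_ ?_ ?_
  · intro a _; exact mem_range.2 (ZMod.val_lt a)
  · intro a _; exact mem_univ _
  · intro a _; exact ZMod.natCast_rightInverse a
  · intro i hi; exact ZMod.val_natCast_of_lt (mem_range.1 hi)
  · intro a _; rfl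

lemma sum_e [NeZero p] (hp : p.Prime) {ζ : ℂ} (hζ : IsPrimitiveRoot ζ p) {c : ZMod p} (hc : c ≠ 0) :
    ∑ k : ZMod p, e ζ (c * k) = 0 := by
  haveI := Fact.mk hp
  have h1 : ∑ k : ZMod p, e ζ (c * k) = ∑ m : ZMod p, e ζ m := by
    apply Fintype.sum_equiv (Equiv.mulLeft₀ c hc)
    intro x; rfl
  rw [h1]
  have h2 : ∑ m : ZMod p, e ζ m = ∑ i ∈ range p, ζ ^ i := zmod_sum_range _
  rw [h2]
  exact hζ.geom_sum_eq_zero hp.one_lt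

lemma sum_e_eq [NeZero p] (hp : p.Prime) {ζ : ℂ} (hζ : IsPrimitiveRoot ζ p) (c : ZMod p) :
    ∑ k : ZMod p, e ζ (c * k) = if c = 0 then (p : ℂ) else 0 := by
  haveI : NeZero p := ⟨hp.ne_zero⟩
  split_ifs with h
  · subst h; simp [e_zero hp, ZMod.card, mul_comm]
  · exact sum_e hp hζ h


lemma dft_inversion [NeZero p] (hp : p.Prime) {ζ : ℂ} (hζ : IsPrimitiveRoot ζ p)
    (u : ZMod p → ℚ) (j : ZMod p) :
    ∑ k : ZMod p, dft ζ u k * e ζ (-(j * k)) = (p : ℂ) * (u j : ℂ) := by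
  have : ∀ k : ZMod p, dft ζ u k * e ζ (-(j * k))
      = ∑ m : ZMod p, (u m : ℂ) * e ζ ((m - j) * k) := by
    intro k
    rw [dft, Finset.sum_mul]
    refine Finset.sum_congr rfl fun m _ => ?_
    rw [mul_assoc, ← e_add hp hζ]
    congr 2
    ring
  rw [Finset.sum_congr rfl fun k _ => this k, Finset.sum_comm]
  have : ∀ m : ZMod p, ∑ k : ZMod p, (u m : ℂ) * e ζ ((m - j) * k)
      = (u m : ℂ) * (if m - j = 0 then (p : ℂ) else 0) := by
    intro m
    rw [← Finset.mul_sum, sum_e_eq hp hζ]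
  rw [Finset.sum_congr rfl fun m _ => this m]
  rw [Finset.sum_eq_single j]
  · simp [mul_comm]
  · intro b _ hb
    rw [if_neg (by simpa [sub_eq_zero] using hb), mul_zero]
  · intro hj; exact absurd (Finset.mem_univ j) hj

lemma dft_inj [NeZero p] (hp : p.Prime) {ζ : ℂ} (hζ : IsPrimitiveRoot ζ p)
    {u u' : ZMod p → ℚ} (h : ∀ k, dft ζ u k = dft ζ u' k) : u = u' := by
  funext j
  have h1 := dft_inversion hp hζ u j
  have h2 := dft_inversion hp hζ u' j
  rw [Finset.sum_congr rfl fun k _ => by rw [h k]] at h1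
  rw [h2] at h1
  have hp0 : (p : ℂ) ≠ 0 := by exact_mod_cast hp.ne_zero
  have := mul_left_cancel₀ hp0 h1.symm
  exact_mod_cast this

lemma dft_translate [NeZero p] (hp : p.Prime) {ζ : ℂ} (hζ : IsPrimitiveRoot ζ p)
    (u : ZMod p → ℚ) (g k : ZMod p) :
    dft ζ (fun x => u (x - g)) k = e ζ (g * k) * dft ζ u k := by
  rw [dft, dft, Finset.mul_sum]
  apply Fintype.sum_equiv (Equiv.subRight g)
  intro m
  simp only [Equiv.subRight_apply]
  rw [mul_comm (e ζ (g * k)), mul_assoc, ← e_add hp hζ]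
  congr 2
  ring

lemma dft_const [NeZero p] (hp : p.Prime) {ζ : ℂ} (hζ : IsPrimitiveRoot ζ p)
    (c : ℚ) {k : ZMod p} (hk : k ≠ 0) :
    dft ζ (fun _ => c) k = 0 := by
  rw [dft, ← Finset.mul_sum]
  have : ∑ j : ZMod p, e ζ (j * k) = 0 := by
    rw [Finset.sum_congr rfl fun j _ => by rw [mul_comm j k]]
    exact sum_e hp hζ hk
  rw [this, mul_zero]

/-- If a rational vector has a vanishing Fourier coefficient at a nonzero frequency,
it is constant. -/
lemma dft_vanish_const [NeZero p] (hp : p.Prime) {ζ : ℂ} (hζ : IsPrimitiveRoot ζ p)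
    {u : ZMod p → ℚ} {k : ZMod p} (hk : k ≠ 0) (h0 : dft ζ u k = 0) :
    ∃ c : ℚ, ∀ x, u x = c := by
  haveI := Fact.mk hp
  set d : ℕ → ℚ := fun i => u ((i : ZMod p) * k⁻¹) with hd
  -- rewrite the DFT as a sum over `range p`
  have hsum : ∑ i ∈ range p, (d i : ℂ) * ζ ^ i = 0 := by
    rw [← h0, dft]
    rw [show (∑ j : ZMod p, (u j : ℂ) * e ζ (j * k))
        = ∑ m : ZMod p, (u (m * k⁻¹) : ℂ) * e ζ (m * k⁻¹ * k) from
      Fintype.sum_equiv (Equiv.mulRight₀ k hk) _ _ (fun m => by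
        simp only [Equiv.mulRight₀_apply]
        rw [mul_inv_cancel_right₀ hk])]
    have hre : ∀ m : ZMod p, (u (m * k⁻¹) : ℂ) * e ζ (m * k⁻¹ * k)
        = (d m.val : ℂ) * ζ ^ m.val := by
      intro m
      rw [inv_mul_cancel_right₀ hk]
      simp only [hd]
      rw [ZMod.natCast_rightInverse m]
      rfl
    rw [Finset.sum_congr rfl fun m _ => hre m]
    exact (zmod_sum_range fun i => (d i : ℂ) * ζ ^ i).symm
  -- the polynomial `Q - C c * Φ_p` vanishes at ζ and has low degree, hence is 0
  set c : ℚ := d (p - 1) with hc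
  set R : Polynomial ℚ := ∑ i ∈ range p, Polynomial.C (d i - c) * Polynomial.X ^ i with hR
  have haevalR : Polynomial.aeval ζ R = 0 := by
    have hcyc : Polynomial.aeval ζ (Polynomial.cyclotomic p ℚ) = 0 := by
      rw [Polynomial.aeval_def, Polynomial.eval₂_eq_eval_map, Polynomial.map_cyclotomic]
      exact (hζ.isRoot_cyclotomic hp.pos)
    have hsplit : R = (∑ i ∈ range p, Polynomial.C (d i) * Polynomial.X ^ i)
        - Polynomial.C c * Polynomial.cyclotomic p ℚ := by
      rw [Polynomial.cyclotomic_prime, Finset.mul_sum, ← Finset.sum_sub_distrib]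
      refine Finset.sum_congr rfl fun i _ => ?_
      rw [map_sub, sub_mul]
    rw [hsplit, map_sub, map_mul, hcyc, mul_zero, sub_zero, map_sum]
    rw [← hsum]
    refine Finset.sum_congr rfl fun i _ => ?_
    rw [map_mul, Polynomial.aeval_C, Polynomial.aeval_X_pow, eq_ratCast]
  have hRdeg : R.degree < ((p : ℕ) - 1 : ℕ) := by
    have hcoef : d (p - 1) - c = 0 := by rw [hc, sub_self]
    have : R = ∑ i ∈ range (p - 1), Polynomial.C (d i - c) * Polynomial.X ^ i := by
      have h2 : range p = range ((p - 1) + 1) := by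
        rw [Nat.sub_add_cancel hp.one_lt.le]
      rw [hR, h2, Finset.sum_range_succ, hcoef, map_zero, zero_mul, add_zero]
    rw [this]
    apply lt_of_le_of_lt (Polynomial.degree_sum_le _ _)
    rw [Finset.sup_lt_iff (by exact_mod_cast WithBot.bot_lt_coe _)]
    intro i hi
    apply lt_of_le_of_lt (Polynomial.degree_C_mul_X_pow_le _ _)
    exact_mod_cast Finset.mem_range.1 hi
  have hR0 : R = 0 := by
    by_contra hne
    have hmin := minpoly.degree_le_of_ne_zero ℚ ζ hne haevalR
    rw [← Polynomial.cyclotomic_eq_minpoly_rat hζ hp.pos] at hmin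
    rw [Polynomial.degree_cyclotomic, Nat.totient_prime hp] at hmin
    exact absurd (lt_of_le_of_lt hmin hRdeg) (lt_irrefl _)
  -- extract coefficients
  have hdi : ∀ i < p, d i = c := by
    intro i hi
    have := congrArg (fun q => Polynomial.coeff q i) hR0
    rw [hR] at this
    simp only [Polynomial.finset_sum_coeff, Polynomial.coeff_C_mul,
      Polynomial.coeff_X_pow, Polynomial.coeff_zero] at this
    rw [Finset.sum_eq_single i] at this
    · rw [if_pos rfl, mul_one, sub_eq_zero] at this; exact this
    · intro b _ hb; rw [if_neg (Ne.symm hb), mul_zero]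
    · intro hmem; exact absurd (Finset.mem_range.2 hi) hmem
  refine ⟨c, fun x => ?_⟩
  have := hdi ((x * k).val) (ZMod.val_lt _)
  rw [hd] at this
  simp only [ZMod.natCast_rightInverse (x * k)] at this
  rwa [mul_inv_cancel_right₀ hk] at this

lemma corr2 [NeZero p] (hp : p.Prime) {ζ : ℂ} (hζ : IsPrimitiveRoot ζ p)
    (u : ZMod p → ℚ) (k : ZMod p) :
    dft ζ u k * dft ζ u (-k)
      = ∑ a : ZMod p, ((∑ i : ZMod p, u i * u (i + a) : ℚ) : ℂ) * e ζ (a * k) := by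
  rw [dft, dft, Finset.sum_mul_sum, Finset.sum_comm]
  have h1 : ∀ m : ZMod p,
      ∑ j : ZMod p, ((u j : ℂ) * e ζ (j * k)) * ((u m : ℂ) * e ζ (m * -k))
        = ∑ a : ZMod p, ((u m : ℂ) * (u (m + a) : ℂ)) * e ζ (a * k) := by
    intro m
    apply Fintype.sum_equiv (Equiv.subRight m)
    intro j
    simp only [Equiv.subRight_apply]
    have hj : m + (j - m) = j := by ring
    rw [hj]
    have he : e ζ ((j - m) * k) = e ζ (j * k) * e ζ (m * -k) := by
      rw [← e_add hp hζ]; congr 1; ring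
    rw [he]; ring
  rw [Finset.sum_congr rfl fun m _ => h1 m, Finset.sum_comm]
  refine Finset.sum_congr rfl fun a _ => ?_
  push_cast
  rw [Finset.sum_mul]

lemma corr3 [NeZero p] (hp : p.Prime) {ζ : ℂ} (hζ : IsPrimitiveRoot ζ p)
    (u : ZMod p → ℚ) (k l : ZMod p) :
    dft ζ u k * dft ζ u l * dft ζ u (-(k + l))
      = ∑ a : ZMod p, ∑ b : ZMod p,
          ((∑ i : ZMod p, u i * u (i + a) * u (i + b) : ℚ) : ℂ)
            * (e ζ (a * k) * e ζ (b * l)) := by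
  have key : ∀ m : ZMod p,
      dft ζ u k * dft ζ u l * ((u m : ℂ) * e ζ (m * -(k + l)))
        = ∑ a : ZMod p, ∑ b : ZMod p,
            ((u m : ℂ) * (u (m + a) : ℂ) * (u (m + b) : ℂ))
              * (e ζ (a * k) * e ζ (b * l)) := by
    intro m
    rw [dft, dft, Finset.sum_mul_sum, Finset.sum_mul]
    apply Fintype.sum_equiv (Equiv.subRight m)
    intro j
    rw [Finset.sum_mul]
    apply Fintype.sum_equiv (Equiv.subRight m)
    intro n
    simp only [Equiv.subRight_apply]
    have hj : m + (j - m) = j := by ring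
    have hn : m + (n - m) = n := by ring
    rw [hj, hn]
    have he : e ζ ((j - m) * k) * e ζ ((n - m) * l)
        = e ζ (j * k) * (e ζ (n * l) * e ζ (m * -(k + l))) := by
      rw [← e_add hp hζ, ← e_add hp hζ, ← e_add hp hζ]
      congr 1; ring
    calc (u j : ℂ) * e ζ (j * k) * ((u n : ℂ) * e ζ (n * l)) * ((u m : ℂ) * e ζ (m * -(k + l)))
        = (u m : ℂ) * (u j : ℂ) * (u n : ℂ)
            * (e ζ (j * k) * (e ζ (n * l) * e ζ (m * -(k + l)))) := by ring
      _ = (u m : ℂ) * (u j : ℂ) * (u n : ℂ) * (e ζ ((j - m) * k) * e ζ ((n - m) * l)) := by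
          rw [he]
  have lhs : dft ζ u k * dft ζ u l * dft ζ u (-(k + l))
      = ∑ m : ZMod p, dft ζ u k * dft ζ u l * ((u m : ℂ) * e ζ (m * -(k + l))) := by
    rw [show dft ζ u (-(k + l)) = ∑ m : ZMod p, (u m : ℂ) * e ζ (m * -(k + l)) from rfl,
      Finset.mul_sum]
  rw [lhs, Finset.sum_congr rfl fun m _ => key m, Finset.sum_comm]
  refine Finset.sum_congr rfl fun a _ => ?_
  rw [Finset.sum_comm]
  refine Finset.sum_congr rfl fun b _ => ?_
  push_cast
  rw [Finset.sum_mul]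

lemma e_apply (ζ : ℂ) (k : ZMod p) : e ζ k = ζ ^ k.val := rfl

open MvPolynomial in
noncomputable def P1 [NeZero p] : MvPolynomial (ZMod p) ℚ := ∑ i : ZMod p, X i

open MvPolynomial in
noncomputable def P2 [NeZero p] (a : ZMod p) : MvPolynomial (ZMod p) ℚ :=
  ∑ i : ZMod p, X i * X (i + a)

open MvPolynomial in
noncomputable def P3 [NeZero p] (a b : ZMod p) : MvPolynomial (ZMod p) ℚ :=
  ∑ i : ZMod p, X i * X (i + a) * X (i + b)

open MvPolynomial

lemma eval_P1 [NeZero p] (u : ZMod p → ℚ) : eval u P1 = ∑ i : ZMod p, u i := by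
  rw [P1, map_sum]; simp

lemma eval_P2 [NeZero p] (a : ZMod p) (u : ZMod p → ℚ) :
    eval u (P2 a) = ∑ i : ZMod p, u i * u (i + a) := by
  rw [P2, map_sum]; simp

lemma eval_P3 [NeZero p] (a b : ZMod p) (u : ZMod p → ℚ) :
    eval u (P3 a b) = ∑ i : ZMod p, u i * u (i + a) * u (i + b) := by
  rw [P3, map_sum]; simp

lemma inv_P1 [NeZero p] (g : ZMod p) (u : ZMod p → ℚ) :
    eval (fun x => u (x - g)) P1 = eval u P1 := by
  rw [eval_P1, eval_P1]
  exact Fintype.sum_equiv (Equiv.subRight g) _ _ (fun x => by simp)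

lemma inv_P2 [NeZero p] (a : ZMod p) (g : ZMod p) (u : ZMod p → ℚ) :
    eval (fun x => u (x - g)) (P2 a) = eval u (P2 a) := by
  rw [eval_P2, eval_P2]
  apply Fintype.sum_equiv (Equiv.subRight g)
  intro x
  simp only [Equiv.subRight_apply]
  rw [show x + a - g = x - g + a from by ring]

lemma inv_P3 [NeZero p] (a b : ZMod p) (g : ZMod p) (u : ZMod p → ℚ) :
    eval (fun x => u (x - g)) (P3 a b) = eval u (P3 a b) := by
  rw [eval_P3, eval_P3]
  apply Fintype.sum_equiv (Equiv.subRight g)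
  intro x
  simp only [Equiv.subRight_apply]
  rw [show x + a - g = x - g + a from by ring, show x + b - g = x - g + b from by ring]

lemma deg_P1 [NeZero p] : (P1 : MvPolynomial (ZMod p) ℚ).totalDegree ≤ 3 := by
  refine le_trans (totalDegree_finset_sum _ _) ?_
  apply Finset.sup_le
  intro i _
  simpa [totalDegree_X] using (by omega : (1:ℕ) ≤ 3)

lemma deg_P2 [NeZero p] (a : ZMod p) : (P2 a : MvPolynomial (ZMod p) ℚ).totalDegree ≤ 3 := by
  refine le_trans (totalDegree_finset_sum _ _) ?_
  apply Finset.sup_le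
  intro i _
  refine le_trans (totalDegree_mul _ _) ?_
  simp [totalDegree_X]

lemma deg_P3 [NeZero p] (a b : ZMod p) : (P3 a b : MvPolynomial (ZMod p) ℚ).totalDegree ≤ 3 := by
  refine le_trans (totalDegree_finset_sum _ _) ?_
  apply Finset.sup_le
  intro i _
  refine le_trans (totalDegree_mul _ _) ?_
  have h2 := totalDegree_mul (X i : MvPolynomial (ZMod p) ℚ) (X (i + a))
  simp only [totalDegree_X] at h2 ⊢
  omega

end CPSep

open MvPolynomial

/-- For the regular representation of `C_p` (p prime) over `ℚ`, realized as `ZMod p → ℚ`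
with `g` acting by `(g · v) h = v (h - g)`, any two points in distinct orbits are
separated by an invariant polynomial of degree at most 3. -/
theorem cyclic_prime_regular_rep_seperated_in_degree_three
    (p : ℕ) (hp : p.Prime)
    (v w : ZMod p → ℚ)
    (h : ¬ ∃ g : ZMod p, (fun x => v (x - g)) = w) :
    ∃ f : MvPolynomial (ZMod p) ℚ,
      (∀ (g : ZMod p) (u : ZMod p → ℚ),
        eval (fun x => u (x - g)) f = eval u f) ∧
      f.totalDegree ≤ 3 ∧ eval v f ≠ eval w f := by
  haveI : NeZero p := ⟨hp.ne_zero⟩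
  haveI := Fact.mk hp
  by_contra hcon
  push_neg at hcon
  obtain ⟨ζ, hζ⟩ : ∃ ζ : ℂ, IsPrimitiveRoot ζ p :=
    ⟨_, Complex.isPrimitiveRoot_exp p hp.ne_zero⟩
  -- moment equalities
  have E1 : ∑ i : ZMod p, v i = ∑ i : ZMod p, w i := by
    have := hcon CPSep.P1 CPSep.inv_P1 CPSep.deg_P1
    rwa [CPSep.eval_P1, CPSep.eval_P1] at this
  have E2 : ∀ a : ZMod p, ∑ i : ZMod p, v i * v (i + a) = ∑ i : ZMod p, w i * w (i + a) := by
    intro a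
    have := hcon (CPSep.P2 a) (CPSep.inv_P2 a) (CPSep.deg_P2 a)
    rwa [CPSep.eval_P2, CPSep.eval_P2] at this
  have E3 : ∀ a b : ZMod p, ∑ i : ZMod p, v i * v (i + a) * v (i + b)
      = ∑ i : ZMod p, w i * w (i + a) * w (i + b) := by
    intro a b
    have := hcon (CPSep.P3 a b) (CPSep.inv_P3 a b) (CPSep.deg_P3 a b)
    rwa [CPSep.eval_P3, CPSep.eval_P3] at this
  -- Fourier consequences
  have F1 : CPSep.dft ζ v 0 = CPSep.dft ζ w 0 := by
    rw [CPSep.dft_zero hp, CPSep.dft_zero hp, E1]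
  have F2 : ∀ k : ZMod p, CPSep.dft ζ v k * CPSep.dft ζ v (-k)
      = CPSep.dft ζ w k * CPSep.dft ζ w (-k) := by
    intro k
    rw [CPSep.corr2 hp hζ, CPSep.corr2 hp hζ]
    exact Finset.sum_congr rfl fun a _ => by rw [E2 a]
  have F3 : ∀ k l : ZMod p, CPSep.dft ζ v k * CPSep.dft ζ v l * CPSep.dft ζ v (-(k + l))
      = CPSep.dft ζ w k * CPSep.dft ζ w l * CPSep.dft ζ w (-(k + l)) := by
    intro k l
    rw [CPSep.corr3 hp hζ, CPSep.corr3 hp hζ]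
    exact Finset.sum_congr rfl fun a _ => Finset.sum_congr rfl fun b _ => by rw [E3 a b]
  apply h
  have hone : (1 : ZMod p) ≠ 0 := one_ne_zero
  by_cases hvz : ∃ k : ZMod p, k ≠ 0 ∧ CPSep.dft ζ v k = 0
  · -- degenerate case : `v` is constant, then so is `w`, and they agree
    obtain ⟨k0, hk0, hv0⟩ := hvz
    obtain ⟨c, hc⟩ := CPSep.dft_vanish_const hp hζ hk0 hv0
    have hvfun : v = fun _ => c := funext hc
    have hv1 : CPSep.dft ζ v 1 = 0 := by rw [hvfun]; exact CPSep.dft_const hp hζ c hone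
    have hw10 : CPSep.dft ζ w 1 * CPSep.dft ζ w (-1) = 0 := by
      rw [← F2 1, hv1, zero_mul]
    have hwconst : ∃ c' : ℚ, ∀ x, w x = c' := by
      rcases mul_eq_zero.1 hw10 with h' | h'
      · exact CPSep.dft_vanish_const hp hζ hone h'
      · exact CPSep.dft_vanish_const hp hζ (neg_ne_zero.2 hone) h'
    obtain ⟨c', hc'⟩ := hwconst
    have hcc : c = c' := by
      have hpv : ∑ i : ZMod p, v i = (p : ℚ) * c := by
        simp [hvfun, Finset.sum_const, ZMod.card, mul_comm]
      have hpw : ∑ i : ZMod p, w i = (p : ℚ) * c' := by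
        simp [funext hc', Finset.sum_const, ZMod.card, mul_comm]
      have : (p : ℚ) * c = (p : ℚ) * c' := by rw [← hpv, ← hpw, E1]
      exact mul_left_cancel₀ (by exact_mod_cast hp.ne_zero) this
    exact ⟨0, funext fun x => by rw [sub_zero, hc x, hcc, hc' x]⟩
  · -- generic case : all Fourier coefficients of v (hence w) are nonzero
    push_neg at hvz
    have hv : ∀ k : ZMod p, k ≠ 0 → CPSep.dft ζ v k ≠ 0 := hvz
    have hw : ∀ k : ZMod p, k ≠ 0 → CPSep.dft ζ w k ≠ 0 := by
      intro k hk h0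
      have := F2 k
      rw [h0, zero_mul] at this
      exact mul_ne_zero (hv k hk) (hv (-k) (neg_ne_zero.2 hk)) this
    set μ : ZMod p → ℂ := fun k => if k = 0 then 1 else CPSep.dft ζ w k / CPSep.dft ζ v k
      with hμdef
    have hμ0 : μ 0 = 1 := by simp only [hμdef, if_pos rfl]
    have hμne : ∀ k, k ≠ 0 → μ k = CPSep.dft ζ w k / CPSep.dft ζ v k := by
      intro k hk; simp only [hμdef, if_neg hk]
    have hμmul : ∀ k l : ZMod p, μ (k + l) = μ k * μ l := by
      intro k l
      by_cases hk : k = 0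
      · rw [hk, zero_add, hμ0, one_mul]
      by_cases hl : l = 0
      · rw [hl, add_zero, hμ0, mul_one]
      by_cases hkl : k + l = 0
      · have hlk : l = -k := by linear_combination hkl
        rw [hkl, hμ0, hμne k hk, hμne l hl, hlk]
        have h2 := F2 k
        have n1 := hv k hk
        have n2 := hv (-k) (neg_ne_zero.2 hk)
        rw [div_mul_div_comm, eq_div_iff (mul_ne_zero n1 n2), one_mul]
        linear_combination h2
      · have hD' := hw (-(k + l)) (neg_ne_zero.2 hkl)
        have h2 := F2 (k + l)
        have h3 := F3 k l
        have key : CPSep.dft ζ w (k + l) * (CPSep.dft ζ v k * CPSep.dft ζ v l)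
              * CPSep.dft ζ w (-(k + l))
            = CPSep.dft ζ v (k + l) * (CPSep.dft ζ w k * CPSep.dft ζ w l)
              * CPSep.dft ζ w (-(k + l)) := by
          linear_combination CPSep.dft ζ v (k + l) * h3
            - CPSep.dft ζ v k * CPSep.dft ζ v l * h2
        have key' := mul_right_cancel₀ hD' key
        rw [hμne _ hkl, hμne k hk, hμne l hl, div_mul_div_comm,
          div_eq_div_iff (hv _ hkl) (mul_ne_zero (hv k hk) (hv l hl))]
        linear_combination key'
    have hμpow : ∀ n : ℕ, μ ((n : ZMod p)) = μ 1 ^ n := by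
      intro n
      induction n with
      | zero => simpa using hμ0
      | succ n ih =>
        rw [Nat.cast_succ, hμmul, ih, pow_succ]
    have hroot : μ 1 ^ p = 1 := by rw [← hμpow p, ZMod.natCast_self, hμ0]
    obtain ⟨g0, _, hg0⟩ := hζ.eq_pow_of_pow_eq_one hroot
    refine ⟨(g0 : ZMod p), CPSep.dft_inj hp hζ fun k => ?_⟩
    rw [CPSep.dft_translate hp hζ]
    by_cases hk : k = 0
    · rw [hk, mul_zero, CPSep.e_zero hp, one_mul]; exact F1
    · have hμk : CPSep.dft ζ w k = μ k * CPSep.dft ζ v k := by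
        rw [hμne k hk, div_mul_cancel₀ _ (hv k hk)]
      rw [hμk]
      congr 1
      have h1 : μ k = μ 1 ^ k.val := by
        rw [← hμpow k.val, ZMod.natCast_rightInverse k]
      have h2 : ((g0 : ZMod p)) * k = ((g0 * k.val : ℕ) : ZMod p) := by
        push_cast
        rw [ZMod.natCast_rightInverse k]
      rw [h1, ← hg0, ← pow_mul, CPSep.e_apply, h2, ZMod.val_natCast]
      exact CPSep.pow_val_mod hζ.pow_eq_one _
end

section
/- Consider C_4 acting on ℚ^4 by cyclically permuting coordinates. The points v = (3,4,−3,−4) and w = (5,0,−5,0) lie in distinct C_4-orbits, yet every C_4-invariant polynomial of degree at most 3 takes the same value on v and w. -/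
open MvPolynomial

private lemma C4key (a b c d : ℕ) (h : a + b + c + d ≤ 3) :
    (3:ℚ)^a * 4^b * (-3:ℚ)^c * (-4:ℚ)^d
  + (4:ℚ)^a * (-3:ℚ)^b * (-4:ℚ)^c * 3^d
  + (-3:ℚ)^a * (-4:ℚ)^b * 3^c * 4^d
  + (-4:ℚ)^a * 3^b * 4^c * (-3)^d
  = (5:ℚ)^a * 0^b * (-5:ℚ)^c * 0^d
  + (0:ℚ)^a * (-5:ℚ)^b * 0^c * 5^d
  + (-5:ℚ)^a * 0^b * 5^c * 0^d
  + (0:ℚ)^a * 5^b * 0^c * (-5)^d := by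
  have ha : a ≤ 3 := by omega
  have hb : b ≤ 3 := by omega
  have hc : c ≤ 3 := by omega
  have hd : d ≤ 3 := by omega
  interval_cases a <;> interval_cases b <;> interval_cases c <;> interval_cases d <;>
    first | omega | norm_num

/-- The points `v = (3,4,-3,-4)` and `w = (5,0,-5,0)` of `ℚ⁴` lie in different orbits of
the cyclic group `C₄` acting by cyclic shifts of the coordinates, yet every `C₄`-invariant
polynomial of degree at most 3 takes the same value on them. -/
theorem C4_degree_three_invariants_do_not_separate :
    (¬ ∃ k : Fin 4, (fun i => (![3, 4, -3, -4] : Fin 4 → ℚ) (i + k)) =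
        (![5, 0, -5, 0] : Fin 4 → ℚ)) ∧
    ∀ f : MvPolynomial (Fin 4) ℚ,
      (∀ u : Fin 4 → ℚ, eval (fun i => u (i + 1)) f = eval u f) →
      f.totalDegree ≤ 3 →
      eval (![3, 4, -3, -4] : Fin 4 → ℚ) f = eval (![5, 0, -5, 0] : Fin 4 → ℚ) f := by
  constructor
  · rintro ⟨k, h⟩
    have h0 := congrFun h 0
    have h1 := congrFun h 1
    fin_cases k <;> simp_all
  · intro f hinv hdeg
    set v0 : Fin 4 → ℚ := ![3, 4, -3, -4] with hv0
    set w0 : Fin 4 → ℚ := ![5, 0, -5, 0] with hw0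
    set v1 : Fin 4 → ℚ := ![4, -3, -4, 3] with hv1
    set v2 : Fin 4 → ℚ := ![-3, -4, 3, 4] with hv2
    set v3 : Fin 4 → ℚ := ![-4, 3, 4, -3] with hv3
    set w1 : Fin 4 → ℚ := ![0, -5, 0, 5] with hw1
    set w2 : Fin 4 → ℚ := ![-5, 0, 5, 0] with hw2
    set w3 : Fin 4 → ℚ := ![0, 5, 0, -5] with hw3
    have ev1 : eval v1 f = eval v0 f := by
      have := hinv v0
      rwa [show (fun i => v0 (i + 1)) = v1 by funext i; fin_cases i <;> rfl] at this
    have ev2 : eval v2 f = eval v1 f := by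
      have := hinv v1
      rwa [show (fun i => v1 (i + 1)) = v2 by funext i; fin_cases i <;> rfl] at this
    have ev3 : eval v3 f = eval v2 f := by
      have := hinv v2
      rwa [show (fun i => v2 (i + 1)) = v3 by funext i; fin_cases i <;> rfl] at this
    have ew1 : eval w1 f = eval w0 f := by
      have := hinv w0
      rwa [show (fun i => w0 (i + 1)) = w1 by funext i; fin_cases i <;> rfl] at this
    have ew2 : eval w2 f = eval w1 f := by
      have := hinv w1
      rwa [show (fun i => w1 (i + 1)) = w2 by funext i; fin_cases i <;> rfl] at this
    have ew3 : eval w3 f = eval w2 f := by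
      have := hinv w2
      rwa [show (fun i => w2 (i + 1)) = w3 by funext i; fin_cases i <;> rfl] at this
    have hsum : eval v0 f + eval v1 f + eval v2 f + eval v3 f
        = eval w0 f + eval w1 f + eval w2 f + eval w3 f := by
      simp only [eval_eq']
      rw [← Finset.sum_add_distrib, ← Finset.sum_add_distrib, ← Finset.sum_add_distrib,
        ← Finset.sum_add_distrib, ← Finset.sum_add_distrib, ← Finset.sum_add_distrib]
      refine Finset.sum_congr rfl fun d hd => ?_
      have hdle : d 0 + d 1 + d 2 + d 3 ≤ 3 := by
        have h1 := MvPolynomial.le_totalDegree hd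
        have h2 : d.sum (fun _ e => e) = d 0 + d 1 + d 2 + d 3 := by
          rw [Finsupp.sum_fintype _ _ (fun _ => rfl), Fin.sum_univ_four]
        omega
      have key := C4key (d 0) (d 1) (d 2) (d 3) hdle
      simp only [Fin.prod_univ_four, hv0, hv1, hv2, hv3, hw0, hw1, hw2, hw3,
        Matrix.cons_val_zero, Matrix.cons_val_one, Matrix.head_cons,
        Matrix.cons_val_two, Matrix.tail_cons, Matrix.cons_val_three]
      linear_combination (coeff d f) * key
    rw [ev1, ev2, ev3] at hsum
    rw [ew1, ew2, ew3] at hsum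
    linarith
end

section
/- The separating Noether number of the cyclic group C_4 over ℚ equals 4. -/
/-!
Upper bound: if `w` is not in the orbit of `v`, choose a linear form `ℓ` that is nonzero on each of
the finitely many vectors `ρ g w - v` (possible over an infinite field). Then
`u ↦ ∏ g, (ℓ (ρ g u) - ℓ v)` is an invariant of degree `|G|` vanishing at `v` but not at `w`.

Lower bound: averaging over the group, an invariant of degree `≤ d` takes the same value at `v`
and `w` as soon as every averaged monomial of degree `≤ d` does. For the regular representation
of `C₄`, `v = (3, 4, -3, -4)` and `w = (5, 0, -5, 0)` this holds with `d = 3`, although `w` is not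
in the orbit of `v`.
-/

open MvPolynomial Matrix

/-- `SepByDeg n d ρ` : the polynomial invariants of degree at most `d` of the
`n`-dimensional rational representation `ρ` of the cyclic group `C₄` separate its orbits. -/
def SepByDeg (n d : ℕ) (ρ : Multiplicative (ZMod 4) →* Matrix (Fin n) (Fin n) ℚ) : Prop :=
  ∀ v w : Fin n → ℚ, (¬ ∃ g, (ρ g).mulVec v = w) →
    ∃ f : MvPolynomial (Fin n) ℚ,
      (∀ g (u : Fin n → ℚ), eval ((ρ g).mulVec u) f = eval u f) ∧
      f.totalDegree ≤ d ∧ eval v f ≠ eval w f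

lemma exists_dotProduct_ne_zero {K ι κ : Type*} [Field K] [Infinite K] [Fintype ι] [Finite κ]
    {x : κ → ι → K} (hx : ∀ k, x k ≠ 0) :
    ∃ a : ι → K, ∀ k, a ⬝ᵥ x k ≠ 0 := by
  classical
  obtain ⟨φ, hφ⟩ := Module.exists_dual_forall_apply_ne_zero (K := K) x hx
  refine ⟨(dotProductEquiv K ι).symm φ, fun k => ?_⟩
  rw [← (dotProductEquiv K ι).apply_symm_apply φ] at hφ
  exact hφ k

section OrbitPoly

variable {K ι G : Type*} [Field K] [Fintype ι] [DecidableEq ι] [Group G] [Fintype G]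

noncomputable def orbitPoly (ρ : G →* Matrix ι ι K) (a v : ι → K) : MvPolynomial ι K :=
  ∏ g, ((replicateRow Unit a * ρ g).toMvPolynomial () - C (a ⬝ᵥ v))

variable (ρ : G →* Matrix ι ι K) (a v : ι → K)

lemma eval_orbitPoly (u : ι → K) :
    eval u (orbitPoly ρ a v) = ∏ g, (a ⬝ᵥ (ρ g *ᵥ u) - a ⬝ᵥ v) := by
  simp only [orbitPoly, map_prod, map_sub, eval_C, toMvPolynomial_eval_eq_apply, ← mulVec_mulVec,
    replicateRow_mulVec_eq_const, Function.const_apply]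

lemma eval_orbitPoly_mulVec (h : G) (u : ι → K) :
    eval (ρ h *ᵥ u) (orbitPoly ρ a v) = eval u (orbitPoly ρ a v) := by
  simp only [eval_orbitPoly, mulVec_mulVec, ← map_mul]
  exact Fintype.prod_equiv (Equiv.mulRight h) _ _ fun g => rfl

lemma eval_orbitPoly_self : eval v (orbitPoly ρ a v) = 0 := by
  rw [eval_orbitPoly]
  exact Finset.prod_eq_zero (Finset.mem_univ 1) (by simp)

lemma totalDegree_orbitPoly_le : (orbitPoly ρ a v).totalDegree ≤ Fintype.card G := by
  have hfactor : ∀ g,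
      ((replicateRow Unit a * ρ g).toMvPolynomial () - C (a ⬝ᵥ v)).totalDegree ≤ 1 :=
    fun g => (totalDegree_sub_C_le _ _).trans (toMvPolynomial_totalDegree_le _ _)
  refine (totalDegree_finsetProd _ _).trans ?_
  simpa using Finset.sum_le_sum fun g (_ : g ∈ Finset.univ) => hfactor g

end OrbitPoly

theorem exists_invariant_separating_totalDegree_le_card {K ι G : Type*} [Field K] [Infinite K]
    [Fintype ι] [DecidableEq ι] [Group G] [Fintype G] (ρ : G →* Matrix ι ι K) {v w : ι → K}
    (hvw : ∀ g, ρ g *ᵥ w ≠ v) :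
    ∃ f : MvPolynomial ι K, (∀ g u, eval (ρ g *ᵥ u) f = eval u f) ∧
      f.totalDegree ≤ Fintype.card G ∧ eval v f ≠ eval w f := by
  obtain ⟨a, ha⟩ := exists_dotProduct_ne_zero fun g => sub_ne_zero.mpr (hvw g)
  refine ⟨orbitPoly ρ a v, eval_orbitPoly_mulVec ρ a v, totalDegree_orbitPoly_le ρ a v, ?_⟩
  rw [eval_orbitPoly_self, ne_comm, eval_orbitPoly, Finset.prod_ne_zero_iff]
  intro g _
  rw [← dotProduct_sub]
  exact ha g

theorem eval_eq_of_sum_monomial_eq {K ι G : Type*} [Field K] [Fintype ι] [Fintype G]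
    (T : G → (ι → K) → ι → K) (hG : (Fintype.card G : K) ≠ 0) {d : ℕ} {f : MvPolynomial ι K}
    (hf : ∀ g u, eval (T g u) f = eval u f) (hdeg : f.totalDegree ≤ d) {v w : ι → K}
    (hvw : ∀ s : ι → ℕ, ∑ i, s i ≤ d → ∑ g, ∏ i, T g v i ^ s i = ∑ g, ∏ i, T g w i ^ s i) :
    eval v f = eval w f := by
  have average : ∀ u, (Fintype.card G : K) * eval u f =
      ∑ s ∈ f.support, coeff s f * ∑ g, ∏ i, T g u i ^ s i := by
    intro u
    calc (Fintype.card G : K) * eval u f = ∑ g, eval (T g u) f := by simp [hf]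
      _ = _ := by simp_rw [eval_eq', Finset.mul_sum]; exact Finset.sum_comm
  refine mul_left_cancel₀ hG ?_
  rw [average, average]
  refine Finset.sum_congr rfl fun s hs => ?_
  have hs_deg : ∑ i, s i ≤ d := by
    rw [← Finsupp.sum_fintype s (fun _ e => e) fun _ => rfl]
    exact (le_totalDegree hs).trans hdeg
  rw [hvw s hs_deg]

section RegularRep

variable (A R : Type*) [AddGroup A] [Fintype A] [DecidableEq A] [CommRing R]

noncomputable def regularRep : Multiplicative A →* Matrix A A R :=
  permMatrixHom.comp (MulAction.toPermHom (Multiplicative A) A)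

variable {A R}

lemma regularRep_mulVec (g : Multiplicative A) (u : A → R) :
    regularRep A R g *ᵥ u = fun i => u (-g.toAdd + i) := by
  ext i
  simp only [regularRep, MonoidHom.coe_comp, Function.comp_apply, MulAction.toPermHom_apply,
    permMatrixHom_apply, permMatrix_mulVec, Equiv.Perm.coe_inv, MulAction.toPerm_symm_apply]
  rfl

end RegularRep

noncomputable def regularRepC4 : Multiplicative (ZMod 4) →* Matrix (Fin 4) (Fin 4) ℚ :=
  (regularRep (Fin 4) ℚ).comp
    (AddMonoidHom.toMultiplicative ((ZMod.finEquiv 4).symm : ZMod 4 →+ Fin 4))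

lemma regularRepC4_mulVec (g : Multiplicative (ZMod 4)) (u : Fin 4 → ℚ) :
    regularRepC4 g *ᵥ u = fun i => u (i - (ZMod.finEquiv 4).symm g.toAdd) := by
  simp [regularRepC4, regularRep_mulVec, neg_add_eq_sub]

lemma sum_regularRepC4_mulVec (F : (Fin 4 → ℚ) → ℚ) (u : Fin 4 → ℚ) :
    ∑ g, F (regularRepC4 g *ᵥ u) = ∑ k : Fin 4, F fun i => u (i - k) :=
  Fintype.sum_equiv (Multiplicative.toAdd.trans (ZMod.finEquiv 4).symm.toEquiv) _ _ fun g => by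
    rw [regularRepC4_mulVec]; rfl

/- Both vectors lie in the plane `x₂ = -x₀, x₃ = -x₁`, on which the shift acts as multiplication
by `i` on `z = x₀ + i x₁`; there they are `z = 3 + 4i` and `z = 5`. Averaged monomials of degree
`≤ 3` restrict to invariants of `z ↦ i z` of degree `≤ 3`, i.e. to polynomials in `|z|²`. -/
lemma sum_shift_monomial_eq (s : Fin 4 → ℕ) (hs : ∑ i, s i ≤ 3) :
    ∑ k : Fin 4, ∏ i, (![3, 4, -3, -4] : Fin 4 → ℚ) (i - k) ^ s i =
      ∑ k : Fin 4, ∏ i, (![5, 0, -5, 0] : Fin 4 → ℚ) (i - k) ^ s i := by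
  simp only [Fin.sum_univ_four, Fin.prod_univ_four] at hs ⊢
  simp only [Fin.isValue, sub_self, sub_zero, zero_sub, Fin.reduceSub, cons_val_zero, cons_val_one,
    cons_val]
  generalize s 0 = a, s 1 = b, s 2 = c, s 3 = d at hs ⊢
  have : a ≤ 3 := by omega
  have : b ≤ 3 := by omega
  have : c ≤ 3 := by omega
  have : d ≤ 3 := by omega
  interval_cases a <;> interval_cases b <;> interval_cases c <;> interval_cases d <;>
    first | omega | norm_num

lemma regularRepC4_mulVec_ne (g : Multiplicative (ZMod 4)) :
    regularRepC4 g *ᵥ ![3, 4, -3, -4] ≠ ![5, 0, -5, 0] := by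
  have hv : ∀ i, (![3, 4, -3, -4] : Fin 4 → ℚ) i ≠ 5 := by
    intro i; fin_cases i <;> norm_num
  intro h
  exact hv _ (congrFun (regularRepC4_mulVec g _ ▸ h) 0)

lemma sepByDeg_four (n : ℕ) (ρ : Multiplicative (ZMod 4) →* Matrix (Fin n) (Fin n) ℚ) :
    SepByDeg n 4 ρ := fun v w hvw => by
  simpa using exists_invariant_separating_totalDegree_le_card ρ fun g hg =>
    hvw ⟨g⁻¹, by rw [← hg, mulVec_mulVec, ← map_mul, inv_mul_cancel, map_one, one_mulVec]⟩

lemma not_sepByDeg_three : ¬ SepByDeg 4 3 regularRepC4 := by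
  intro H
  obtain ⟨f, hinv, hdeg, hne⟩ := H ![3, 4, -3, -4] ![5, 0, -5, 0] fun ⟨g, hg⟩ =>
    regularRepC4_mulVec_ne g hg
  refine hne (eval_eq_of_sum_monomial_eq (fun g u => regularRepC4 g *ᵥ u) (by simp) hinv hdeg
    fun s hs => ?_)
  rw [sum_regularRepC4_mulVec (fun x => ∏ i, x i ^ s i),
    sum_regularRepC4_mulVec (fun x => ∏ i, x i ^ s i)]
  exact sum_shift_monomial_eq s hs

/-- The separating Noether number of `C₄` over `ℚ` equals `4`. -/
theorem sepNoetherNumber_Q_C4 :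
    (∀ (n : ℕ) (ρ : Multiplicative (ZMod 4) →* Matrix (Fin n) (Fin n) ℚ)
        (hρ : ∀ g, IsUnit (ρ g)), SepByDeg n 4 ρ) ∧
    ¬ (∀ (n : ℕ) (ρ : Multiplicative (ZMod 4) →* Matrix (Fin n) (Fin n) ℚ)
        (hρ : ∀ g, IsUnit (ρ g)), SepByDeg n 3 ρ) :=
  ⟨fun n ρ _ => sepByDeg_four n ρ,
    fun H => not_sepByDeg_three (H 4 regularRepC4 fun g => (Group.isUnit g).map _)⟩
end

section
/- Let S₃ act on ℚ⁴ = ℚ³ ⊕ ℚ by permuting the first three coordinates and acting by the sign character on the last coordinate. The points v = (2,1,0,1) and w = (2,1,0,−1) lie in distinct S₃-orbits, but every S₃-invariant polynomial of degree at most 3 agrees on v and w. -/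
open MvPolynomial

/-- The action of `σ ∈ S₃` on a point of `ℚ³ ⊕ ℚ`: permute the first three coordinates,
and multiply the last coordinate by the sign of `σ`. -/
noncomputable def s3act (σ : Equiv.Perm (Fin 3)) (u : (Fin 3) ⊕ Unit → ℚ) :
    (Fin 3) ⊕ Unit → ℚ :=
  Sum.elim (fun i => u (Sum.inl (σ⁻¹ i))) (fun _ => ((Equiv.Perm.sign σ : ℤ) : ℚ) * u (Sum.inr ()))

/-!
Invariants of degree at most 3 are even in `y`: the only generator odd in `y`,
`y (x₂ - x₁)(x₃ - x₂)(x₃ - x₁)`, has degree 4. Directly, averaging `f` over `S₃` turns a monomial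
`x^a y^k` into `∑_σ sign(σ)^k x_{σ⁻¹}^a y^k`. For even `k` this is unchanged by `y ↦ -y`; for odd
`k` it is `y^k` times the alternant `det (x_i ^ a_j)`, which vanishes because three distinct
exponents `a_j` would already have degree `0 + 1 + 2 = 3`.
-/

open Equiv

theorem sum_sign_mul_prod_pow_eq_zero {R ι : Type*} [CommRing R] [Fintype ι] [DecidableEq ι]
    (x : ι → R) {a : ι → ℕ} (ha : ¬ Function.Injective a) :
    ∑ σ : Perm ι, ((Perm.sign σ : ℤ) : R) * ∏ i, x (σ⁻¹ i) ^ a i = 0 := by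
  obtain ⟨i, j, hij, hne⟩ : ∃ i j, a i = a j ∧ i ≠ j := by
    simpa [Function.Injective] using ha
  have hdet := Matrix.det_zero_of_column_eq hne (M := Matrix.of fun k l => x k ^ a l)
    (by simp [hij])
  rw [Matrix.det_apply'] at hdet
  rw [← Equiv.sum_comp (Equiv.inv (Perm ι))]
  simpa using hdet

theorem not_injective_of_sum_lt_three {a : Fin 3 → ℕ} (h : ∑ i, a i < 3) :
    ¬ Function.Injective a := by
  intro hinj
  have h01 := hinj.ne (show (0 : Fin 3) ≠ 1 by decide)
  have h02 := hinj.ne (show (0 : Fin 3) ≠ 2 by decide)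
  have h12 := hinj.ne (show (1 : Fin 3) ≠ 2 by decide)
  rw [Fin.sum_univ_three] at h
  omega

theorem eval_s3act_monomial (σ : Perm (Fin 3)) (x : Fin 3 → ℚ) (y : ℚ)
    (d : Fin 3 ⊕ Unit →₀ ℕ) (c : ℚ) :
    eval (s3act σ (Sum.elim x fun _ => y)) (monomial d c) =
      c * (∏ i, x (σ⁻¹ i) ^ d (Sum.inl i)) * (((Perm.sign σ : ℤ) : ℚ) * y) ^ d (Sum.inr ()) := by
  rw [eval_monomial, Finsupp.prod_fintype _ _ fun _ => pow_zero _, Fintype.prod_sum_type]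
  simp [s3act, mul_assoc]

theorem sum_eval_s3act_monomial_eq_zero (x : Fin 3 → ℚ) (y : ℚ) {d : Fin 3 ⊕ Unit →₀ ℕ}
    (hd : (d.sum fun _ e => e) ≤ 3) (hodd : Odd (d (Sum.inr ()))) (c : ℚ) :
    ∑ σ, eval (s3act σ (Sum.elim x fun _ => y)) (monomial d c) = 0 := by
  have hsign (σ : Perm (Fin 3)) :
      ((Perm.sign σ : ℤ) : ℚ) ^ d (Sum.inr ()) = ((Perm.sign σ : ℤ) : ℚ) := by
    rcases Int.units_eq_one_or (Perm.sign σ) with h | h <;> simp [h, hodd.neg_one_pow]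
  have hdeg : ∑ i, d (Sum.inl i) < 3 := by
    have hsum : ∑ i, d (Sum.inl i) + d (Sum.inr ()) ≤ 3 := by
      rwa [Finsupp.sum_fintype _ _ fun _ => rfl, Fintype.sum_sum_type,
        Fintype.sum_unique (ι := Unit)] at hd
    have := hodd.pos
    omega
  simp only [eval_s3act_monomial, mul_pow, hsign]
  calc _ = c * y ^ d (Sum.inr ()) * ∑ σ : Perm (Fin 3),
        ((Perm.sign σ : ℤ) : ℚ) * ∏ i, x (σ⁻¹ i) ^ d (Sum.inl i) := by
          rw [Finset.mul_sum]; exact Finset.sum_congr rfl fun _ _ => by ring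
    _ = 0 := by
      rw [sum_sign_mul_prod_pow_eq_zero x (not_injective_of_sum_lt_three hdeg), mul_zero]

theorem sum_eval_s3act_monomial_neg (x : Fin 3 → ℚ) (y : ℚ) {d : Fin 3 ⊕ Unit →₀ ℕ}
    (hd : (d.sum fun _ e => e) ≤ 3) (c : ℚ) :
    ∑ σ, eval (s3act σ (Sum.elim x fun _ => -y)) (monomial d c) =
      ∑ σ, eval (s3act σ (Sum.elim x fun _ => y)) (monomial d c) := by
  rcases Nat.even_or_odd (d (Sum.inr ())) with heven | hodd
  · simp only [eval_s3act_monomial, mul_neg, heven.neg_pow]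
  · rw [sum_eval_s3act_monomial_eq_zero x y hd hodd,
      sum_eval_s3act_monomial_eq_zero x (-y) hd hodd]

theorem sum_eval_s3act_neg (x : Fin 3 → ℚ) (y : ℚ) {f : MvPolynomial (Fin 3 ⊕ Unit) ℚ}
    (hf : f.totalDegree ≤ 3) :
    ∑ σ, eval (s3act σ (Sum.elim x fun _ => -y)) f =
      ∑ σ, eval (s3act σ (Sum.elim x fun _ => y)) f := by
  rw [f.as_sum]
  simp only [map_sum]
  rw [Finset.sum_comm, Finset.sum_comm (s := Finset.univ)]
  exact Finset.sum_congr rfl fun d hd =>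
    sum_eval_s3act_monomial_neg x y ((le_totalDegree hd).trans hf) _

theorem sum_eval_s3act_of_invariant {f : MvPolynomial (Fin 3 ⊕ Unit) ℚ}
    (hf : ∀ σ u, eval (s3act σ u) f = eval u f) (u : Fin 3 ⊕ Unit → ℚ) :
    ∑ σ, eval (s3act σ u) f = 6 * eval u f := by
  simp [hf, Fintype.card_perm, Nat.factorial]

theorem eval_neg_of_invariant {f : MvPolynomial (Fin 3 ⊕ Unit) ℚ}
    (hf : ∀ σ u, eval (s3act σ u) f = eval u f) (hdeg : f.totalDegree ≤ 3)
    (x : Fin 3 → ℚ) (y : ℚ) :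
    eval (Sum.elim x fun _ => -y) f = eval (Sum.elim x fun _ => y) f := by
  have h := sum_eval_s3act_neg x y hdeg
  rw [sum_eval_s3act_of_invariant hf, sum_eval_s3act_of_invariant hf] at h
  linarith

theorem not_exists_s3act_eq_neg {x : Fin 3 → ℚ} (hx : Function.Injective x) {y : ℚ}
    (hy : y ≠ 0) : ¬ ∃ σ, s3act σ (Sum.elim x fun _ => y) = Sum.elim x fun _ => -y := by
  rintro ⟨σ, h⟩
  have hσ : σ = 1 := by
    rw [← inv_eq_one]
    refine Equiv.ext fun i => ?_
    simpa [s3act] using hx (by simpa [s3act] using congrFun h (Sum.inl i))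
  have hlast := congrFun h (Sum.inr ())
  simp only [s3act, hσ, Sum.elim_inr, map_one, Units.val_one, Int.cast_one, one_mul] at hlast
  exact hy (by linarith)

/-- `v = (2,1,0,1)` and `w = (2,1,0,-1)` lie in distinct `S₃`-orbits of `ℚ³ ⊕ ℚ`
(permutation action plus sign character), yet every `S₃`-invariant polynomial of degree
at most 3 agrees on `v` and `w`. -/
theorem S3_degree_three_invariants_do_not_separate
    (v w : (Fin 3) ⊕ Unit → ℚ)
    (hv : v = Sum.elim ![2, 1, 0] (fun _ => 1))
    (hw : w = Sum.elim ![2, 1, 0] (fun _ => -1)) :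
    (¬ ∃ σ : Equiv.Perm (Fin 3), s3act σ v = w) ∧
    ∀ f : MvPolynomial ((Fin 3) ⊕ Unit) ℚ,
      (∀ (σ : Equiv.Perm (Fin 3)) (u : (Fin 3) ⊕ Unit → ℚ), eval (s3act σ u) f = eval u f) →
      f.totalDegree ≤ 3 → eval v f = eval w f := by
  subst hv hw
  exact ⟨not_exists_s3act_eq_neg (by decide) one_ne_zero,
    fun f hf hdeg => (eval_neg_of_invariant hf hdeg _ 1).symm⟩
end

section
/- The invariant ring ℚ[x₁,x₂,x₃,y]^{S₃}, where S₃ permutes x₁,x₂,x₃ and acts on y by the sign character, is generated as a ℚ-algebra by e₁ = x₁+x₂+x₃, e₂ = x₁x₂+x₂x₃+x₁x₃, e₃ = x₁x₂x₃, y², and a = y(x₂−x₁)(x₃−x₂)(x₃−x₁). -/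
/-!
Write an invariant `f` as `∑ₖ cₖ(x) yᵏ`. Invariance says `σ · cₖ = sign(σ)ᵏ cₖ`. For even `k` the
coefficient `cₖ` is symmetric, hence a polynomial in `e₁, e₂, e₃` by the fundamental theorem of
symmetric polynomials, and `yᵏ` is a power of `y²`. For odd `k` it is alternating, so it vanishes
on every hyperplane `xᵢ = xⱼ`; it is therefore divisible by the Vandermonde determinant
`(x₂ - x₁)(x₃ - x₁)(x₃ - x₂)` with a symmetric quotient `q`, and `cₖ yᵏ = q · a · (y²)ᵐ`.
-/

open MvPolynomial

/-- The action of `σ ∈ S₃` on `ℚ[x₁,x₂,x₃,y]`: `σ · x_i = x_{σ i}` and `σ · y = sign(σ) y`. -/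
noncomputable def s3polyAct (σ : Equiv.Perm (Fin 3)) :
    MvPolynomial ((Fin 3) ⊕ Unit) ℚ →ₐ[ℚ] MvPolynomial ((Fin 3) ⊕ Unit) ℚ :=
  aeval (Sum.elim (fun i => X (Sum.inl (σ i)))
    (fun _ => C ((Equiv.Perm.sign σ : ℤ) : ℚ) * X (Sum.inr ())))

noncomputable def e₁ : MvPolynomial ((Fin 3) ⊕ Unit) ℚ := ∑ i : Fin 3, X (Sum.inl i)

noncomputable def e₂ : MvPolynomial ((Fin 3) ⊕ Unit) ℚ :=
  X (Sum.inl 0) * X (Sum.inl 1) + X (Sum.inl 1) * X (Sum.inl 2) + X (Sum.inl 0) * X (Sum.inl 2)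

noncomputable def e₃ : MvPolynomial ((Fin 3) ⊕ Unit) ℚ :=
  X (Sum.inl 0) * X (Sum.inl 1) * X (Sum.inl 2)

noncomputable def ysq : MvPolynomial ((Fin 3) ⊕ Unit) ℚ := X (Sum.inr ()) ^ 2

noncomputable def aInv : MvPolynomial ((Fin 3) ⊕ Unit) ℚ :=
  X (Sum.inr ()) * (X (Sum.inl 1) - X (Sum.inl 0)) * (X (Sum.inl 2) - X (Sum.inl 1)) *
    (X (Sum.inl 2) - X (Sum.inl 0))

open Equiv Equiv.Perm Matrix

namespace MvPolynomial

section ReplaceVar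

variable {R σ : Type*} [CommRing R] [DecidableEq σ] (i j : σ)

variable (R) in
noncomputable def replaceVar : MvPolynomial σ R →ₐ[R] MvPolynomial σ R :=
  aeval (Function.update X i (X j))

theorem replaceVar_X (k : σ) : replaceVar R i j (X k) = if k = i then X j else X k := by
  simp [replaceVar, Function.update_apply]

theorem X_sub_X_dvd_of_replaceVar_eq_zero {p : MvPolynomial σ R} (hp : replaceVar R i j p = 0) :
    X i - X j ∣ p := by
  set I := Ideal.span {(X i - X j : MvPolynomial σ R)}
  -- modulo `X i - X j`, substituting `X j` for `X i` changes nothing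
  have hmk : (Ideal.Quotient.mkₐ R I).comp (replaceVar R i j) = Ideal.Quotient.mkₐ R I := by
    ext k
    rcases eq_or_ne k i with rfl | hk
    · simpa [replaceVar_X, Ideal.Quotient.eq] using I.neg_mem (Ideal.mem_span_singleton_self _)
    · simp [replaceVar_X, hk]
  rw [← Ideal.mem_span_singleton, ← Ideal.Quotient.eq_zero_iff_mem, ← Ideal.Quotient.mkₐ_eq_mk R,
    ← hmk, AlgHom.comp_apply, hp, map_zero]

theorem X_sub_X_mul_dvd [NoZeroDivisors R] {a p : MvPolynomial σ R} (ha : a ∣ p)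
    (ha0 : replaceVar R i j a ≠ 0) (hp : replaceVar R i j p = 0) : (X i - X j) * a ∣ p := by
  obtain ⟨q, rfl⟩ := ha
  rw [map_mul, mul_eq_zero] at hp
  rw [mul_comm]
  exact mul_dvd_mul_left a (X_sub_X_dvd_of_replaceVar_eq_zero i j (hp.resolve_left ha0))

theorem replaceVar_eq_zero_of_rename_swap [NoZeroDivisors R] [CharZero R] {p : MvPolynomial σ R}
    (hp : rename (swap i j) p = -p) : replaceVar R i j p = 0 := by
  have hcomp : (replaceVar R i j).comp (rename (swap i j)) = replaceVar R i j := by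
    ext k
    rcases eq_or_ne k i with rfl | hki
    · simp [replaceVar_X]
    rcases eq_or_ne k j with rfl | hkj
    · simp [replaceVar_X, hki]
    · simp [replaceVar_X, swap_apply_of_ne_of_ne hki hkj]
  have h := congr($hcomp p)
  rw [AlgHom.comp_apply, hp, map_neg] at h
  exact CharZero.neg_eq_self_iff.mp h

end ReplaceVar

section Vandermonde

variable {R : Type*} [CommRing R]

theorem rename_det_vandermonde_X {n : ℕ} (e : Perm (Fin n)) :
    rename e (vandermonde (X : Fin n → MvPolynomial (Fin n) R)).det =
      sign e • (vandermonde X).det := by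
  have hmap : (rename e : MvPolynomial (Fin n) R →ₐ[R] _).mapMatrix (vandermonde X) =
      (vandermonde X).submatrix e id := by
    ext a b
    simp [vandermonde_apply]
  rw [AlgHom.map_det, hmap, det_permute, Units.smul_def, zsmul_eq_mul]

theorem det_vandermonde_X_fin_three :
    (vandermonde (X : Fin 3 → MvPolynomial (Fin 3) R)).det =
      (X 1 - X 0) * (X 2 - X 0) * (X 2 - X 1) := by
  rw [det_fin_three]
  simp only [vandermonde_apply, Fin.coe_ofNat_eq_mod, Nat.zero_mod, Nat.one_mod, Nat.mod_succ,
    pow_zero, pow_one, one_mul, mul_one]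
  ring

variable [IsDomain R] [CharZero R]

theorem det_vandermonde_X_dvd_of_rename_eq_sign_smul {p : MvPolynomial (Fin 3) R}
    (hp : ∀ e : Perm (Fin 3), rename e p = sign e • p) :
    (vandermonde (X : Fin 3 → MvPolynomial (Fin 3) R)).det ∣ p := by
  have hswap (i j : Fin 3) (hij : i ≠ j) : replaceVar R i j p = 0 :=
    replaceVar_eq_zero_of_rename_swap i j (by rw [hp, sign_swap hij, Units.neg_smul, one_smul])
  have h₁ := X_sub_X_mul_dvd 1 0 (one_dvd p) (by simp) (hswap 1 0 (by decide))
  have h₂ := X_sub_X_mul_dvd 2 1 h₁ (by simp [replaceVar_X, sub_eq_zero]) (hswap 2 1 (by decide))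
  have h₃ := X_sub_X_mul_dvd 2 0 h₂ (by simp [replaceVar_X, sub_eq_zero]) (hswap 2 0 (by decide))
  rw [det_vandermonde_X_fin_three]
  convert h₃ using 1
  ring

theorem exists_isSymmetric_of_rename_eq_sign_smul {p : MvPolynomial (Fin 3) R}
    (hp : ∀ e : Perm (Fin 3), rename e p = sign e • p) :
    ∃ q : MvPolynomial (Fin 3) R, q.IsSymmetric ∧ p = (vandermonde X).det * q := by
  obtain ⟨q, rfl⟩ := det_vandermonde_X_dvd_of_rename_eq_sign_smul hp
  refine ⟨q, fun e => ?_, rfl⟩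
  have h := hp e
  rw [map_mul, rename_det_vandermonde_X, smul_mul_assoc, smul_left_cancel_iff] at h
  exact mul_left_cancel₀ (det_vandermonde_ne_zero_iff.mpr X_injective) h

end Vandermonde

theorem IsSymmetric.mem_adjoin_esymm {R : Type*} [CommRing R] {n : ℕ}
    {p : MvPolynomial (Fin n) R} (hp : p.IsSymmetric) :
    p ∈ Algebra.adjoin R (Set.range fun i : Fin n => esymm (Fin n) R (i + 1)) := by
  obtain ⟨q, hq⟩ := esymmAlgHom_fin_surjective R le_rfl ⟨p, (mem_symmetricSubalgebra p).mpr hp⟩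
  rw [Algebra.adjoin_range_eq_range_aeval]
  exact ⟨q, by simpa [esymmAlgHom_apply] using congr_arg Subtype.val hq⟩

section SumUnit

variable (R σ : Type*) [CommSemiring R]

noncomputable def sumUnitAlgEquiv : MvPolynomial (σ ⊕ Unit) R ≃ₐ[R] Polynomial (MvPolynomial σ R) :=
  (renameEquiv R (Equiv.optionEquivSumPUnit σ).symm).trans (optionEquivLeft R σ)

variable {R σ}

theorem sumUnitAlgEquiv_symm_C (p : MvPolynomial σ R) :
    (sumUnitAlgEquiv R σ).symm (Polynomial.C p) = rename Sum.inl p := by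
  rw [AlgEquiv.symm_apply_eq]
  induction p using MvPolynomial.induction_on with
  | C a => simp [sumUnitAlgEquiv]
  | add p q hp hq => simp [hp, hq]
  | mul_X p i hp => simp [hp, sumUnitAlgEquiv, optionEquivLeft_X_some]

theorem sumUnitAlgEquiv_symm_X :
    (sumUnitAlgEquiv R σ).symm Polynomial.X = X (Sum.inr ()) := by
  rw [AlgEquiv.symm_apply_eq]
  simp [sumUnitAlgEquiv, optionEquivLeft_X_none]

theorem sum_rename_inl_coeff_mul_X_inr_pow (f : MvPolynomial (σ ⊕ Unit) R) :
    ∑ k ∈ (sumUnitAlgEquiv R σ f).support,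
      rename Sum.inl ((sumUnitAlgEquiv R σ f).coeff k) * X (Sum.inr ()) ^ k = f := by
  conv_rhs => rw [← (sumUnitAlgEquiv R σ).symm_apply_apply f,
    (sumUnitAlgEquiv R σ f).as_sum_support_C_mul_X_pow]
  simp [sumUnitAlgEquiv_symm_C, sumUnitAlgEquiv_symm_X]

end SumUnit

end MvPolynomial

theorem s3polyAct_rename_inl (e : Perm (Fin 3)) (p : MvPolynomial (Fin 3) ℚ) :
    s3polyAct e (rename Sum.inl p) = rename Sum.inl (rename e p) := by
  rw [← AlgHom.comp_apply, ← AlgHom.comp_apply (rename Sum.inl)]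
  congr 1
  ext i
  simp [s3polyAct]

theorem s3polyAct_X_inr (e : Perm (Fin 3)) :
    s3polyAct e (X (Sum.inr ())) = sign e • X (Sum.inr ()) := by
  simp [s3polyAct, Units.smul_def, zsmul_eq_mul]

theorem s3polyAct_rename_inl_mul_X_inr_pow (e : Perm (Fin 3)) (p : MvPolynomial (Fin 3) ℚ)
    (k : ℕ) : s3polyAct e (rename Sum.inl p * X (Sum.inr ()) ^ k) =
      rename Sum.inl (sign e ^ k • rename e p) * X (Sum.inr ()) ^ k := by
  rw [map_mul, map_pow, s3polyAct_rename_inl, s3polyAct_X_inr, smul_pow, mul_smul_comm,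
    map_zsmul_unit, smul_mul_assoc]

theorem coeff_sumUnitAlgEquiv_s3polyAct (e : Perm (Fin 3)) (f : MvPolynomial (Fin 3 ⊕ Unit) ℚ)
    (k : ℕ) : (sumUnitAlgEquiv ℚ (Fin 3) (s3polyAct e f)).coeff k =
      sign e ^ k • rename e ((sumUnitAlgEquiv ℚ (Fin 3) f).coeff k) := by
  set Φ := sumUnitAlgEquiv ℚ (Fin 3)
  obtain ⟨p, rfl⟩ := Φ.symm.surjective f
  rw [AlgEquiv.apply_symm_apply]
  induction p using Polynomial.induction_on' with
  | add p q hp hq => simp only [map_add, Polynomial.coeff_add, hp, hq, smul_add]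
  | monomial n a =>
    rw [← Polynomial.C_mul_X_pow_eq_monomial, map_mul, map_pow, sumUnitAlgEquiv_symm_C,
      sumUnitAlgEquiv_symm_X, s3polyAct_rename_inl_mul_X_inr_pow, ← sumUnitAlgEquiv_symm_C,
      ← sumUnitAlgEquiv_symm_X, ← map_pow Φ.symm, ← map_mul Φ.symm, AlgEquiv.apply_symm_apply,
      Polynomial.coeff_C_mul_X_pow, Polynomial.coeff_C_mul_X_pow]
    split_ifs with h
    · rw [h]
    · simp

theorem rename_coeff_sumUnitAlgEquiv_of_invariant {f : MvPolynomial (Fin 3 ⊕ Unit) ℚ}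
    (hf : ∀ e : Perm (Fin 3), s3polyAct e f = f) (e : Perm (Fin 3)) (k : ℕ) :
    rename e ((sumUnitAlgEquiv ℚ (Fin 3) f).coeff k) =
      sign e ^ k • (sumUnitAlgEquiv ℚ (Fin 3) f).coeff k := by
  conv_rhs => rw [← hf e, coeff_sumUnitAlgEquiv_s3polyAct, smul_smul, ← mul_pow,
    Int.units_mul_self, one_pow, one_smul]

theorem rename_inl_esymm_one : rename Sum.inl (esymm (Fin 3) ℚ 1) = e₁ := by
  simp [esymm, Finset.powersetCard_one, e₁]

theorem rename_inl_esymm_two : rename Sum.inl (esymm (Fin 3) ℚ 2) = e₂ := by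
  rw [esymm, show Finset.powersetCard 2 (Finset.univ : Finset (Fin 3)) = {{0, 1}, {0, 2}, {1, 2}}
    by decide, Finset.sum_insert (by decide), Finset.sum_insert (by decide), Finset.sum_singleton]
  simp only [Finset.prod_pair (show (0 : Fin 3) ≠ 1 by decide),
    Finset.prod_pair (show (0 : Fin 3) ≠ 2 by decide),
    Finset.prod_pair (show (1 : Fin 3) ≠ 2 by decide), map_add, map_mul, rename_X, e₂]
  ring

theorem rename_inl_esymm_three : rename Sum.inl (esymm (Fin 3) ℚ 3) = e₃ := by
  rw [esymm, show Finset.powersetCard 3 (Finset.univ : Finset (Fin 3)) = {Finset.univ} by decide]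
  simp [Fin.prod_univ_three, e₃]

theorem rename_inl_det_vandermonde_mul_X_inr :
    rename Sum.inl (vandermonde (X : Fin 3 → MvPolynomial (Fin 3) ℚ)).det * X (Sum.inr ()) =
      aInv := by
  rw [det_vandermonde_X_fin_three, aInv]
  simp only [map_mul, map_sub, rename_X]
  ring

theorem rename_inl_mem_adjoin_of_isSymmetric {q : MvPolynomial (Fin 3) ℚ} (hq : q.IsSymmetric) :
    rename Sum.inl q ∈ Algebra.adjoin ℚ ({e₁, e₂, e₃, ysq, aInv} : Set _) := by
  refine Algebra.adjoin_le (S := (Algebra.adjoin ℚ _).comap (rename Sum.inl)) ?_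
    hq.mem_adjoin_esymm
  rintro _ ⟨i, rfl⟩
  apply Algebra.subset_adjoin
  fin_cases i
  · exact Or.inl rename_inl_esymm_one
  · exact Or.inr (Or.inl rename_inl_esymm_two)
  · exact Or.inr (Or.inr (Or.inl rename_inl_esymm_three))

theorem rename_inl_mul_X_inr_pow_mem_adjoin {c : MvPolynomial (Fin 3) ℚ} {k : ℕ}
    (hc : ∀ e : Perm (Fin 3), rename e c = sign e ^ k • c) :
    rename Sum.inl c * X (Sum.inr ()) ^ k ∈
      Algebra.adjoin ℚ ({e₁, e₂, e₃, ysq, aInv} : Set (MvPolynomial (Fin 3 ⊕ Unit) ℚ)) := by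
  have hysq : ysq ∈ Algebra.adjoin ℚ ({e₁, e₂, e₃, ysq, aInv} : Set _) :=
    Algebra.subset_adjoin (by simp)
  rcases Nat.even_or_odd' k with ⟨m, rfl | rfl⟩
  · have hsym : c.IsSymmetric := fun e => by rw [hc, pow_mul, Int.units_sq, one_pow, one_smul]
    rw [pow_mul]
    exact mul_mem (rename_inl_mem_adjoin_of_isSymmetric hsym) (pow_mem hysq m)
  · obtain ⟨q, hq, rfl⟩ := exists_isSymmetric_of_rename_eq_sign_smul fun e => by
      rw [hc, pow_succ, pow_mul, Int.units_sq, one_pow, one_mul]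
    have haInv : rename Sum.inl (vandermonde X).det * X (Sum.inr ()) ∈
        Algebra.adjoin ℚ ({e₁, e₂, e₃, ysq, aInv} : Set _) := by
      rw [rename_inl_det_vandermonde_mul_X_inr]
      exact Algebra.subset_adjoin (by simp)
    rw [map_mul, pow_succ, pow_mul]
    convert mul_mem (mul_mem haInv (rename_inl_mem_adjoin_of_isSymmetric hq)) (pow_mem hysq m)
      using 1
    simp only [ysq]
    ring

theorem mem_adjoin_of_s3polyAct_eq_self {f : MvPolynomial (Fin 3 ⊕ Unit) ℚ}
    (hf : ∀ e : Perm (Fin 3), s3polyAct e f = f) :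
    f ∈ Algebra.adjoin ℚ ({e₁, e₂, e₃, ysq, aInv} : Set (MvPolynomial (Fin 3 ⊕ Unit) ℚ)) := by
  rw [← sum_rename_inl_coeff_mul_X_inr_pow f]
  exact sum_mem fun k _ =>
    rename_inl_mul_X_inr_pow_mem_adjoin (rename_coeff_sumUnitAlgEquiv_of_invariant hf · k)

theorem s3polyAct_eq_self_of_mem_adjoin {f : MvPolynomial (Fin 3 ⊕ Unit) ℚ}
    (hf : f ∈ Algebra.adjoin ℚ ({e₁, e₂, e₃, ysq, aInv} : Set (MvPolynomial (Fin 3 ⊕ Unit) ℚ)))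
    (e : Perm (Fin 3)) : s3polyAct e f = f := by
  refine Algebra.adjoin_le (S := AlgHom.equalizer (s3polyAct e) (AlgHom.id ℚ _)) ?_ hf
  have hsymm (k : ℕ) : s3polyAct e (rename Sum.inl (esymm (Fin 3) ℚ k)) =
      rename Sum.inl (esymm (Fin 3) ℚ k) := by
    rw [s3polyAct_rename_inl, esymm_isSymmetric]
  rintro _ (rfl | rfl | rfl | rfl | rfl) <;>
    rw [SetLike.mem_coe, AlgHom.mem_equalizer, AlgHom.id_apply]
  · rw [← rename_inl_esymm_one, hsymm]
  · rw [← rename_inl_esymm_two, hsymm]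
  · rw [← rename_inl_esymm_three, hsymm]
  · rw [ysq, map_pow, s3polyAct_X_inr, smul_pow, Int.units_sq, one_smul]
  · rw [← rename_inl_det_vandermonde_mul_X_inr, ← pow_one (X (Sum.inr ())),
      s3polyAct_rename_inl_mul_X_inr_pow, rename_det_vandermonde_X, smul_smul, pow_one,
      Int.units_mul_self, one_smul]

/-- The invariant ring `ℚ[x₁,x₂,x₃,y]^{S₃}` (S₃ permuting the `xᵢ` and acting on `y` by the
sign character) is generated as a `ℚ`-algebra by `e₁, e₂, e₃, y²` and
`a = y(x₂-x₁)(x₃-x₂)(x₃-x₁)`. -/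
theorem S3_invariant_ring_generators (f : MvPolynomial ((Fin 3) ⊕ Unit) ℚ) :
    (∀ σ : Equiv.Perm (Fin 3), s3polyAct σ f = f) ↔
      f ∈ Algebra.adjoin ℚ ({e₁, e₂, e₃, ysq, aInv} :
        Set (MvPolynomial ((Fin 3) ⊕ Unit) ℚ)) :=
  ⟨mem_adjoin_of_s3polyAct_eq_self, s3polyAct_eq_self_of_mem_adjoin⟩
end

section
/- Let G be a finite abelian group, F a field with char F ∤ |G|, K = F(ω) where ω has multiplicative order exp(G), Γ = Gal(K/F), and χ a character of G over K. Let g_χ ∈ G be such that χ(g_χ) generates χ(G), let A_χ be the companion matrix over F of the minimal polynomial of χ(g_χ) over F, of size ℓ_χ = |Γ·χ(g_χ)|, and let ρ_χ : G → GL_{ℓ_χ}(F) be the lift of g_χ^j ker(χ) ↦ A_χ^j. Then after extending scalars to K, the representation (K^{ℓ_χ}, ρ_χ) is isomorphic to the direct sum ⊕_{ψ ∈ Γ·χ} (K, ψ) of the one-dimensional representations given by the characters in the Γ-orbit of χ. -/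
open Polynomial

/-- The companion matrix of a (monic) polynomial `q`: ones on the subdiagonal,
minus the coefficients of `q` in the last column. -/
def companionMatrix {F : Type*} [Field F] (q : Polynomial F) :
    Matrix (Fin q.natDegree) (Fin q.natDegree) F :=
  Matrix.of fun i j =>
    (if (i : ℕ) = (j : ℕ) + 1 then 1 else 0) -
      (if (j : ℕ) = q.natDegree - 1 then q.coeff i else 0)

/-- The action of the Galois group on characters : `(γ · χ)(g) = γ(χ(g))`. -/
def galChar {F K G : Type*} [Field F] [Field K] [Algebra F K] [Group G]
    (γ : K ≃ₐ[F] K) (χ : G →* Kˣ) : G →* Kˣ :=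
  (Units.map (γ : K →* K)).comp χ

open Matrix

/-! For a root `β` of the minimal polynomial `q` of `χ(g_χ)`, the row vector `(1, β, …, β^(ℓ-1))`
is a left eigenvector of the companion matrix of `q` with eigenvalue `β`. As `K = F(ω)` is
cyclotomic, hence Galois, and `q ∣ X^n - 1` is separable, the roots of `q` in `K` are the `ℓ`
distinct conjugates `γ(χ(g_χ)) = (γ·χ)(g_χ)`, and `γ·χ` is determined by its value at `g_χ`.
Stacking these eigenvectors gives an invertible Vandermonde matrix `K^ℓ ≅ K^(Γ·χ)`, which turns
`ρ_χ(g) = A_χ^m` (for `g ≡ g_χ^m mod ker χ`) into multiplication by `ψ(g_χ)^m = ψ(g)` on the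
`ψ`-coordinate. -/

theorem IsPrimitiveRoot.isGalois_of_adjoin_eq_top {F K : Type*} [Field F] [Field K]
    [Algebra F K] {ω : K} {n : ℕ} (hω : IsPrimitiveRoot ω n) (hn : (n : F) ≠ 0)
    (hK : IntermediateField.adjoin F {ω} = ⊤) : IsGalois F K := by
  have : NeZero n := ⟨by rintro rfl; exact hn Nat.cast_zero⟩
  have hadj : Algebra.adjoin F {ω} = ⊤ := by
    rw [← IntermediateField.adjoin_simple_toSubalgebra_of_isAlgebraic
      ((hω.isIntegral (NeZero.pos n)).tower_top).isAlgebraic, hK,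
      IntermediateField.top_toSubalgebra]
  have : IsCyclotomicExtension {n} F K := (IsCyclotomicExtension.iff_singleton n F K).2
    ⟨⟨ω, hω⟩, fun x => by
      have hle : Algebra.adjoin F {ω} ≤ Algebra.adjoin F {b : K | b ^ n = 1} :=
        Algebra.adjoin_mono (Set.singleton_subset_iff.2 hω.pow_eq_one)
      exact hle (Algebra.eq_top_iff.1 hadj x)⟩
  exact IsCyclotomicExtension.isGalois {n} F K

theorem minpoly.separable_of_pow_eq_one {F K : Type*} [Field F] [Field K] [Algebra F K]
    {x : K} {n : ℕ} (hn : (n : F) ≠ 0) (hx : x ^ n = 1) : (minpoly F x).Separable :=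
  (X_pow_sub_one_separable_iff.2 hn).of_dvd (minpoly.dvd F x (by simp [hx]))

theorem MonoidHom.map_eq_map_pow_of_ker_le {G H M : Type*} [Group G] [Group H] [Monoid M]
    {ρ : G →* M} {χ : G →* H} (hker : χ.ker ≤ ρ.ker) {g h : G} {m : ℕ}
    (hm : χ g = χ h ^ m) : ρ g = ρ h ^ m := by
  have hk : g * (h ^ m)⁻¹ ∈ χ.ker := by
    rw [MonoidHom.mem_ker, map_mul, map_inv, map_pow, hm, mul_inv_cancel]
  calc ρ g = ρ (g * (h ^ m)⁻¹) * ρ (h ^ m) := by rw [← map_mul, inv_mul_cancel_right]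
    _ = ρ h ^ m := by rw [hker hk, one_mul, map_pow]

theorem exists_linearEquiv_dotProduct_pow {K S : Type*} [Field K] [Finite S] {d : ℕ}
    {r : S → K} (hr : Function.Injective r) (hd : Nat.card S = d) :
    ∃ e : (Fin d → K) ≃ₗ[K] (S → K), ∀ v s, e v s = (fun j : Fin d => r s ^ (j : ℕ)) ⬝ᵥ v := by
  have := Fintype.ofFinite S
  let ι : Fin d ≃ S := (Finite.equivFinOfCardEq hd).symm
  let f : (Fin d → K) →ₗ[K] (S → K) := (Matrix.of fun s (j : Fin d) => r s ^ (j : ℕ)).mulVecLin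
  have hf : Function.Injective f := by
    refine (injective_iff_map_eq_zero f).2 fun v hv => ?_
    exact Matrix.eq_zero_of_forall_index_sum_pow_mul_eq_zero (f := r ∘ ι)
      (hr.comp ι.injective) fun j => congrFun hv (ι j)
  exact ⟨f.linearEquivOfInjective hf (by simp [← hd, Nat.card_eq_fintype_card]), fun v s => rfl⟩

theorem vecMul_companionMatrix_map {F K : Type*} [Field F] [CommRing K] [Algebra F K]
    {q : F[X]} (hq : q.Monic) {β : K} (hβ : aeval β q = 0) :
    (fun j : Fin q.natDegree => β ^ (j : ℕ)) ᵥ* (companionMatrix q).map (algebraMap F K) =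
      β • fun j : Fin q.natDegree => β ^ (j : ℕ) := by
  have hlast : ∑ j : Fin q.natDegree, β ^ (j : ℕ) * algebraMap F K (q.coeff j) =
      -β ^ q.natDegree := by
    rw [aeval_eq_sum_range, Finset.sum_range_succ, hq.coeff_natDegree, one_smul] at hβ
    rw [eq_neg_iff_add_eq_zero, ← hβ,
      Fin.sum_univ_eq_sum_range (fun j => β ^ j * algebraMap F K (q.coeff j))]
    simp only [Algebra.smul_def, mul_comm]
  ext i
  simp only [vecMul, dotProduct, map_apply, companionMatrix, of_apply, map_sub, mul_sub,
    Finset.sum_sub_distrib, Pi.smul_apply, smul_eq_mul, apply_ite (algebraMap F K), map_one,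
    map_zero, mul_ite, mul_one, mul_zero]
  obtain hi | hi := Nat.lt_or_ge ((i : ℕ) + 1) q.natDegree
  · rw [Finset.sum_eq_single ⟨(i : ℕ) + 1, hi⟩ (fun j _ hj => if_neg fun h => hj (Fin.ext h))
      (by simp), if_pos rfl]
    simp [show (i : ℕ) ≠ q.natDegree - 1 by omega, pow_succ']
  · have hi' : (i : ℕ) = q.natDegree - 1 := by omega
    rw [Finset.sum_eq_zero fun j _ => if_neg (by omega)]
    simp only [hi', if_true, hlast]
    rw [zero_sub, neg_neg, ← pow_succ', Nat.sub_add_cancel (by omega)]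

theorem vecMul_companionMatrix_map_pow {F K : Type*} [Field F] [CommRing K] [Algebra F K]
    {q : F[X]} (hq : q.Monic) {β : K} (hβ : aeval β q = 0) (m : ℕ) :
    (fun j : Fin q.natDegree => β ^ (j : ℕ)) ᵥ* ((companionMatrix q).map (algebraMap F K)) ^ m =
      β ^ m • fun j : Fin q.natDegree => β ^ (j : ℕ) := by
  induction m with
  | zero => simp
  | succ m ih =>
    rw [pow_succ, ← vecMul_vecMul, ih, smul_vecMul, vecMul_companionMatrix_map hq hβ, smul_smul,
      pow_succ]

section GaloisOrbit

variable (F : Type*) {K G : Type*} [Field F] [Field K] [Algebra F K] [Group G]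

def galCharOrbit (χ : G →* Kˣ) : Set (G →* Kˣ) := {ψ | ∃ γ : K ≃ₐ[F] K, ψ = galChar γ χ}

variable {F} {χ : G →* Kˣ} {h : G}

theorem apply_galCharOrbit_eq_pow (ψ : galCharOrbit F χ) {g : G} {m : ℕ}
    (hm : χ g = χ h ^ m) : (ψ : G →* Kˣ) g = (ψ : G →* Kˣ) h ^ m := by
  obtain ⟨_, γ, rfl⟩ := ψ
  simp [galChar, hm]

theorem injective_apply_galCharOrbit (hgen : ∀ g, ∃ m : ℕ, χ g = χ h ^ m) :
    Function.Injective fun ψ : galCharOrbit F χ => ((ψ : G →* Kˣ) h : K) := by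
  intro ψ ψ' hψ
  refine Subtype.ext (MonoidHom.ext fun g => ?_)
  obtain ⟨m, hm⟩ := hgen g
  rw [apply_galCharOrbit_eq_pow ψ hm, apply_galCharOrbit_eq_pow ψ' hm, Units.ext hψ]

theorem aeval_apply_galCharOrbit (ψ : galCharOrbit F χ) :
    aeval ((ψ : G →* Kˣ) h : K) (minpoly F (χ h : K)) = 0 := by
  obtain ⟨_, γ, rfl⟩ := ψ
  simpa [galChar] using minpoly.aeval_algHom F γ.toAlgHom (χ h : K)

variable [Normal F K]

noncomputable def galCharOrbitEquivRootSet (hgen : ∀ g, ∃ m : ℕ, χ g = χ h ^ m) :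
    galCharOrbit F χ ≃ (minpoly F (χ h : K)).rootSet K :=
  Equiv.ofBijective
    (fun ψ => ⟨_, mem_rootSet.2 ⟨minpoly.ne_zero (Algebra.IsIntegral.isIntegral _),
      aeval_apply_galCharOrbit ψ⟩⟩)
    ⟨fun _ _ hψ => injective_apply_galCharOrbit hgen (congrArg Subtype.val hψ), by
      rintro ⟨β, hβ⟩
      obtain ⟨γ, hγ⟩ := minpoly.exists_algEquiv_of_root'
        (Algebra.IsAlgebraic.isAlgebraic (χ h : K)) (mem_rootSet.1 hβ).2
      exact ⟨⟨galChar γ χ, γ, rfl⟩, Subtype.ext (by simpa [galChar] using hγ)⟩⟩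

theorem natCard_galCharOrbit (hgen : ∀ g, ∃ m : ℕ, χ g = χ h ^ m)
    (hsep : (minpoly F (χ h : K)).Separable) :
    Nat.card (galCharOrbit F χ) = (minpoly F (χ h : K)).natDegree := by
  rw [Nat.card_congr (galCharOrbitEquivRootSet hgen), Nat.card_eq_fintype_card,
    card_rootSet_eq_natDegree hsep (Normal.splits ‹_› _)]

end GaloisOrbit

/-- Proposition on irreducible representations of a finite abelian group over a
non-closed field, part (i): after extending scalars from `F` to `K = F(ω)`, the
representation `ρ_χ` built from the companion matrix `A_χ` of the minimal polynomial of
`χ(g_χ)` becomes isomorphic to the direct sum of the one-dimensional representations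
given by the characters in the Galois orbit of `χ`. -/
theorem companion_rep_extended_iso_sum_of_galois_orbit
    {G : Type*} [CommGroup G] [Fintype G]
    {F K : Type*} [Field F] [Field K] [Algebra F K]
    (hchar : (Fintype.card G : F) ≠ 0)
    (ω : K) (hω : orderOf ω = Monoid.exponent G)
    (hK : IntermediateField.adjoin F {ω} = ⊤)
    (χ : G →* Kˣ) (gχ : G)
    (hgen : ∀ g : G, ∃ n : ℤ, χ g = χ gχ ^ n)
    (ρ : G →* Matrix (Fin (minpoly F ((χ gχ : Kˣ) : K)).natDegree)
        (Fin (minpoly F ((χ gχ : Kˣ) : K)).natDegree) F)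
    (hρA : ρ gχ = companionMatrix (minpoly F ((χ gχ : Kˣ) : K)))
    (hρker : ∀ g ∈ χ.ker, ρ g = 1) :
    ∃ e : (Fin (minpoly F ((χ gχ : Kˣ) : K)).natDegree → K) ≃ₗ[K]
        ({ψ : G →* Kˣ | ∃ γ : K ≃ₐ[F] K, ψ = galChar γ χ} → K),
      ∀ (g : G) (v : Fin (minpoly F ((χ gχ : Kˣ) : K)).natDegree → K),
        e (((ρ g).map (algebraMap F K)).mulVec v) =
          fun ψ => ((ψ : {ψ : G →* Kˣ | ∃ γ : K ≃ₐ[F] K, ψ = galChar γ χ}) : G →* Kˣ) g * e v ψ := by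
  have hn : (Monoid.exponent G : F) ≠ 0 := fun h0 => hchar <| by
    obtain ⟨c, hc⟩ := Group.exponent_dvd_card (G := G)
    rw [hc, Nat.cast_mul, h0, zero_mul]
  have hprim : IsPrimitiveRoot ω (Monoid.exponent G) := hω ▸ IsPrimitiveRoot.orderOf ω
  have := hprim.isGalois_of_adjoin_eq_top hn hK
  have hgen' : ∀ g, ∃ m : ℕ, χ g = χ gχ ^ m := fun g =>
    (((χ.isOfFinOrder (isOfFinOrder_of_finite gχ)).mem_powers_iff_mem_zpowers).2
      ((hgen g).imp fun _ => Eq.symm)).imp fun _ => Eq.symm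
  have hsep : (minpoly F ((χ gχ : Kˣ) : K)).Separable := by
    refine minpoly.separable_of_pow_eq_one hn ?_
    rw [← Units.val_pow_eq_pow_val, ← map_pow, Monoid.pow_exponent_eq_one, map_one, Units.val_one]
  have := Finite.of_equiv _ (galCharOrbitEquivRootSet (F := F) hgen').symm
  obtain ⟨e, he⟩ := exists_linearEquiv_dotProduct_pow (injective_apply_galCharOrbit hgen')
    (natCard_galCharOrbit hgen' hsep)
  show ∃ e : _ ≃ₗ[K] (galCharOrbit F χ → K), ∀ g v, e (((ρ g).map (algebraMap F K)).mulVec v) =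
    fun ψ : galCharOrbit F χ => ((ψ : G →* Kˣ) g : K) * e v ψ
  refine ⟨e, fun g v => funext fun ψ => ?_⟩
  obtain ⟨m, hm⟩ := hgen' g
  have hmonic := minpoly.monic (Algebra.IsIntegral.isIntegral (R := F) ((χ gχ : Kˣ) : K))
  rw [MonoidHom.map_eq_map_pow_of_ker_le hρker hm, hρA, Matrix.map_pow, he, he, dotProduct_mulVec,
    vecMul_companionMatrix_map_pow hmonic (aeval_apply_galCharOrbit ψ), smul_dotProduct,
    smul_eq_mul, apply_galCharOrbit_eq_pow ψ hm, Units.val_pow_eq_pow_val]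
end

section
/- Let G be a finite abelian group, F ⊂ K = F(ω) as above, Γ = Gal(K/F), and V_χ ⊂ F(G,F) the irreducible summand corresponding to the Γ-orbit of χ ∈ Ĝ. Then K ⊗_F V_χ admits a K-basis {f_ψ : ψ ∈ Γ·χ} such that each line K f_ψ is G-invariant with G acting through ψ, and γ(f_ψ) = f_{γ·ψ} for all γ ∈ Γ and ψ ∈ Γ·χ. -/
open Submodule

theorem IsCyclotomicExtension.of_adjoin_simple_eq_top {F K : Type*} [Field F] [Field K]
    [Algebra F K] {n : ℕ} [NeZero n] {ω : K} (hω : IsPrimitiveRoot ω n)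
    (hK : IntermediateField.adjoin F {ω} = ⊤) : IsCyclotomicExtension {n} F K := by
  have hint : IsIntegral F ω := (hω.isIntegral (NeZero.pos n)).tower_top
  refine (iff_adjoin_eq_top _ _ _).2 ⟨fun m hm _ => ⟨ω, hm ▸ hω⟩, top_unique ?_⟩
  rw [← IntermediateField.top_toSubalgebra, ← hK,
    IntermediateField.adjoin_simple_toSubalgebra_of_isAlgebraic hint.isAlgebraic]
  exact Algebra.adjoin_mono (by simpa using ⟨NeZero.ne n, hω.pow_eq_one⟩)

section ValueMaps

variable {ι R S : Type*} [Semiring R] [FunLike S R R] [RingHomClass S R R]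

theorem comp_mem_span_of_forall (σ : S) {s t : Set (ι → R)}
    (hst : ∀ w ∈ s, (fun i => σ (w i)) ∈ span R t) {w : ι → R} (hw : w ∈ span R s) :
    (fun i => σ (w i)) ∈ span R t := by
  induction hw using span_induction with
  | mem x hx => exact hst x hx
  | zero => convert zero_mem (span R t) using 1; ext; simp
  | add x y _ _ hx hy => convert add_mem hx hy using 1; ext; simp
  | smul c x _ hx => convert smul_mem _ (σ c) hx using 1; ext; simp

end ValueMaps

section BaseChange

variable {ι F K : Type*} [CommSemiring F] [Semiring K] [Algebra F K] {V : Submodule F (ι → F)}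

theorem algHom_comp_mem_span_algebraMap {S : Type*} [FunLike S K K] [AlgHomClass S F K K]
    (γ : S) {w : ι → K} (hw : w ∈ span K ((fun (v : ι → F) i => algebraMap F K (v i)) '' V)) :
    (fun i => γ (w i)) ∈ span K ((fun (v : ι → F) i => algebraMap F K (v i)) '' V) := by
  refine comp_mem_span_of_forall γ ?_ hw
  rintro _ ⟨v, hv, rfl⟩
  simp only [AlgHomClass.commutes]
  exact subset_span ⟨v, hv, rfl⟩

theorem linearMap_comp_mem_of_mem_span_algebraMap (L : K →ₗ[F] F) {w : ι → K}
    (hw : w ∈ span K ((fun (v : ι → F) i => algebraMap F K (v i)) '' V)) :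
    (fun i => L (w i)) ∈ V := by
  -- quantifying over `c` lets the induction absorb the `K`-scalars of the span
  suffices ∀ c : K, (fun i => L (c * w i)) ∈ V by simpa only [one_mul] using this 1
  induction hw using span_induction with
  | mem x hx =>
    obtain ⟨v, hv, rfl⟩ := hx
    intro c
    convert V.smul_mem (L c) hv using 1
    ext i
    rw [← Algebra.commutes, ← Algebra.smul_def, map_smul, smul_eq_mul, Pi.smul_apply,
      smul_eq_mul, mul_comm]
  | zero => intro c; convert zero_mem V using 1; ext; simp
  | add x y _ _ hx hy => intro c; convert add_mem (hx c) (hy c) using 1; ext; simp [mul_add]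
  | smul a x _ hx => intro c; simpa only [Pi.smul_apply, smul_eq_mul, mul_assoc] using hx (c * a)

theorem span_algebraMap_le_of_minimal {G : Type*} [Group G] {V : Submodule F (G → F)}
    (hVinv : ∀ (g : G), ∀ v ∈ V, (fun h => v (g⁻¹ * h)) ∈ V)
    (hVmin : ∀ W : Submodule F (G → F), W ≤ V →
      (∀ (g : G), ∀ v ∈ W, (fun h => v (g⁻¹ * h)) ∈ W) → W = ⊥ ∨ W = V)
    {U : Submodule K (G → K)} (hUinv : ∀ (g : G), ∀ u ∈ U, (fun h => u (g⁻¹ * h)) ∈ U)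
    {v : G → F} (hv : v ∈ V) (hv0 : v ≠ 0) (hvU : (fun h => algebraMap F K (v h)) ∈ U) :
    span K ((fun (v : G → F) h => algebraMap F K (v h)) '' V) ≤ U := by
  set V' := V ⊓ (U.restrictScalars F).comap (LinearMap.compLeft (Algebra.linearMap F K) G)
  have hV' : V' = V :=
    (hVmin V' inf_le_left fun g x hx => ⟨hVinv g x hx.1, hUinv g _ hx.2⟩).resolve_left
      ((Submodule.ne_bot_iff _).2 ⟨v, ⟨hv, hvU⟩, hv0⟩)
  rw [span_le]
  rintro _ ⟨x, hx, rfl⟩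
  exact (hV' ▸ hx : x ∈ V').2

end BaseChange

theorem algebraMap_trace_comp_mem {ι F K : Type*} [Field F] [Field K] [Algebra F K]
    [FiniteDimensional F K] [IsGalois F K] {U : Submodule K (ι → K)}
    (hU : ∀ γ : K ≃ₐ[F] K, ∀ u ∈ U, (fun i => γ (u i)) ∈ U) {w : ι → K} (hw : w ∈ U) :
    (fun i => algebraMap F K (Algebra.trace F K (w i))) ∈ U := by
  have : (fun i => algebraMap F K (Algebra.trace F K (w i))) =
      ∑ γ : K ≃ₐ[F] K, fun i => γ (w i) := by
    ext i
    simp only [Finset.sum_apply, trace_eq_sum_automorphisms]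
  rw [this]
  exact sum_mem fun γ _ => hU γ w hw

section CharInv

variable {G K : Type*} [Group G] [CommMonoid K]

def charInv (ψ : G →* Kˣ) : G →* K := (Units.coeHom K).comp ψ⁻¹

theorem charInv_injective : Function.Injective (charInv : (G →* Kˣ) → G →* K) := by
  intro ψ φ h
  refine inv_injective (MonoidHom.ext fun g => Units.ext ?_)
  exact DFunLike.congr_fun h g

theorem charInv_translate (ψ : G →* Kˣ) (g : G) :
    (fun h => charInv ψ (g⁻¹ * h)) = (ψ g : K) • ⇑(charInv ψ) := by
  ext h
  simp [charInv, mul_comm]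

theorem eq_smul_charInv_of_translate_eq {χ : G →* Kˣ} {v : G → K}
    (hv : ∀ g : G, (fun h => v (g⁻¹ * h)) = fun h => ((χ g : Kˣ) : K) * v h) :
    v = v 1 • ⇑(charInv χ) := by
  ext h
  have := congrFun (hv h⁻¹) 1
  simp only [inv_inv, mul_one] at this
  simp [this, charInv, mul_comm]

end CharInv

theorem charInv_galChar {G F K : Type*} [Group G] [Field F] [Field K] [Algebra F K]
    (γ : K ≃ₐ[F] K) (ψ : G →* Kˣ) :
    (fun h => γ (charInv ψ h)) = ⇑(charInv (galChar γ ψ)) := by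
  ext h
  simp [charInv, galChar]

theorem translate_mem_span_charInv {G K : Type*} [Group G] [CommSemiring K] {S : Set (G →* Kˣ)}
    (g : G) {u : G → K} (hu : u ∈ span K ((fun ψ => ⇑(charInv ψ)) '' S)) :
    (fun h => u (g⁻¹ * h)) ∈ span K ((fun ψ => ⇑(charInv ψ)) '' S) := by
  refine (span_le (p := (span K _).comap (LinearMap.funLeft K K (g⁻¹ * ·)))).2 ?_ hu
  rintro _ ⟨ψ, hψ, rfl⟩
  change (fun h => charInv ψ (g⁻¹ * h)) ∈ span K _
  rw [charInv_translate]
  exact smul_mem _ _ (subset_span ⟨ψ, hψ, rfl⟩)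

theorem algEquiv_comp_mem_span_charInv {G F K : Type*} [Group G] [Field F] [Field K] [Algebra F K]
    {S : Set (G →* Kˣ)} (hS : ∀ γ : K ≃ₐ[F] K, ∀ ψ ∈ S, galChar γ ψ ∈ S) (γ : K ≃ₐ[F] K)
    {u : G → K} (hu : u ∈ span K ((fun ψ => ⇑(charInv ψ)) '' S)) :
    (fun h => γ (u h)) ∈ span K ((fun ψ => ⇑(charInv ψ)) '' S) := by
  refine comp_mem_span_of_forall γ ?_ hu
  rintro _ ⟨ψ, hψ, rfl⟩
  rw [charInv_galChar]
  exact subset_span ⟨_, hS γ ψ hψ, rfl⟩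

theorem exists_galois_equivariant_eigenbasis_general
    {G : Type*} [CommGroup G] [Fintype G]
    {F K : Type*} [Field F] [Field K] [Algebra F K]
    (ω : K) (hω : orderOf ω = Monoid.exponent G)
    (hK : IntermediateField.adjoin F {ω} = ⊤)
    (χ : G →* Kˣ)
    (V : Submodule F (G → F))
    (hVinv : ∀ (g : G), ∀ v ∈ V, (fun h => v (g⁻¹ * h)) ∈ V)
    (hVmin : ∀ W : Submodule F (G → F), W ≤ V →
      (∀ (g : G), ∀ v ∈ W, (fun h => v (g⁻¹ * h)) ∈ W) → W = ⊥ ∨ W = V)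
    -- `V` corresponds to the `Γ`-orbit of `χ`: its `K`-span contains a `χ`-eigenvector
    (hVχ : ∃ v₀ : G → K, v₀ ≠ 0 ∧
      v₀ ∈ Submodule.span K ((fun (v : G → F) => fun h => algebraMap F K (v h)) '' V) ∧
      ∀ g : G, (fun h => v₀ (g⁻¹ * h)) = fun h => ((χ g : Kˣ) : K) * v₀ h) :
    ∃ f : (G →* Kˣ) → (G → K),
      LinearIndependent K
        (fun ψ : {ψ : G →* Kˣ // ∃ γ : K ≃ₐ[F] K, ψ = galChar γ χ} => f (ψ : G →* Kˣ)) ∧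
      Submodule.span K (f '' {ψ : G →* Kˣ | ∃ γ : K ≃ₐ[F] K, ψ = galChar γ χ}) =
        Submodule.span K ((fun (v : G → F) => fun h => algebraMap F K (v h)) '' V) ∧
      (∀ ψ : G →* Kˣ, (∃ γ : K ≃ₐ[F] K, ψ = galChar γ χ) →
        ∀ g : G, (fun h => f ψ (g⁻¹ * h)) = fun h => ((ψ g : Kˣ) : K) * f ψ h) ∧
      (∀ (γ : K ≃ₐ[F] K) (ψ : G →* Kˣ), (∃ γ' : K ≃ₐ[F] K, ψ = galChar γ' χ) →
        (fun h => γ (f ψ h)) = f (galChar γ ψ)) := by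
  have : NeZero (Monoid.exponent G) := ⟨Monoid.exponent_ne_zero_of_finite⟩
  have := IsCyclotomicExtension.of_adjoin_simple_eq_top (hω ▸ IsPrimitiveRoot.orderOf ω) hK
  have := IsCyclotomicExtension.finiteDimensional {Monoid.exponent G} F K
  have := IsCyclotomicExtension.isGalois {Monoid.exponent G} F K
  set O := {ψ : G →* Kˣ | ∃ γ : K ≃ₐ[F] K, ψ = galChar γ χ}
  set W := span K ((fun (v : G → F) h => algebraMap F K (v h)) '' V)
  set U := span K ((fun ψ => ⇑(charInv ψ)) '' O)
  obtain ⟨v₀, hv₀, hv₀W, hv₀χ⟩ := hVχ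
  have hχW : ⇑(charInv χ) ∈ W := by
    have hv₀eq := eq_smul_charInv_of_translate_eq hv₀χ
    have hv₀1 : v₀ 1 ≠ 0 := fun h0 => hv₀ (by rw [hv₀eq, h0, zero_smul])
    rw [(eq_inv_smul_iff₀ hv₀1).2 hv₀eq.symm]
    exact W.smul_mem _ hv₀W
  have hUW : U ≤ W := by
    rw [span_le]
    rintro _ ⟨_, ⟨γ, rfl⟩, rfl⟩
    change ⇑(charInv (galChar γ χ)) ∈ W
    rw [← charInv_galChar]
    exact algHom_comp_mem_span_algebraMap γ hχW
  obtain ⟨c, hc⟩ : ∃ c : K, Algebra.trace F K c ≠ 0 := by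
    simpa [LinearMap.ext_iff] using Algebra.trace_ne_zero F K
  have hO : ∀ γ : K ≃ₐ[F] K, ∀ ψ ∈ O, galChar γ ψ ∈ O := by
    rintro γ _ ⟨γ', rfl⟩
    exact ⟨γ'.trans γ, rfl⟩
  have hWU : W ≤ U := by
    have hχU : c • ⇑(charInv χ) ∈ U :=
      U.smul_mem c (subset_span ⟨χ, ⟨AlgEquiv.refl, rfl⟩, rfl⟩)
    refine span_algebraMap_le_of_minimal hVinv hVmin
      (fun g u hu => translate_mem_span_charInv g hu)
      (v := fun h => Algebra.trace F K ((c • ⇑(charInv χ)) h))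
      (linearMap_comp_mem_of_mem_span_algebraMap _ (W.smul_mem c hχW))
      (fun h0 => hc (by simpa using congrFun h0 1))
      (algebraMap_trace_comp_mem (fun γ u hu => algEquiv_comp_mem_span_charInv hO γ hu) hχU)
  refine ⟨fun ψ => charInv ψ, ?_, le_antisymm hUW hWU, fun ψ _ g => charInv_translate ψ g,
    fun γ ψ _ => charInv_galChar γ ψ⟩
  exact (linearIndependent_monoidHom G K).comp _ (charInv_injective.comp Subtype.val_injective)

/-- Let `V_χ ⊆ F(G,F)` be the minimal `G`-invariant subspace of the regular representation
corresponding to the `Γ`-orbit of the character `χ`. Then the `K`-span `W` of `V_χ` in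
`F(G,K)` has a `K`-basis `{f_ψ : ψ ∈ Γ·χ}` such that each line `K f_ψ` is `G`-stable with
`G` acting through `ψ`, and `γ(f_ψ) = f_{γ·ψ}` for all `γ ∈ Γ`. -/
theorem exists_galois_equivariant_eigenbasis
    {G : Type*} [CommGroup G] [Fintype G]
    {F K : Type*} [Field F] [Field K] [Algebra F K]
    (hchar : (Fintype.card G : F) ≠ 0)
    (ω : K) (hω : orderOf ω = Monoid.exponent G)
    (hK : IntermediateField.adjoin F {ω} = ⊤)
    (χ : G →* Kˣ)
    (V : Submodule F (G → F))
    (hVinv : ∀ (g : G), ∀ v ∈ V, (fun h => v (g⁻¹ * h)) ∈ V)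
    (hVne : V ≠ ⊥)
    (hVmin : ∀ W : Submodule F (G → F), W ≤ V →
      (∀ (g : G), ∀ v ∈ W, (fun h => v (g⁻¹ * h)) ∈ W) → W = ⊥ ∨ W = V)
    -- `V` corresponds to the `Γ`-orbit of `χ`: its `K`-span contains a `χ`-eigenvector
    (hVχ : ∃ v₀ : G → K, v₀ ≠ 0 ∧
      v₀ ∈ Submodule.span K ((fun (v : G → F) => fun h => algebraMap F K (v h)) '' V) ∧
      ∀ g : G, (fun h => v₀ (g⁻¹ * h)) = fun h => ((χ g : Kˣ) : K) * v₀ h) :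
    ∃ f : (G →* Kˣ) → (G → K),
      LinearIndependent K
        (fun ψ : {ψ : G →* Kˣ // ∃ γ : K ≃ₐ[F] K, ψ = galChar γ χ} => f (ψ : G →* Kˣ)) ∧
      Submodule.span K (f '' {ψ : G →* Kˣ | ∃ γ : K ≃ₐ[F] K, ψ = galChar γ χ}) =
        Submodule.span K ((fun (v : G → F) => fun h => algebraMap F K (v h)) '' V) ∧
      (∀ ψ : G →* Kˣ, (∃ γ : K ≃ₐ[F] K, ψ = galChar γ χ) →
        ∀ g : G, (fun h => f ψ (g⁻¹ * h)) = fun h => ((ψ g : Kˣ) : K) * f ψ h) ∧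
      (∀ (γ : K ≃ₐ[F] K) (ψ : G →* Kˣ), (∃ γ' : K ≃ₐ[F] K, ψ = galChar γ' χ) →
        (fun h => γ (f ψ h)) = f (galChar γ ψ)) :=
  exists_galois_equivariant_eigenbasis_general ω hω hK χ V hVinv hVmin hVχ
end

section
/- Let G be a finite abelian group, F a field with char F ∤ |G|, K = F(ω) with ord(ω)=exp(G), Γ = Gal(K/F), and M ⊆ B(Ĝ). Suppose that for every Γ-stable subset I ⊆ Ĝ, the ℤ-span of M_I := {m ∈ M : m(ψ)=0 for ψ∉I} contains B(Ĝ)_I := {b ∈ B(Ĝ) : b(ψ)=0 for ψ∉I}. Then the G-invariant monomials {x^m : m ∈ M} separate the G-orbits in the real form F(G,F) ⊂ F(G,K). -/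
noncomputable def natToZ {α : Type*} (m : α →₀ ℕ) : α →₀ ℤ :=
  m.mapRange (Nat.cast : ℕ → ℤ) Nat.cast_zero

theorem Module.Basis.repr_apply_of_apply_eq_smul {ι R M : Type*} [CommSemiring R]
    [AddCommMonoid M] [Module R M] (b : Module.Basis ι R M) {σ : R →+* R} (f : M →ₛₗ[σ] M)
    {e : ι → ι} (he : e.Injective) {c : ι → R} (hf : ∀ i, f (b i) = c i • b (e i))
    (x : M) (i : ι) : b.repr (f x) (e i) = c i * σ (b.repr x i) := by
  classical
  rw [← b.linearCombination_repr x]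
  induction b.repr x using Finsupp.induction_linear with
  | zero => simp
  | add l₁ l₂ h₁ h₂ => simp [h₁, h₂, mul_add]
  | single j r =>
    simp only [Finsupp.linearCombination_single, map_smulₛₗ, hf, smul_smul, b.repr_self,
      Finsupp.smul_apply, Finsupp.single_apply, he.eq_iff, smul_eq_mul]
    split_ifs with hji <;> simp [hji, mul_comm]

section ExponentVectors

variable {ι X H : Type*} [CommGroup X] [CommGroup H]

def zpowProdHom (φ : ι → X) : Multiplicative (ι →₀ ℤ) →* X where
  toFun t := t.toAdd.prod fun i k => φ i ^ k
  map_one' := Finsupp.prod_zero_index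
  map_mul' _ _ := Finsupp.prod_add_index' (fun _ => zpow_zero _) fun _ => zpow_add _

theorem zpowProdHom_ofAdd_natToZ (φ : ι → X) (s : ι →₀ ℕ) :
    zpowProdHom φ (.ofAdd (natToZ s)) = s.prod fun i k => φ i ^ k := by
  simp [zpowProdHom, natToZ, Finsupp.prod_mapRange_index]

theorem zpowProdHom_ofAdd_single (φ : ι → X) (i : ι) :
    zpowProdHom φ (.ofAdd (Finsupp.single i 1)) = φ i := by
  simp [zpowProdHom]

theorem exists_natToZ_sub_natToZ (t : ι →₀ ℤ) : ∃ p q : ι →₀ ℕ, natToZ p - natToZ q = t :=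
  ⟨t.mapRange Int.toNat rfl, (-t).mapRange Int.toNat rfl, Finsupp.ext fun i => by
    simp [natToZ]⟩

theorem natToZ_add (p q : ι →₀ ℕ) : natToZ (p + q) = natToZ p + natToZ q := by
  ext; simp [natToZ]

theorem natToZ_nsmul (n : ℕ) (p : ι →₀ ℕ) : natToZ (n • p) = n • natToZ p := by
  ext; simp [natToZ]

theorem ker_zpowProdHom_le [Finite X] {φ : ι → X} {u : ι → H}
    (h : ∀ s : ι →₀ ℕ, s.prod (fun i k => φ i ^ k) = 1 → s.prod (fun i k => u i ^ k) = 1) :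
    (zpowProdHom φ).ker ≤ (zpowProdHom u).ker := by
  intro t ht
  obtain ⟨p, q, hpq⟩ := exists_natToZ_sub_natToZ t.toAdd
  set a : Multiplicative (ι →₀ ℤ) := .ofAdd (natToZ p)
  set b : Multiplicative (ι →₀ ℤ) := .ofAdd (natToZ q)
  have hab : t = a / b := by rw [← ofAdd_sub, hpq]; rfl
  have hN : ∀ s : ι →₀ ℕ, zpowProdHom φ (.ofAdd (natToZ s)) = 1 →
      zpowProdHom u (.ofAdd (natToZ s)) = 1 := by
    simpa only [zpowProdHom_ofAdd_natToZ] using h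
  set n := Monoid.exponent X
  have hn : 1 ≤ n := Nat.one_le_iff_ne_zero.mpr Monoid.exponent_ne_zero_of_finite
  rw [MonoidHom.mem_ker, hab, map_div, div_eq_one] at ht ⊢
  -- `a * b ^ (n - 1)` and `b ^ n` have nonnegative exponent vectors and trivial image in `X`.
  have h₁ : zpowProdHom u a * zpowProdHom u b ^ (n - 1) = 1 := by
    have := hN (p + (n - 1) • q)
    rw [natToZ_add, natToZ_nsmul, ofAdd_add, ofAdd_nsmul, map_mul, map_pow, map_mul,
      map_pow] at this
    refine this ?_
    rw [ht, ← pow_succ', Nat.sub_add_cancel hn, Monoid.pow_exponent_eq_one]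
  have h₂ : zpowProdHom u b ^ n = 1 := by
    have := hN (n • q)
    rw [natToZ_nsmul, ofAdd_nsmul, map_pow, map_pow] at this
    exact this (Monoid.pow_exponent_eq_one _)
  calc zpowProdHom u a = zpowProdHom u a * zpowProdHom u b ^ (n - 1 + 1) := by
        rw [Nat.sub_add_cancel hn, h₂, mul_one]
    _ = zpowProdHom u b := by rw [pow_succ, ← mul_assoc, h₁, one_mul]

theorem exists_monoidHom_apply_eq_of_prod_pow_eq_one {M : Type*} [CommMonoid M] [Finite X]
    [HasEnoughRootsOfUnity M (Monoid.exponent X)] (φ : ι → X) (u : ι → Mˣ)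
    (h : ∀ s : ι →₀ ℕ, s.prod (fun i k => φ i ^ k) = 1 → s.prod (fun i k => u i ^ k) = 1) :
    ∃ Λ : X →* Mˣ, ∀ i, Λ (φ i) = u i := by
  set F := zpowProdHom φ
  let lam : F.range →* Mˣ := F.rangeRestrict.liftOfSurjective F.rangeRestrict_surjective
    ⟨zpowProdHom u, by rw [MonoidHom.ker_rangeRestrict]; exact ker_zpowProdHom_le h⟩
  obtain ⟨Λ, hΛ⟩ := MonoidHom.domRestrict_surjective (M := M) F.range lam
  refine ⟨Λ, fun i => ?_⟩
  have hi : F.rangeRestrict (.ofAdd (Finsupp.single i 1)) =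
      ⟨φ i, _, zpowProdHom_ofAdd_single φ i⟩ :=
    Subtype.ext (zpowProdHom_ofAdd_single φ i)
  calc Λ (φ i) = lam (F.rangeRestrict (.ofAdd (Finsupp.single i 1))) := by
        rw [hi, ← hΛ]; rfl
    _ = zpowProdHom u (.ofAdd (Finsupp.single i 1)) :=
        F.rangeRestrict.liftOfRightInverse_comp_apply _ _ _ _
    _ = u i := zpowProdHom_ofAdd_single u i

theorem prod_pow_eq_one_of_natToZ_mem_span {S : Set (ι →₀ ℕ)} {u : ι → H}
    (hS : ∀ m ∈ S, m.prod (fun i k => u i ^ k) = 1) {s : ι →₀ ℕ}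
    (hs : natToZ s ∈ Submodule.span ℤ (natToZ '' S)) : s.prod (fun i k => u i ^ k) = 1 := by
  rw [← zpowProdHom_ofAdd_natToZ]
  generalize natToZ s = t at hs ⊢
  induction hs using Submodule.span_induction with
  | mem t ht =>
    obtain ⟨m, hm, rfl⟩ := ht
    rw [zpowProdHom_ofAdd_natToZ]
    exact hS m hm
  | zero => exact map_one _
  | add a b _ _ ha hb => rw [ofAdd_add, map_mul, ha, hb, one_mul]
  | smul k a _ ha => rw [ofAdd_zsmul, map_zpow, ha, one_zpow]

theorem apply_eq_zero_of_natToZ_mem_span {S : Set (ι →₀ ℕ)} {J : Set ι}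
    (hS : ∀ m ∈ S, ∀ i ∉ J, m i = 0) {s : ι →₀ ℕ}
    (hs : natToZ s ∈ Submodule.span ℤ (natToZ '' S)) (i : ι) (hi : i ∉ J) : s i = 0 := by
  have hspan : Submodule.span ℤ (natToZ '' S) ≤ Finsupp.supported ℤ ℤ J := by
    rw [Submodule.span_le]
    rintro _ ⟨m, hm, rfl⟩
    exact (Finsupp.mem_supported' _ _).mpr fun j hj => by simp [natToZ, hS m hm j hj]
  simpa [natToZ] using (Finsupp.mem_supported' _ _).mp (hspan hs) i hi

theorem Finsupp.prod_pow_ne_zero_iff {K : Type*} [CommMonoidWithZero K] [NoZeroDivisors K]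
    [Nontrivial K] {m : ι →₀ ℕ} {c : ι → K} :
    m.prod (fun i k => c i ^ k) ≠ 0 ↔ ∀ i, m i ≠ 0 → c i ≠ 0 := by
  simp only [Finsupp.prod, ne_eq, Finset.prod_eq_zero_iff, pow_eq_zero_iff',
    Finsupp.mem_support_iff]
  grind

/-- The hypothesis of the theorem at `I`: `B(X)_I ⊆ span_ℤ M_I`. -/
def SpanContainsBlocks (M : Set (X →₀ ℕ)) (I : Set X) : Prop :=
  ∀ s : X →₀ ℕ, s.prod (fun x k => x ^ k) = 1 → (∀ x, x ∉ I → s x = 0) →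
    natToZ s ∈ Submodule.span ℤ (natToZ '' {m | m ∈ M ∧ ∀ x, x ∉ I → m x = 0})

section Coordinates

variable {K : Type*} [CommGroupWithZero K] {M : Set (X →₀ ℕ)} {I : Set X} {c d : X → K}

theorem ne_zero_of_spanContainsBlocks [Finite X] (hM : SpanContainsBlocks M I)
    (hc : ∀ x ∈ I, c x ≠ 0)
    (hcd : ∀ m ∈ M, m.prod (fun x k => c x ^ k) = m.prod (fun x k => d x ^ k)) :
    ∀ x ∈ I, d x ≠ 0 := by
  intro x hx
  have hMI : ∀ m ∈ {m | m ∈ M ∧ ∀ x, x ∉ I → m x = 0}, ∀ y ∉ {y | d y ≠ 0}, m y = 0 := by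
    rintro m ⟨hm, hmI⟩ y hy
    by_contra hmy
    have hcm : m.prod (fun x k => c x ^ k) ≠ 0 :=
      Finsupp.prod_pow_ne_zero_iff.mpr fun z hz => hc z (not_imp_comm.mp (hmI z) hz)
    rw [hcd m hm] at hcm
    exact hy (Finsupp.prod_pow_ne_zero_iff.mp hcm y hmy)
  have hs := hM (Finsupp.single x (orderOf x)) (by simp [pow_orderOf_eq_one])
    fun y hy => Finsupp.single_eq_of_ne (by rintro rfl; exact hy hx)
  by_contra hdx
  simpa [(orderOf_pos x).ne'] using apply_eq_zero_of_natToZ_mem_span hMI hs x (not_not.mpr hdx)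

theorem exists_monoidHom_mul_eq_of_spanContainsBlocks [Finite X]
    [HasEnoughRootsOfUnity K (Monoid.exponent X)] (hM : SpanContainsBlocks M I)
    (hc : ∀ x ∈ I, c x ≠ 0) (hd : ∀ x ∈ I, d x ≠ 0)
    (hcd : ∀ m ∈ M, m.prod (fun x k => c x ^ k) = m.prod (fun x k => d x ^ k)) :
    ∃ Λ : X →* Kˣ, ∀ x ∈ I, Λ x * c x = d x := by
  classical
  let u : X → Kˣ := fun x =>
    if hx : x ∈ I then Units.mk0 (d x / c x) (div_ne_zero (hd x hx) (hc x hx)) else 1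
  have hu : ∀ x ∈ I, (u x : K) * c x = d x := fun x hx => by simp [u, hx, hc x hx]
  have hMu : ∀ m ∈ {m | m ∈ M ∧ ∀ x, x ∉ I → m x = 0}, m.prod (fun x k => u x ^ k) = 1 := by
    rintro m ⟨hm, hmI⟩
    have hcm : m.prod (fun x k => c x ^ k) ≠ 0 :=
      Finsupp.prod_pow_ne_zero_iff.mpr fun z hz => hc z (not_imp_comm.mp (hmI z) hz)
    rw [← Units.val_eq_one, ← Units.coeHom_apply, map_finsuppProd]
    have key : m.prod (fun x k => Units.coeHom K (u x ^ k)) * m.prod (fun x k => c x ^ k) =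
        m.prod (fun x k => c x ^ k) := by
      rw [← Finsupp.prod_mul, hcd m hm]
      refine Finsupp.prod_congr fun x hx => ?_
      rw [map_pow, Units.coeHom_apply, ← mul_pow,
        hu x (not_imp_comm.mp (hmI x) (Finsupp.mem_support_iff.mp hx))]
    exact (mul_eq_right₀ hcm).mp key
  obtain ⟨Λ, hΛ⟩ := exists_monoidHom_apply_eq_of_prod_pow_eq_one (ι := I) Subtype.val
    (fun x => u x) fun s hs => by
      have := prod_pow_eq_one_of_natToZ_mem_span hMu
        (hM (s.embDomain (Function.Embedding.subtype _)) (by rwa [Finsupp.prod_embDomain])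
          fun x hx => Finsupp.embDomain_of_notMem_range _ _ _ (by simpa using hx))
      rwa [Finsupp.prod_embDomain] at this
  exact ⟨Λ, fun x hx => by rw [hΛ ⟨x, hx⟩, hu x hx]⟩

end Coordinates

end ExponentVectors

theorem galChar_injective {F K G : Type*} [Field F] [Field K] [Algebra F K] [Group G]
    (γ : K ≃ₐ[F] K) : Function.Injective (galChar (G := G) γ) := fun _ _ h =>
  MonoidHom.ext fun g => Units.ext (γ.injective (congrArg Units.val (DFunLike.congr_fun h g)))

theorem repr_translate {G K : Type*} [Group G] [CommRing K]
    (b : Module.Basis (G →* Kˣ) K (G → K))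
    (heig : ∀ (ψ : G →* Kˣ) (g : G), (fun h => b ψ (g⁻¹ * h)) = fun h => ((ψ g : Kˣ) : K) * b ψ h)
    (x : G → K) (g : G) (ψ : G →* Kˣ) :
    b.repr (fun h => x (g⁻¹ * h)) ψ = ψ g * b.repr x ψ :=
  b.repr_apply_of_apply_eq_smul (LinearMap.funLeft K K (g⁻¹ * ·)) Function.injective_id
    (fun ψ => heig ψ g) x ψ

theorem repr_galChar {G F K : Type*} [Group G] [Field F] [Field K] [Algebra F K]
    (b : Module.Basis (G →* Kˣ) K (G → K))
    (hequiv : ∀ (γ : K ≃ₐ[F] K) (ψ : G →* Kˣ), (fun h => γ (b ψ h)) = b (galChar γ ψ))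
    (γ : K ≃ₐ[F] K) {x : G → K} (hx : ∀ g, γ (x g) = x g) (ψ : G →* Kˣ) :
    b.repr x (galChar γ ψ) = γ (b.repr x ψ) := by
  let f : (G → K) →ₛₗ[(γ : K →+* K)] G → K :=
    { toFun := fun y h => γ (y h)
      map_add' := fun _ _ => funext fun _ => map_add γ _ _
      map_smul' := fun _ _ => funext fun _ => map_mul γ _ _ }
  have hfx : f x = x := funext hx
  simpa [hfx] using b.repr_apply_of_apply_eq_smul f (galChar_injective γ) (c := fun _ => 1)
    (fun ψ => by simp only [one_smul]; exact hequiv γ ψ) x ψ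

theorem mapsTo_galChar_support_repr {G F K : Type*} [Group G] [Field F] [Field K] [Algebra F K]
    (b : Module.Basis (G →* Kˣ) K (G → K))
    (hequiv : ∀ (γ : K ≃ₐ[F] K) (ψ : G →* Kˣ), (fun h => γ (b ψ h)) = b (galChar γ ψ))
    {x : G → K} (hx : ∀ g : G, x g ∈ Set.range (algebraMap F K)) (γ : K ≃ₐ[F] K) :
    Set.MapsTo (galChar γ) {ψ | b.repr x ψ ≠ 0} {ψ | b.repr x ψ ≠ 0} := fun ψ hψ => by
  have hfix : ∀ g, γ (x g) = x g := fun g => by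
    obtain ⟨r, hr⟩ := hx g
    rw [← hr, γ.commutes]
  simpa [repr_galChar b hequiv γ hfix] using hψ

theorem prod_pow_apply_mul_eq {G M : Type*} [Group G] [CommMonoid M]
    {m : (G →* Mˣ) →₀ ℕ} (hm : m.prod (fun ψ k => ψ ^ k) = 1) (g : G) (c : (G →* Mˣ) → M) :
    m.prod (fun ψ k => ((ψ g : M) * c ψ) ^ k) = m.prod (fun ψ k => c ψ ^ k) := by
  have hg : m.prod (fun ψ k => (ψ g : M) ^ k) = 1 := by
    simpa [Finsupp.prod, MonoidHom.finsetProd_apply] using congrArg (fun χ => (χ g : M)) hm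
  simp_rw [mul_pow]
  rw [Finsupp.prod_mul, hg, one_mul]

theorem monomials_separate_orbits_of_span_condition_general
    {G : Type*} [CommGroup G] [Fintype G]
    {F K : Type*} [Field F] [Field K] [Algebra F K]
    (ω : K) (hω : orderOf ω = Monoid.exponent G)
    (b : Module.Basis (G →* Kˣ) K (G → K))
    (heig : ∀ (ψ : G →* Kˣ) (g : G), (fun h => b ψ (g⁻¹ * h)) = fun h => ((ψ g : Kˣ) : K) * b ψ h)
    (hequiv : ∀ (γ : K ≃ₐ[F] K) (ψ : G →* Kˣ), (fun h => γ (b ψ h)) = b (galChar γ ψ))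
    (M : Set ((G →* Kˣ) →₀ ℕ))
    (hM : ∀ m ∈ M, m.prod (fun ψ k => ψ ^ k) = 1)
    (hstar : ∀ I : Set (G →* Kˣ),
      (∀ (γ : K ≃ₐ[F] K) (ψ : G →* Kˣ), ψ ∈ I → galChar γ ψ ∈ I) →
      ∀ s : (G →* Kˣ) →₀ ℕ, s.prod (fun ψ k => ψ ^ k) = 1 →
        (∀ ψ : G →* Kˣ, ψ ∉ I → s ψ = 0) →
        natToZ s ∈ Submodule.span ℤ
          (natToZ '' {m | m ∈ M ∧ ∀ ψ : G →* Kˣ, ψ ∉ I → m ψ = 0}))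
    (v w : G → K)
    (hv : ∀ g : G, v g ∈ Set.range (algebraMap F K))
    (hw : ∀ g : G, w g ∈ Set.range (algebraMap F K)) :
    (∃ g : G, (fun h => v (g⁻¹ * h)) = w) ↔
      ∀ m ∈ M, m.prod (fun ψ k => (b.repr v ψ) ^ k) =
        m.prod (fun ψ k => (b.repr w ψ) ^ k) := by
  have : HasEnoughRootsOfUnity K (Monoid.exponent G) :=
    ⟨⟨ω, hω ▸ IsPrimitiveRoot.orderOf ω⟩, rootsOfUnity.isCyclic K _⟩
  have : HasEnoughRootsOfUnity K (Monoid.exponent (G →* Kˣ)) := by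
    rwa [Monoid.exponent_eq_of_mulEquiv
      (CommGroup.monoidHom_mulEquiv_of_hasEnoughRootsOfUnity G K).some]
  constructor
  · rintro ⟨g, rfl⟩ m hm
    simp_rw [repr_translate b heig]
    exact (prod_pow_apply_mul_eq (hM m hm) g _).symm
  · intro hsep
    have hMv : SpanContainsBlocks M {ψ | b.repr v ψ ≠ 0} :=
      hstar _ fun γ _ hψ => mapsTo_galChar_support_repr b hequiv hv γ hψ
    have hMw : SpanContainsBlocks M {ψ | b.repr w ψ ≠ 0} :=
      hstar _ fun γ _ hψ => mapsTo_galChar_support_repr b hequiv hw γ hψ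
    have hwv := ne_zero_of_spanContainsBlocks hMw (fun _ h => h) fun m hm => (hsep m hm).symm
    obtain ⟨Λ, hΛ⟩ := exists_monoidHom_mul_eq_of_spanContainsBlocks hMv (fun _ h => h)
      (ne_zero_of_spanContainsBlocks hMv (fun _ h => h) hsep) hsep
    refine ⟨CommGroup.monoidHomMonoidHomEquiv G K Λ, b.repr.injective (Finsupp.ext fun ψ => ?_)⟩
    rw [repr_translate b heig, CommGroup.apply_monoidHomMonoidHomEquiv]
    by_cases hψ : b.repr v ψ = 0
    · rw [hψ, mul_zero, eq_comm]
      exact not_not.mp fun h => hwv ψ h hψ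
    · exact hΛ ψ hψ

/-- Separating monomials over a non-closed field: if for every `Γ`-stable subset
`I ⊆ Ĝ` the `ℤ`-span of `M_I` contains `B(Ĝ)_I`, then the invariant monomials
`{x^m : m ∈ M}` separate the `G`-orbits in the rational form `F(G,F) ⊆ F(G,K)`. -/
theorem monomials_separate_orbits_of_span_condition
    {G : Type*} [CommGroup G] [Fintype G]
    {F K : Type*} [Field F] [Field K] [Algebra F K]
    (hchar : (Fintype.card G : F) ≠ 0)
    (ω : K) (hω : orderOf ω = Monoid.exponent G)
    (hK : IntermediateField.adjoin F {ω} = ⊤)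
    (b : Module.Basis (G →* Kˣ) K (G → K))
    (heig : ∀ (ψ : G →* Kˣ) (g : G), (fun h => b ψ (g⁻¹ * h)) = fun h => ((ψ g : Kˣ) : K) * b ψ h)
    (hequiv : ∀ (γ : K ≃ₐ[F] K) (ψ : G →* Kˣ), (fun h => γ (b ψ h)) = b (galChar γ ψ))
    (M : Set ((G →* Kˣ) →₀ ℕ))
    (hM : ∀ m ∈ M, m.prod (fun ψ k => ψ ^ k) = 1)
    (hstar : ∀ I : Set (G →* Kˣ),
      (∀ (γ : K ≃ₐ[F] K) (ψ : G →* Kˣ), ψ ∈ I → galChar γ ψ ∈ I) →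
      ∀ s : (G →* Kˣ) →₀ ℕ, s.prod (fun ψ k => ψ ^ k) = 1 →
        (∀ ψ : G →* Kˣ, ψ ∉ I → s ψ = 0) →
        natToZ s ∈ Submodule.span ℤ
          (natToZ '' {m | m ∈ M ∧ ∀ ψ : G →* Kˣ, ψ ∉ I → m ψ = 0}))
    (v w : G → K)
    (hv : ∀ g : G, v g ∈ Set.range (algebraMap F K))
    (hw : ∀ g : G, w g ∈ Set.range (algebraMap F K)) :
    (∃ g : G, (fun h => v (g⁻¹ * h)) = w) ↔
      ∀ m ∈ M, m.prod (fun ψ k => (b.repr v ψ) ^ k) =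
        m.prod (fun ψ k => (b.repr w ψ) ^ k) :=
  monomials_separate_orbits_of_span_condition_general ω hω b heig hequiv M hM hstar v w hv hw
end

section
/- Let d be a positive integer such that for every Γ-stable subset I of Ĝ, the monoid B(Ĝ)_I is contained in the ℤ-span of its elements of length at most d. Then the separating Noether number of G over F is at most d: every finite dimensional FG-module has its orbits separated by invariants of degree at most d. -/
/-!
Over `K = F(ω)` the representation splits into isotypic components `E_χ v`, `χ ∈ Ĝ`, and for an
`F`-rational vector `v` the set `I` of characters with `E_χ v ≠ 0` is `Γ`-stable. If `v` and `w`
are not separated by invariants of degree `≤ d` over `F`, they are not separated by such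
invariants over `K` either (expand the coefficients in an `F`-basis of `K`). Products of coordinates
of isotypic components along a product-one sequence of length `≤ d` are such invariants. As every
`χ ∈ I` lies in a short product-one sequence over `I`, this forces `E_χ w = c_χ E_χ v` with
`c_χ ≠ 0`, and `∏ c_ψ = 1` along every short product-one sequence over `I`, hence along all of
them since they span. By duality for the finite abelian group `G`, a family `(c_ψ)_{ψ ∈ I}`
satisfying every relation among the `ψ ∈ I` is of the form `c_ψ = ψ g` for some `g ∈ G`, and then
`g v = w`.
-/

open MvPolynomial

open Matrix

section Invariants

variable {R ι : Type*} [CommSemiring R] {n : ℕ}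

def IsMatrixInvariant (A : ι → Matrix (Fin n) (Fin n) R) (f : MvPolynomial (Fin n) R) : Prop :=
  ∀ i u, eval (A i *ᵥ u) f = eval u f

def InvariantsAgree (A : ι → Matrix (Fin n) (Fin n) R) (d : ℕ) (x y : Fin n → R) : Prop :=
  ∀ f, IsMatrixInvariant A f → f.totalDegree ≤ d → eval x f = eval y f

theorem InvariantsAgree.symm {A : ι → Matrix (Fin n) (Fin n) R} {d : ℕ} {x y : Fin n → R}
    (h : InvariantsAgree A d x y) : InvariantsAgree A d y x :=
  fun f hf hd => (h f hf hd).symm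

end Invariants

section LinearForm

variable {R σ : Type*} [CommSemiring R] [Fintype σ]

noncomputable def linearForm (a : σ → R) : MvPolynomial σ R := ∑ j, C (a j) * X j

theorem eval_linearForm (a u : σ → R) : eval u (linearForm a) = a ⬝ᵥ u := by
  simp [linearForm, dotProduct]

theorem totalDegree_linearForm_le (a : σ → R) : (linearForm a).totalDegree ≤ 1 :=
  (IsHomogeneous.sum _ _ 1 fun j _ => isHomogeneous_C_mul_X (a j) j).totalDegree_le

end LinearForm

section Descent

variable {F K : Type*} [Field F] [Field K] [Algebra F K] {σ τ : Type*}

noncomputable def basisComponent (b : Module.Basis τ F K) (f : MvPolynomial σ K) (t : τ) :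
    MvPolynomial σ F :=
  ∑ m ∈ f.support, monomial m (b.repr (coeff m f) t)

theorem coeff_basisComponent (b : Module.Basis τ F K) (f : MvPolynomial σ K) (t : τ)
    (m : σ →₀ ℕ) : coeff m (basisComponent b f t) = b.repr (coeff m f) t := by
  classical
  simp only [basisComponent, coeff_sum, coeff_monomial, Finset.sum_ite_eq', mem_support_iff]
  split_ifs with h
  · rfl
  · simp [not_not.mp h]

theorem totalDegree_basisComponent_le (b : Module.Basis τ F K) (f : MvPolynomial σ K) (t : τ) :
    (basisComponent b f t).totalDegree ≤ f.totalDegree := by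
  refine Finset.sup_mono fun m hm => ?_
  rw [mem_support_iff, coeff_basisComponent] at hm
  rw [mem_support_iff]
  rintro h
  simp [h] at hm

theorem sum_C_mul_map_basisComponent [Fintype τ] (b : Module.Basis τ F K) (f : MvPolynomial σ K) :
    ∑ t, C (b t) * (basisComponent b f t).map (algebraMap F K) = f := by
  ext m
  simp only [coeff_sum, coeff_C_mul, coeff_map, coeff_basisComponent, mul_comm (b _),
    ← Algebra.smul_def]
  exact b.sum_repr (coeff m f)

theorem eval_algebraMap_eq_sum_basisComponent [Fintype τ] (b : Module.Basis τ F K)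
    (f : MvPolynomial σ K) (u : σ → F) :
    eval (algebraMap F K ∘ u) f = ∑ t, eval u (basisComponent b f t) • b t := by
  conv_lhs => rw [← sum_C_mul_map_basisComponent b f]
  simp [eval_map, ← eval₂_comp, Algebra.smul_def, mul_comm (b _)]

theorem map_mulVec_comp {R S : Type*} [CommSemiring R] [CommSemiring S] {n : ℕ} (f : R →+* S)
    (A : Matrix (Fin n) (Fin n) R) (u : Fin n → R) : A.map f *ᵥ (f ∘ u) = f ∘ (A *ᵥ u) :=
  funext fun i => (f.map_mulVec A u i).symm

theorem InvariantsAgree.map_algebraMap [FiniteDimensional F K] {ι : Type*} {n d : ℕ}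
    {A : ι → Matrix (Fin n) (Fin n) F} {v w : Fin n → F} (h : InvariantsAgree A d v w) :
    InvariantsAgree (fun i => (A i).map (algebraMap F K)) d (algebraMap F K ∘ v)
      (algebraMap F K ∘ w) := by
  intro (f : MvPolynomial (Fin n) K) hf hd
  set b := Module.finBasis F K
  have hcomp : ∀ t, IsMatrixInvariant A (basisComponent b f t) := by
    intro t i u
    have := congrArg (fun z => b.repr z t) (hf i (algebraMap F K ∘ u))
    simpa only [map_mulVec_comp, eval_algebraMap_eq_sum_basisComponent b,
      Module.Basis.repr_sum_self] using this
  rw [eval_algebraMap_eq_sum_basisComponent b, eval_algebraMap_eq_sum_basisComponent b]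
  exact Finset.sum_congr rfl fun t _ => by
    rw [h _ (hcomp t) ((totalDegree_basisComponent_le b f t).trans hd)]

end Descent

theorem sum_coe_apply_eq_ite {G K : Type*} [CommGroup G] [Fintype G] [DecidableEq G] [Field K]
    [HasEnoughRootsOfUnity K (Monoid.exponent G)] [Fintype (G →* Kˣ)] (h : G) :
    ∑ χ : G →* Kˣ, (χ h : K) = if h = 1 then (Fintype.card (G →* Kˣ) : K) else 0 := by
  split_ifs with h1
  · simp [h1]
  obtain ⟨χ, hχ⟩ := CommGroup.exists_apply_ne_one_of_hasEnoughRootsOfUnity G K h1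
  refine sum_hom_units_eq_zero ((Units.coeHom K).comp (MonoidHom.eval h)) fun h0 => hχ ?_
  exact Units.ext (DFunLike.congr_fun h0 χ)

section Isotypic

variable {G K : Type*} [CommGroup G] [Fintype G] [Field K] [Fintype (G →* Kˣ)] {n : ℕ}
  (N : G →* Matrix (Fin n) (Fin n) K)

-- Normalized by `|Ĝ|`, which equals `|G|` when `K` has enough roots of unity.
noncomputable def isotypicProj (χ : G →* Kˣ) : Matrix (Fin n) (Fin n) K :=
  (Fintype.card (G →* Kˣ) : K)⁻¹ • ∑ h, (χ h⁻¹ : K) • N h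

theorem isotypicProj_mul (χ : G →* Kˣ) (g : G) :
    isotypicProj N χ * N g = (χ g : K) • isotypicProj N χ := by
  unfold isotypicProj
  rw [Matrix.smul_mul, smul_comm (χ g : K)]
  congr 1
  rw [Finset.sum_mul, Finset.smul_sum]
  refine Fintype.sum_equiv (Equiv.mulRight g) (fun h => (χ h⁻¹ : K) • N h * N g)
    (fun h => (χ g : K) • (χ h⁻¹ : K) • N h) fun h => ?_
  simp only [Equiv.coe_mulRight]
  rw [Matrix.smul_mul, ← map_mul, smul_smul, ← Units.val_mul, ← map_mul, _root_.mul_inv_rev,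
    mul_inv_cancel_left]

theorem commute_isotypicProj (χ : G →* Kˣ) (g : G) : Commute (N g) (isotypicProj N χ) :=
  .smul_right (.sum_right _ _ _ fun h _ => .smul_right (by
    rw [Commute, SemiconjBy, ← map_mul, ← map_mul, mul_comm]) _) _

theorem isotypicProj_mulVec_mulVec (χ : G →* Kˣ) (g : G) (x : Fin n → K) :
    isotypicProj N χ *ᵥ (N g *ᵥ x) = (χ g : K) • (isotypicProj N χ *ᵥ x) := by
  rw [mulVec_mulVec, isotypicProj_mul, smul_mulVec]

theorem mulVec_isotypicProj_mulVec (χ : G →* Kˣ) (g : G) (x : Fin n → K) :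
    N g *ᵥ (isotypicProj N χ *ᵥ x) = (χ g : K) • (isotypicProj N χ *ᵥ x) := by
  rw [mulVec_mulVec, (commute_isotypicProj N χ g).eq, ← mulVec_mulVec, isotypicProj_mulVec_mulVec]

theorem sum_isotypicProj [HasEnoughRootsOfUnity K (Monoid.exponent G)]
    (hcard : (Fintype.card (G →* Kˣ) : K) ≠ 0) : ∑ χ, isotypicProj N χ = 1 := by
  classical
  simp only [isotypicProj, ← Finset.smul_sum]
  rw [Finset.sum_comm]
  simp only [← Finset.sum_smul, sum_coe_apply_eq_ite, ite_smul, zero_smul, inv_eq_one,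
    Finset.sum_ite_eq', Finset.mem_univ, if_true, map_one, smul_smul, inv_mul_cancel₀ hcard,
    one_smul]

def isotypicSupport (x : Fin n → K) : Set (G →* Kˣ) := {χ | isotypicProj N χ *ᵥ x ≠ 0}

end Isotypic

section Galois

variable {G F K : Type*} [CommGroup G] [Field F] [Field K] [Algebra F K] {n : ℕ}

variable (K) in
noncomputable def baseChange (ρ : G →* Matrix (Fin n) (Fin n) F) : G →* Matrix (Fin n) (Fin n) K :=
  (algebraMap F K).mapMatrix.toMonoidHom.comp ρ

theorem baseChange_apply (ρ : G →* Matrix (Fin n) (Fin n) F) (g : G) :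
    baseChange K ρ g = (ρ g).map (algebraMap F K) := rfl

variable [Fintype G] [Fintype (G →* Kˣ)]

theorem map_isotypicProj_baseChange (ρ : G →* Matrix (Fin n) (Fin n) F) (γ : K ≃ₐ[F] K)
    (χ : G →* Kˣ) :
    (isotypicProj (baseChange K ρ) χ).map γ = isotypicProj (baseChange K ρ) (galChar γ χ) := by
  ext i j
  simp [isotypicProj, baseChange_apply, galChar, Matrix.sum_apply, map_sum]

theorem galChar_mem_isotypicSupport (ρ : G →* Matrix (Fin n) (Fin n) F) (v : Fin n → F)
    (γ : K ≃ₐ[F] K) {χ : G →* Kˣ}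
    (hχ : χ ∈ isotypicSupport (baseChange K ρ) (algebraMap F K ∘ v)) :
    galChar γ χ ∈ isotypicSupport (baseChange K ρ) (algebraMap F K ∘ v) := by
  have hfix : (γ : K →+* K) ∘ (algebraMap F K ∘ v) = algebraMap F K ∘ v :=
    funext fun j => γ.commutes (v j)
  have key := map_mulVec_comp (γ : K →+* K) (isotypicProj (baseChange K ρ) χ) (algebraMap F K ∘ v)
  rw [hfix, RingHom.coe_coe, map_isotypicProj_baseChange] at key
  rw [isotypicSupport, Set.mem_ofPred_eq, key]
  intro h0
  exact hχ (funext fun j => γ.injective (by simpa using congrFun h0 j))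

end Galois

theorem Finsupp.prod_toMultiset_map {α M : Type*} [CommMonoid M] (m : α →₀ ℕ) (c : α → M) :
    (m.toMultiset.map c).prod = m.prod fun a k => c a ^ k := by
  classical
  rw [Finsupp.toMultiset_map, Finsupp.prod_toMultiset,
    Finsupp.prod_mapDomain_index pow_zero pow_add]

theorem linearCombination_natToZ {α M : Type*} [CommGroup M] (c : α → M) (m : α →₀ ℕ) :
    Finsupp.linearCombination ℤ (fun a => Additive.ofMul (c a)) (natToZ m) =
      Additive.ofMul (m.prod fun a k => c a ^ k) := by
  rw [Finsupp.linearCombination_apply, natToZ,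
    Finsupp.sum_mapRange_index fun a => zero_smul ℤ (Additive.ofMul (c a)), Finsupp.prod,
    Finsupp.sum, ofMul_prod]
  refine Finset.sum_congr rfl fun a _ => ?_
  rw [← ofMul_zpow, zpow_natCast]

section BlockMonoid

variable {α : Type*} [CommMonoid α]

/-- The block monoid `B(α)_I` of product-one sequences supported on `I` lies in the `ℤ`-span of
its elements of length at most `d`. -/
def SpannedByShortBlocks (I : Set α) (d : ℕ) : Prop :=
  ∀ s : α →₀ ℕ, s.prod (fun ψ k => ψ ^ k) = 1 → (∀ ψ, ψ ∉ I → s ψ = 0) →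
    natToZ s ∈ Submodule.span ℤ (natToZ '' {m : α →₀ ℕ | m.prod (fun ψ k => ψ ^ k) = 1 ∧
      (∀ ψ, ψ ∉ I → m ψ = 0) ∧ m.sum (fun _ k => k) ≤ d})

variable {I : Set α} {d : ℕ}

theorem SpannedByShortBlocks.prod_pow_eq_one {M : Type*} [CommGroup M]
    (hI : SpannedByShortBlocks I d) (c : α → M)
    (hshort : ∀ s : Multiset α, s.prod = 1 → Multiset.card s ≤ d → (∀ ψ ∈ s, ψ ∈ I) →
      (s.map c).prod = 1)
    {s : α →₀ ℕ} (hs : s.prod (fun ψ k => ψ ^ k) = 1) (hsI : ∀ ψ, ψ ∉ I → s ψ = 0) :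
    s.prod (fun ψ k => c ψ ^ k) = 1 := by
  set L := Finsupp.linearCombination ℤ (fun a => Additive.ofMul (c a))
  have hspan : Submodule.span ℤ (natToZ '' {m : α →₀ ℕ | m.prod (fun ψ k => ψ ^ k) = 1 ∧
      (∀ ψ, ψ ∉ I → m ψ = 0) ∧ m.sum (fun _ k => k) ≤ d}) ≤ LinearMap.ker L := by
    rw [Submodule.span_le]
    rintro _ ⟨m, ⟨hm1, hmI, hmd⟩, rfl⟩
    rw [SetLike.mem_coe, LinearMap.mem_ker, linearCombination_natToZ, ← Finsupp.prod_toMultiset_map,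
      hshort _ (by rwa [Finsupp.prod_toMultiset]) (by rwa [Finsupp.card_toMultiset])]
    · rfl
    intro ψ hψ
    by_contra hψI
    exact (Finsupp.mem_support_iff.mp ((Finsupp.mem_toMultiset m ψ).mp hψ)) (hmI ψ hψI)
  have := hspan (hI s hs hsI)
  rwa [LinearMap.mem_ker, linearCombination_natToZ, ofMul_eq_zero] at this

theorem SpannedByShortBlocks.exists_multiset (hI : SpannedByShortBlocks I d) {χ : α}
    (hχI : χ ∈ I) (hχ : IsOfFinOrder χ) :
    ∃ s : Multiset α, χ ∈ s ∧ s.prod = 1 ∧ Multiset.card s ≤ d ∧ ∀ ψ ∈ s, ψ ∈ I := by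
  classical
  by_contra hnone
  let c : α → Multiplicative ℤ := fun ψ => if ψ = χ then Multiplicative.ofAdd 1 else 1
  have hsingle := hI.prod_pow_eq_one c
    (fun s hs1 hsd hsI => Multiset.prod_eq_one fun z hz => by
      obtain ⟨ψ, hψ, rfl⟩ := Multiset.mem_map.mp hz
      have : ψ ≠ χ := fun h => hnone ⟨s, h ▸ hψ, hs1, hsd, hsI⟩
      simp [c, this])
    (s := Finsupp.single χ (orderOf χ)) (by simp [pow_orderOf_eq_one])
    (fun ψ hψ => Finsupp.single_eq_of_ne (fun h => hψ (h ▸ hχI)))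
  simp [c, ← ofAdd_nsmul, hχ.orderOf_pos.ne'] at hsingle

end BlockMonoid

theorem Finsupp.prod_pow_sum_single {ι α N : Type*} [CommMonoid N] (s : Finset ι) (f : ι → α)
    (a : ι → ℕ) (g : α → N) :
    (∑ i ∈ s, Finsupp.single (f i) (a i)).prod (fun x k => g x ^ k) = ∏ i ∈ s, g (f i) ^ a i := by
  rw [← Finsupp.prod_finsetSum_index (h := fun x k => g x ^ k) (fun _ => pow_zero _)
    fun _ => pow_add _]
  exact Finset.prod_congr rfl fun i _ => Finsupp.prod_single_index (pow_zero _)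

theorem MonoidHom.exists_apply_eq_pow_of_isCyclic {M : Type*} [Group M] {H : Subgroup M}
    [IsCyclic H] [Finite H] (ξ : H →* M) (hξ : ∀ z, ξ z ∈ H) :
    ∃ a : ℕ, ∀ z : H, ξ z = (z : M) ^ a := by
  obtain ⟨m, hm⟩ := (ξ.codRestrict H hξ).map_cyclic
  have hm_nonneg : 0 ≤ m % Nat.card H := Int.emod_nonneg _ (by exact_mod_cast Nat.card_pos.ne')
  refine ⟨(m % Nat.card H).toNat, fun z => ?_⟩
  rw [← zpow_natCast, Int.toNat_of_nonneg hm_nonneg, ← Subgroup.coe_zpow, zpow_mod_natCard, ← hm]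
  rfl

theorem MonoidHom.exists_eq_prod_pow {ι M : Type*} [Fintype ι] [DecidableEq ι] [CommGroup M]
    {H : Subgroup M} [IsCyclic H] [Finite H] (ξ : (ι → H) →* M) (hξ : ∀ u, ξ u ∈ H) :
    ∃ a : ι → ℕ, ∀ u, ξ u = ∏ i, (u i : M) ^ a i := by
  choose a ha using fun i =>
    (ξ.comp (MonoidHom.mulSingle _ i)).exists_apply_eq_pow_of_isCyclic fun _ => hξ _
  refine ⟨a, fun u => ?_⟩
  conv_lhs => rw [← Finset.univ_prod_mulSingle u, map_prod]
  exact Finset.prod_congr rfl fun i _ => ha i (u i)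

theorem prod_pow_eq_one_of_forall_apply {G M : Type*} [CommGroup G] [CommMonoid M]
    {I : Set (G →* Mˣ)} [Fintype I] {c : (G →* Mˣ) → Mˣ}
    (hc : ∀ s : (G →* Mˣ) →₀ ℕ, s.prod (fun ψ k => ψ ^ k) = 1 → (∀ ψ, ψ ∉ I → s ψ = 0) →
      s.prod (fun ψ k => c ψ ^ k) = 1)
    (a : I → ℕ) (ha : ∀ g, ∏ ψ : I, ψ.1 g ^ a ψ = 1) : ∏ ψ : I, c ψ ^ a ψ = 1 := by
  let s : (G →* Mˣ) →₀ ℕ := ∑ ψ : I, Finsupp.single ψ.1 (a ψ)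
  have hs : s.prod (fun ψ k => ψ ^ k) = 1 := by
    rw [Finsupp.prod_pow_sum_single]
    ext g
    simpa [MonoidHom.finsetProd_apply] using congrArg Units.val (ha g)
  have hsI (ψ : G →* Mˣ) (hψ : ψ ∉ I) : s ψ = 0 := by
    simp only [s, Finsupp.finsetSum_apply]
    exact Finset.sum_eq_zero fun φ _ => Finsupp.single_eq_of_ne fun h => hψ (h ▸ φ.2)
  simpa only [s, Finsupp.prod_pow_sum_single] using hc s hs hsI

theorem exists_apply_eq_of_prod_pow_eq_one {G M : Type*} [CommGroup G] [Finite G] [CommMonoid M]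
    [HasEnoughRootsOfUnity M (Monoid.exponent G)] (I : Set (G →* Mˣ)) (c : (G →* Mˣ) → Mˣ)
    (hc : ∀ s : (G →* Mˣ) →₀ ℕ, s.prod (fun ψ k => ψ ^ k) = 1 → (∀ ψ, ψ ∉ I → s ψ = 0) →
      s.prod (fun ψ k => c ψ ^ k) = 1) :
    ∃ g : G, ∀ ψ ∈ I, ψ g = c ψ := by
  classical
  have : NeZero (Monoid.exponent G) := ⟨Monoid.exponent_ne_zero_of_finite⟩
  set μ := rootsOfUnity (Monoid.exponent G) M
  have hμ (ψ : G →* Mˣ) (g : G) : ψ g ∈ μ := by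
    rw [mem_rootsOfUnity, ← map_pow, Monoid.pow_exponent_eq_one, map_one]
  have hcμ (ψ : G →* Mˣ) (hψ : ψ ∈ I) : c ψ ∈ μ := by
    have hψe : ψ ^ Monoid.exponent G = 1 :=
      MonoidHom.ext fun g => (mem_rootsOfUnity _ _).mp (hμ ψ g)
    have := hc (Finsupp.single ψ (Monoid.exponent G)) (by simpa using hψe)
      (fun φ hφ => Finsupp.single_eq_of_ne fun h => hφ (h ▸ hψ))
    exact (mem_rootsOfUnity _ _).mpr (by simpa using this)
  let Φ : G →* (I → μ) := MonoidHom.pi fun ψ => (ψ.1).codRestrict μ (hμ ψ.1)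
  let t : I → μ := fun ψ => ⟨c ψ, hcμ ψ ψ.2⟩
  suffices ht : t ∈ Φ.range by
    obtain ⟨g, hg⟩ := ht
    exact ⟨g, fun ψ hψ => congrArg Subtype.val (congrFun hg ⟨ψ, hψ⟩)⟩
  have : Fintype I := Fintype.ofFinite I
  have hu (u : I → μ) : u ^ Monoid.exponent G = 1 :=
    funext fun ψ => Subtype.ext ((mem_rootsOfUnity _ _).mp (u ψ).2)
  have : HasEnoughRootsOfUnity M (Monoid.exponent (I → μ)) :=
    .of_dvd M (Monoid.exponent_dvd_of_forall_pow_eq_one hu)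
  -- A character of `I → μ` that is trivial on the image of `G` is a relation among the `ψ ∈ I`.
  rw [← CommGroup.forall_monoidHom_apply_eq_one_iff M]
  intro ξ hξ
  obtain ⟨a, ha⟩ := ξ.exists_eq_prod_pow (H := μ) fun u => by
    rw [mem_rootsOfUnity, ← map_pow, hu, map_one]
  rw [ha]
  exact prod_pow_eq_one_of_forall_apply hc a fun g => by simpa [ha, Φ] using hξ (Φ g) ⟨g, rfl⟩

theorem exists_forall_apply_ne_zero {α β M : Type*} [Zero M] [Nonempty β] (f : α → β → M) :
    ∃ i : α → β, ∀ a, f a ≠ 0 → f a (i a) ≠ 0 := by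
  choose! i hi using fun a (ha : f a ≠ 0) => Function.ne_iff.mp ha
  exact ⟨i, hi⟩

section Core

variable {G K : Type*} [CommGroup G] [Fintype G] [Field K] [Fintype (G →* Kˣ)] {n d : ℕ}
  (N : G →* Matrix (Fin n) (Fin n) K) {x y : Fin n → K}

theorem InvariantsAgree.prod_isotypicCoords_eq (hxy : InvariantsAgree N d x y)
    (s : Multiset ((G →* Kˣ) × Fin n)) (hs : (s.map Prod.fst).prod = 1)
    (hsd : Multiset.card s ≤ d) :
    (s.map fun p => (isotypicProj N p.1 *ᵥ x) p.2).prod =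
      (s.map fun p => (isotypicProj N p.1 *ᵥ y) p.2).prod := by
  -- `g` scales each factor by `p.1 g`, and these scalars multiply to `1`.
  set f := (s.map fun p => linearForm (isotypicProj N p.1 p.2)).prod
  have heval (u : Fin n → K) :
      eval u f = (s.map fun p => (isotypicProj N p.1 *ᵥ u) p.2).prod := by
    simp only [f, map_multiset_prod, Multiset.map_map, Function.comp_def, eval_linearForm]
    rfl
  have hchar (g : G) : (s.map fun p => (p.1 g : K)).prod = 1 := by
    have := congrArg ((Units.coeHom K).comp (MonoidHom.eval g)) hs
    rwa [map_multiset_prod, map_one, Multiset.map_map] at this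
  have hinv : IsMatrixInvariant N f := by
    intro g u
    simp only [heval, isotypicProj_mulVec_mulVec, Pi.smul_apply, smul_eq_mul,
      Multiset.prod_map_mul, hchar, one_mul]
  have hdeg : f.totalDegree ≤ d := by
    refine (totalDegree_multiset_prod _).trans ((Multiset.sum_le_card_nsmul _ 1 ?_).trans ?_)
    · simp only [Multiset.map_map, Function.comp_def, Multiset.mem_map]
      rintro _ ⟨p, -, rfl⟩
      exact totalDegree_linearForm_le _
    · simpa using hsd
  rw [← heval, ← heval]
  exact hxy f hinv hdeg

theorem exists_isotypicProj_mulVec_eq_smul_of_mem (hxy : InvariantsAgree N d x y)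
    {χ : G →* Kˣ} {s : Multiset (G →* Kˣ)} (hχs : χ ∈ s) (hs : s.prod = 1)
    (hsd : Multiset.card s ≤ d) (hsx : ∀ ψ ∈ s, ψ ∈ isotypicSupport N x) :
    ∃ c : Kˣ, isotypicProj N χ *ᵥ y = (c : K) • isotypicProj N χ *ᵥ x := by
  obtain ⟨r₀, -⟩ := Function.ne_iff.mp (hsx χ hχs)
  have : Nonempty (Fin n) := ⟨r₀⟩
  obtain ⟨i, hi⟩ := exists_forall_apply_ne_zero fun ψ => isotypicProj N ψ *ᵥ x
  obtain ⟨t, rfl⟩ := Multiset.exists_cons_of_mem hχs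
  -- Evaluate the invariants `(E_χ ·)_r * ∏_{ψ ∈ t} (E_ψ ·)_{i ψ}` at `x` and `y`, for all `r`.
  set Px := (t.map fun ψ => (isotypicProj N ψ *ᵥ x) (i ψ)).prod
  set Py := (t.map fun ψ => (isotypicProj N ψ *ᵥ y) (i ψ)).prod
  have key (r : Fin n) : (isotypicProj N χ *ᵥ x) r * Px = (isotypicProj N χ *ᵥ y) r * Py := by
    simpa [Multiset.map_map, Function.comp_def] using
      InvariantsAgree.prod_isotypicCoords_eq N hxy ((χ, r) ::ₘ t.map fun ψ => (ψ, i ψ))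
        (by simpa [Multiset.map_map, Function.comp_def] using hs) (by simpa using hsd)
  have hPx : Px ≠ 0 := Multiset.prod_ne_zero fun h0 => by
    obtain ⟨ψ, hψ, h⟩ := Multiset.mem_map.mp h0
    exact hi ψ (hsx ψ (Multiset.mem_cons_of_mem hψ)) h
  have hχx := hi χ (hsx χ (Multiset.mem_cons_self χ t))
  have hPy : Py ≠ 0 := fun h0 => mul_ne_zero hχx hPx (by rw [key, h0, mul_zero])
  refine ⟨Units.mk0 (Px / Py) (div_ne_zero hPx hPy), funext fun r => ?_⟩
  rw [Pi.smul_apply, smul_eq_mul, Units.val_mk0, div_mul_eq_mul_div, eq_div_iff hPy, mul_comm Px,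
    key]

theorem exists_isotypicProj_mulVec_eq_smul (hx : SpannedByShortBlocks (isotypicSupport N x) d)
    (hy : SpannedByShortBlocks (isotypicSupport N y) d) (hxy : InvariantsAgree N d x y)
    (χ : G →* Kˣ) : ∃ c : Kˣ, isotypicProj N χ *ᵥ y = (c : K) • isotypicProj N χ *ᵥ x := by
  by_cases hχx : χ ∈ isotypicSupport N x
  · obtain ⟨s, hχs, hs, hsd, hsx⟩ := hx.exists_multiset hχx (isOfFinOrder_of_finite χ)
    exact exists_isotypicProj_mulVec_eq_smul_of_mem N hxy hχs hs hsd hsx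
  by_cases hχy : χ ∈ isotypicSupport N y
  · obtain ⟨s, hχs, hs, hsd, hsy⟩ := hy.exists_multiset hχy (isOfFinOrder_of_finite χ)
    obtain ⟨c, hc⟩ := exists_isotypicProj_mulVec_eq_smul_of_mem N hxy.symm hχs hs hsd hsy
    refine absurd ?_ hχx
    change isotypicProj N χ *ᵥ x ≠ 0
    rw [hc]
    exact smul_ne_zero c.ne_zero hχy
  refine ⟨1, ?_⟩
  rw [isotypicSupport, Set.mem_ofPred_eq, not_not] at hχx hχy
  rw [hχx, hχy, smul_zero]

theorem prod_map_eq_one_of_isotypicProj_mulVec_eq_smul (hxy : InvariantsAgree N d x y)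
    (c : (G →* Kˣ) → Kˣ) (hc : ∀ χ, isotypicProj N χ *ᵥ y = (c χ : K) • isotypicProj N χ *ᵥ x)
    {s : Multiset (G →* Kˣ)} (hs : s.prod = 1) (hsd : Multiset.card s ≤ d)
    (hsx : ∀ ψ ∈ s, ψ ∈ isotypicSupport N x) : (s.map c).prod = 1 := by
  rcases s.empty_or_exists_mem with rfl | ⟨ψ₀, hψ₀⟩
  · simp
  obtain ⟨r₀, -⟩ := Function.ne_iff.mp (hsx ψ₀ hψ₀)
  have : Nonempty (Fin n) := ⟨r₀⟩
  obtain ⟨i, hi⟩ := exists_forall_apply_ne_zero fun ψ => isotypicProj N ψ *ᵥ x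
  have key := InvariantsAgree.prod_isotypicCoords_eq N hxy (s.map fun ψ => (ψ, i ψ))
    (by simpa [Multiset.map_map, Function.comp_def] using hs) (by simpa using hsd)
  simp only [Multiset.map_map, Function.comp_def, hc, Pi.smul_apply, smul_eq_mul,
    Multiset.prod_map_mul] at key
  have hPx : (s.map fun ψ => (isotypicProj N ψ *ᵥ x) (i ψ)).prod ≠ 0 :=
    Multiset.prod_ne_zero fun h0 => by
      obtain ⟨ψ, hψ, h⟩ := Multiset.mem_map.mp h0
      exact hi ψ (hsx ψ hψ) h
  refine Units.ext ?_
  rw [Units.val_one, ← Units.coeHom_apply, map_multiset_prod, Multiset.map_map]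
  exact (mul_eq_right₀ hPx).mp key.symm

theorem exists_mulVec_eq_of_invariantsAgree [HasEnoughRootsOfUnity K (Monoid.exponent G)]
    (hcard : (Fintype.card (G →* Kˣ) : K) ≠ 0)
    (hx : SpannedByShortBlocks (isotypicSupport N x) d)
    (hy : SpannedByShortBlocks (isotypicSupport N y) d) (hxy : InvariantsAgree N d x y) :
    ∃ g : G, N g *ᵥ x = y := by
  choose c hc using exists_isotypicProj_mulVec_eq_smul N hx hy hxy
  obtain ⟨g, hg⟩ := exists_apply_eq_of_prod_pow_eq_one (isotypicSupport N x) c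
    fun s hs hsx => hx.prod_pow_eq_one c
      (fun _ => prod_map_eq_one_of_isotypicProj_mulVec_eq_smul N hxy c hc) hs hsx
  have hcomp (χ : G →* Kˣ) : N g *ᵥ (isotypicProj N χ *ᵥ x) = isotypicProj N χ *ᵥ y := by
    rw [mulVec_isotypicProj_mulVec, hc χ]
    by_cases hχ : χ ∈ isotypicSupport N x
    · rw [hg χ hχ]
    · rw [isotypicSupport, Set.mem_ofPred_eq, not_not] at hχ
      rw [hχ, smul_zero, smul_zero]
  refine ⟨g, ?_⟩
  calc N g *ᵥ x = N g *ᵥ ((∑ χ, isotypicProj N χ) *ᵥ x) := by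
        rw [sum_isotypicProj N hcard, one_mulVec]
    _ = (∑ χ, isotypicProj N χ) *ᵥ y := by
        simp only [sum_mulVec, mulVec_sum, hcomp]
    _ = y := by rw [sum_isotypicProj N hcard, one_mulVec]

end Core

theorem finiteDimensional_of_adjoin_simple_eq_top {F K : Type*} [Field F] [Field K] [Algebra F K]
    {ω : K} (hK : IntermediateField.adjoin F {ω} = ⊤) (hω : IsIntegral F ω) :
    FiniteDimensional F K := by
  have := IntermediateField.adjoin.finiteDimensional hω
  rw [hK] at this
  exact IntermediateField.topEquiv.toLinearEquiv.finiteDimensional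

theorem sepNoetherNumber_le_of_block_monoid_condition_general
    {G : Type*} [CommGroup G] [Fintype G]
    {F K : Type*} [Field F] [Field K] [Algebra F K]
    (hchar : (Fintype.card G : F) ≠ 0)
    (ω : K) (hω : orderOf ω = Monoid.exponent G)
    (hK : IntermediateField.adjoin F {ω} = ⊤)
    (d : ℕ)
    (hcond : ∀ I : Set (G →* Kˣ),
      (∀ (γ : K ≃ₐ[F] K) (ψ : G →* Kˣ), ψ ∈ I → galChar γ ψ ∈ I) →
      ∀ s : (G →* Kˣ) →₀ ℕ, s.prod (fun ψ k => ψ ^ k) = 1 →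
        (∀ ψ : G →* Kˣ, ψ ∉ I → s ψ = 0) →
        natToZ s ∈ Submodule.span ℤ
          (natToZ '' {m : (G →* Kˣ) →₀ ℕ | m.prod (fun ψ k => ψ ^ k) = 1 ∧
            (∀ ψ : G →* Kˣ, ψ ∉ I → m ψ = 0) ∧ m.sum (fun _ k => k) ≤ d})) :
    ∀ (n : ℕ) (ρ : G →* Matrix (Fin n) (Fin n) F) (v w : Fin n → F),
      (¬ ∃ g : G, (ρ g).mulVec v = w) →
      ∃ f : MvPolynomial (Fin n) F,
        (∀ (g : G) (u : Fin n → F), eval ((ρ g).mulVec u) f = eval u f) ∧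
        f.totalDegree ≤ d ∧ eval v f ≠ eval w f := by
  intro n ρ v w hvw
  by_contra! hagree
  have hprim : IsPrimitiveRoot ω (Monoid.exponent G) := hω ▸ IsPrimitiveRoot.orderOf ω
  have : NeZero (Monoid.exponent G) := ⟨Monoid.exponent_ne_zero_of_finite⟩
  have : HasEnoughRootsOfUnity K (Monoid.exponent G) := ⟨⟨ω, hprim⟩, inferInstance⟩
  have : FiniteDimensional F K := finiteDimensional_of_adjoin_simple_eq_top hK
    (hprim.isIntegral (Nat.pos_of_neZero _)).tower_top
  have := Fintype.ofFinite (G →* Kˣ)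
  have hcard : (Fintype.card (G →* Kˣ) : K) ≠ 0 := by
    rw [Fintype.card_eq_nat_card, CommGroup.card_monoidHom_of_hasEnoughRootsOfUnity,
      Nat.card_eq_fintype_card, ← map_natCast (algebraMap F K)]
    exact (map_ne_zero _).mpr hchar
  obtain ⟨g, hg⟩ := exists_mulVec_eq_of_invariantsAgree (baseChange K ρ) hcard
    (hcond _ fun γ _ => galChar_mem_isotypicSupport ρ v γ)
    (hcond _ fun γ _ => galChar_mem_isotypicSupport ρ w γ)
    (InvariantsAgree.map_algebraMap (A := ⇑ρ) hagree)
  refine hvw ⟨g, (algebraMap F K).injective.comp_left ?_⟩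
  change algebraMap F K ∘ (ρ g *ᵥ v) = algebraMap F K ∘ w
  rw [← map_mulVec_comp, ← hg]
  rfl

/-- Degree bound for separating invariants over a non-closed field: if for every
`Γ`-stable subset `I` of `Ĝ` the block monoid `B(Ĝ)_I` lies in the `ℤ`-span of its
elements of length at most `d`, then for every finite dimensional `F`-representation of
`G`, invariants of degree at most `d` separate the orbits, i.e. `β_sep^F(G) ≤ d`. -/
theorem sepNoetherNumber_le_of_block_monoid_condition
    {G : Type*} [CommGroup G] [Fintype G]
    {F K : Type*} [Field F] [Field K] [Algebra F K]
    (hchar : (Fintype.card G : F) ≠ 0)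
    (ω : K) (hω : orderOf ω = Monoid.exponent G)
    (hK : IntermediateField.adjoin F {ω} = ⊤)
    (d : ℕ) (hd : 0 < d)
    (hcond : ∀ I : Set (G →* Kˣ),
      (∀ (γ : K ≃ₐ[F] K) (ψ : G →* Kˣ), ψ ∈ I → galChar γ ψ ∈ I) →
      ∀ s : (G →* Kˣ) →₀ ℕ, s.prod (fun ψ k => ψ ^ k) = 1 →
        (∀ ψ : G →* Kˣ, ψ ∉ I → s ψ = 0) →
        natToZ s ∈ Submodule.span ℤ
          (natToZ '' {m : (G →* Kˣ) →₀ ℕ | m.prod (fun ψ k => ψ ^ k) = 1 ∧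
            (∀ ψ : G →* Kˣ, ψ ∉ I → m ψ = 0) ∧ m.sum (fun _ k => k) ≤ d})) :
    ∀ (n : ℕ) (ρ : G →* Matrix (Fin n) (Fin n) F) (v w : Fin n → F),
      (¬ ∃ g : G, (ρ g).mulVec v = w) →
      ∃ f : MvPolynomial (Fin n) F,
        (∀ (g : G) (u : Fin n → F), eval ((ρ g).mulVec u) f = eval u f) ∧
        f.totalDegree ≤ d ∧ eval v f ≠ eval w f :=
  sepNoetherNumber_le_of_block_monoid_condition_general hchar ω hω hK d hcond
end

section
/- In the regular representation of C_p (p an odd prime) on ℚ^p by cyclic coordinate shifts, the vectors v = δ_1 − δ_g and −v (where g is a generator) lie in distinct C_p-orbits, and every C_p-invariant polynomial of degree at most 2 takes the same value on v and −v; they are separated by the degree 3 orbit-sum invariant Σ_{h} x_h² x_{gh}. -/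
open MvPolynomial

/-- In the regular representation of `C_p` (`p` an odd prime) on `ℚ^p` by cyclic shifts,
the vector `v = δ_0 - δ_g` (for a generator `g`) and its negative `-v` lie in distinct
orbits, all invariants of degree at most 2 agree on `v` and `-v`, and the degree 3
orbit-sum invariant `Σ_h x_h² x_{g+h}` separates them. -/
theorem deg_two_invariants_insufficient_for_Cp
    (p : ℕ) [NeZero p] (hp : p.Prime) (hodd : Odd p)
    (g : ZMod p) (hg : ∀ x : ZMod p, ∃ n : ℕ, x = n • g)
    (v : ZMod p → ℚ)
    (hv : v = fun h => if h = 0 then 1 else if h = g then -1 else 0) :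
    (¬ ∃ k : ZMod p, (fun x => v (x - k)) = -v) ∧
    (∀ f : MvPolynomial (ZMod p) ℚ,
      (∀ (k : ZMod p) (u : ZMod p → ℚ), eval (fun x => u (x - k)) f = eval u f) →
      f.totalDegree ≤ 2 → eval v f = eval (-v) f) ∧
    ((∀ (k : ZMod p) (u : ZMod p → ℚ),
        eval (fun x => u (x - k)) (∑ h : ZMod p, X h ^ 2 * X (g + h)) =
          eval u (∑ h : ZMod p, X h ^ 2 * X (g + h))) ∧
      (∑ h : ZMod p, X h ^ 2 * X (g + h) : MvPolynomial (ZMod p) ℚ).totalDegree ≤ 3 ∧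
      eval v (∑ h : ZMod p, X h ^ 2 * X (g + h)) ≠ eval (-v) (∑ h : ZMod p, X h ^ 2 * X (g + h))) := by
  haveI : Fact p.Prime := ⟨hp⟩
  haveI : Fact (1 < p) := ⟨hp.one_lt⟩
  -- basic facts
  have hg0 : g ≠ 0 := by
    intro h
    obtain ⟨n, hn⟩ := hg 1
    rw [h, smul_zero] at hn
    exact one_ne_zero hn
  have h2g : g + g ≠ 0 := by
    intro h
    have h2 : (2 : ZMod p) * g = 0 := by rw [two_mul]; exact h
    rcases mul_eq_zero.mp h2 with h2' | h2'
    · have : ((2 : ℕ) : ZMod p) = 0 := by exact_mod_cast h2'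
      have hdvd : p ∣ 2 := (ZMod.natCast_eq_zero_iff 2 p).mp this
      have : p = 2 := by
        have h1 := Nat.le_of_dvd (by norm_num) hdvd
        have h2 := hp.two_le
        omega
      rw [this] at hodd
      exact (by decide : ¬ Odd 2) hodd
    · exact hg0 h2'
  have h2g' : g + g ≠ g := by
    intro h
    exact hg0 (add_eq_right.mp h)
  have hv0 : v 0 = 1 := by rw [hv]; simp
  have hvg : v g = -1 := by rw [hv]; simp [hg0]
  have hvother : ∀ i : ZMod p, i ≠ 0 → i ≠ g → v i = 0 := by
    intro i h1 h2; rw [hv]; simp [h1, h2]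
  constructor
  · -- part 1: no shift maps v to -v
    rintro ⟨k, hk⟩
    have h1 := congrFun hk 0
    have h2 := congrFun hk g
    simp only [Pi.neg_apply, hv0, hvg, zero_sub] at h1 h2
    -- h1 : v (-k) = -1, so -k = g
    have hk' : -k = g := by
      by_contra hne
      by_cases hz : -k = 0
      · rw [hz, hv0] at h1; norm_num at h1
      · rw [hvother _ hz hne] at h1; norm_num at h1
    have hgg : g - k = g + g := by rw [← hk']; ring
    rw [hgg] at h2
    -- h2 : v (g + g) = 1, but v (g+g) = 0
    rw [hvother _ h2g h2g'] at h2
    norm_num at h2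
  constructor
  · -- part 2: invariants of degree ≤ 2 agree on v and -v
    intro f hfinv hdeg
    have hren : rename (fun x : ZMod p => x - g) f = f := by
      apply MvPolynomial.funext
      intro u
      rw [eval_rename]
      exact hfinv g u
    have hcoeff : coeff (Finsupp.single 0 1) f = coeff (Finsupp.single g 1) f := by
      have hinj : Function.Injective (fun x : ZMod p => x - g) := fun a b hab => by
        simpa using sub_left_injective hab
      have h := coeff_rename_mapDomain (fun x : ZMod p => x - g) hinj f (Finsupp.single g 1)
      rw [hren, Finsupp.mapDomain_single, sub_self] at h
      exact h
    set d0 : (ZMod p) →₀ ℕ := Finsupp.single (0 : ZMod p) 1 with hd0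
    set d1 : (ZMod p) →₀ ℕ := Finsupp.single g 1 with hd1
    have hd01 : d0 ≠ d1 := by
      intro h
      have := DFunLike.congr_fun h 0
      simp only [hd0, hd1, Finsupp.single_eq_same, Finsupp.single_apply] at this
      rw [if_neg hg0] at this
      exact one_ne_zero this
    rw [← sub_eq_zero, eval_eq, eval_eq, ← Finset.sum_sub_distrib]
    set F : ((ZMod p) →₀ ℕ) → ℚ := fun d =>
      coeff d f * ∏ i ∈ d.support, v i ^ d i - coeff d f * ∏ i ∈ d.support, (-v) i ^ d i
      with hF
    show ∑ d ∈ f.support, F d = 0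
    have hprodneg : ∀ d : (ZMod p) →₀ ℕ,
        ∏ i ∈ d.support, (-v) i ^ d i =
          (-1 : ℚ) ^ (d.sum fun _ n => n) * ∏ i ∈ d.support, v i ^ d i := by
      intro d
      rw [Finsupp.sum, ← Finset.prod_pow_eq_pow_sum, ← Finset.prod_mul_distrib]
      apply Finset.prod_congr rfl
      intro i _
      rw [Pi.neg_apply, neg_pow]
    have key : ∀ d ∈ f.support, d ≠ d0 → d ≠ d1 → F d = 0 := by
      intro d hd hne0 hne1
      have hdeg2 : (d.sum fun _ n => n) ≤ 2 := le_trans (le_totalDegree hd) hdeg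
      simp only [hF]
      by_cases hev : Even (d.sum fun _ n => n)
      · rw [hprodneg d, hev.neg_one_pow, one_mul, sub_self]
      · -- odd degree ≤ 2 means degree 1
        rw [Nat.not_even_iff_odd] at hev
        have hdeg1 : (d.sum fun _ n => n) = 1 := by
          obtain ⟨m, hm⟩ := hev; omega
        by_cases hz : ∃ i ∈ d.support, v i = 0
        · obtain ⟨i, hi, hvi⟩ := hz
          have h1 : ∏ j ∈ d.support, v j ^ d j = 0 := by
            apply Finset.prod_eq_zero hi
            rw [hvi, zero_pow (Finsupp.mem_support_iff.mp hi)]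
          have h2 : ∏ j ∈ d.support, (-v) j ^ d j = 0 := by
            apply Finset.prod_eq_zero hi
            rw [Pi.neg_apply, hvi, neg_zero, zero_pow (Finsupp.mem_support_iff.mp hi)]
          rw [h1, h2, mul_zero, sub_self]
        · push_neg at hz
          have hsub : d.support ⊆ {0, g} := by
            intro i hi
            simp only [Finset.mem_insert, Finset.mem_singleton]
            by_contra hc
            push_neg at hc
            exact hz i hi (hvother i hc.1 hc.2)
          have hsum : d 0 + d g = 1 := by
            have : (d.sum fun _ n => n) = ∑ i ∈ ({0, g} : Finset (ZMod p)), d i := by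
              rw [Finsupp.sum]
              apply Finset.sum_subset hsub
              intro i _ hi
              exact Finsupp.notMem_support_iff.mp hi
            rw [this, Finset.sum_pair hg0.symm] at hdeg1
            exact hdeg1
          have hdout : ∀ i : ZMod p, i ≠ 0 → i ≠ g → d i = 0 := by
            intro i h1 h2
            by_contra hc
            have := hsub (Finsupp.mem_support_iff.mpr hc)
            simp [h1, h2] at this
          rcases Nat.le_one_iff_eq_zero_or_eq_one.mp (by omega : d 0 ≤ 1) with h00 | h01
          · -- d 0 = 0, d g = 1, so d = d1
            exfalso; apply hne1
            ext i
            rw [hd1, Finsupp.single_apply]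
            by_cases hig : i = g
            · subst hig; rw [if_pos rfl]; omega
            · by_cases hi0 : i = 0
              · subst hi0; rw [h00, if_neg hg0]
              · rw [hdout i hi0 hig, if_neg (fun h => hig h.symm)]
          · -- d 0 = 1, so d = d0
            exfalso; apply hne0
            ext i
            rw [hd0, Finsupp.single_apply]
            by_cases hi0 : i = 0
            · subst hi0; rw [if_pos rfl]; exact h01
            · by_cases hig : i = g
              · subst hig; rw [if_neg (fun h => hg0 h.symm)]; omega
              · rw [hdout i hi0 hig, if_neg (fun h => hi0 h.symm)]
    have hstep1 : ∑ d ∈ f.support, F d =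
        ∑ d ∈ f.support.filter (· ∈ ({d0, d1} : Finset ((ZMod p) →₀ ℕ))), F d := by
      symm
      apply Finset.sum_filter_of_ne
      intro d hd hFd
      simp only [Finset.mem_insert, Finset.mem_singleton]
      by_contra hc
      push_neg at hc
      exact hFd (key d hd hc.1 hc.2)
    have hstep2 : ∑ d ∈ f.support.filter (· ∈ ({d0, d1} : Finset ((ZMod p) →₀ ℕ))), F d =
        ∑ d ∈ ({d0, d1} : Finset ((ZMod p) →₀ ℕ)), F d := by
      apply Finset.sum_subset
      · intro d hd
        exact (Finset.mem_filter.mp hd).2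
      · intro d hd hdf
        have hdns : d ∉ f.support := by
          intro hs
          exact hdf (Finset.mem_filter.mpr ⟨hs, hd⟩)
        have hc0 : coeff d f = 0 := notMem_support_iff.mp hdns
        simp only [hF, hc0, zero_mul, sub_self]
    rw [hstep1, hstep2, Finset.sum_pair hd01]
    have hF0 : F d0 = 2 * coeff d0 f := by
      simp only [hF, hd0, Finsupp.support_single_ne_zero _ one_ne_zero,
        Finset.prod_singleton, Finsupp.single_eq_same, pow_one, Pi.neg_apply, hv0]
      ring
    have hF1 : F d1 = -2 * coeff d1 f := by
      simp only [hF, hd1, Finsupp.support_single_ne_zero _ one_ne_zero,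
        Finset.prod_singleton, Finsupp.single_eq_same, pow_one, Pi.neg_apply, hvg]
      ring
    rw [hF0, hF1, hcoeff]
    ring
  refine ⟨?_, ?_, ?_⟩
  · -- invariance of the cubic
    intro k u
    rw [map_sum, map_sum]
    simp only [map_mul, map_pow, eval_X]
    apply Fintype.sum_equiv (Equiv.subRight k)
    intro h
    simp only [Equiv.subRight_apply]
    have hgh : g + h - k = g + (h - k) := by ring
    rw [hgh]
  · -- total degree ≤ 3
    apply totalDegree_finsetSum_le
    intro h _
    calc (X h ^ 2 * X (g + h) : MvPolynomial (ZMod p) ℚ).totalDegree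
        ≤ (X h ^ 2 : MvPolynomial (ZMod p) ℚ).totalDegree + (X (g + h)).totalDegree :=
          totalDegree_mul _ _
      _ ≤ 3 := by
          rw [totalDegree_X]
          have := totalDegree_pow (X h : MvPolynomial (ZMod p) ℚ) 2
          rw [totalDegree_X] at this
          omega
  · -- separation
    have he1 : eval v (∑ h : ZMod p, X h ^ 2 * X (g + h)) = -1 := by
      rw [map_sum]
      simp only [map_mul, map_pow, eval_X]
      rw [Finset.sum_eq_single (0 : ZMod p)]
      · rw [hv0, add_zero, hvg]; ring
      · intro b _ hb
        by_cases hbg : b = g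
        · rw [hbg, hvother (g + g) h2g h2g', mul_zero]
        · rw [hvother b hb hbg]; ring
      · intro h; exact absurd (Finset.mem_univ 0) h
    have he2 : eval (-v) (∑ h : ZMod p, X h ^ 2 * X (g + h)) = 1 := by
      rw [map_sum]
      simp only [map_mul, map_pow, eval_X, Pi.neg_apply, neg_sq]
      have hneg : ∑ h : ZMod p, v h ^ 2 * -v (g + h) = -∑ h : ZMod p, v h ^ 2 * v (g + h) := by
        rw [← Finset.sum_neg_distrib]
        exact Finset.sum_congr rfl fun h _ => by ring
      have he1' : ∑ h : ZMod p, v h ^ 2 * v (g + h) = -1 := by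
        have h' := he1
        rw [map_sum] at h'
        simpa only [map_mul, map_pow, eval_X] using h'
      rw [hneg, he1']
      norm_num
    rw [he1, he2]; norm_num
end

section
/- Let G be a finite group acting linearly on a finite dimensional vector space V over a field F whose characteristic does not divide |G|. For v, w ∈ V, the orbits G·v and G·w are distinct if and only if there exists a G-invariant polynomial f ∈ F[V]^G with f(v) ≠ f(w). -/
open MvPolynomial Finset

/-- Separation of orbits of a finite group by polynomial invariants in non-modular
characteristic: for a linear action of a finite group `G` on `F^n` with
`char F ∤ |G|`, two points lie in distinct orbits if and only if some `G`-invariant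
polynomial takes different values on them. -/
theorem orbits_ne_iff_exists_separating_invariant
    {G : Type*} [Group G] [Fintype G]
    {F : Type*} [Field F] (hchar : (Fintype.card G : F) ≠ 0)
    (n : ℕ) (ρ : G →* Matrix (Fin n) (Fin n) F)
    (v w : Fin n → F) :
    (¬ ∃ g : G, (ρ g).mulVec v = w) ↔
      ∃ f : MvPolynomial (Fin n) F,
        (∀ (g : G) (u : Fin n → F), eval ((ρ g).mulVec u) f = eval u f) ∧
        eval v f ≠ eval w f := by
  constructor
  · intro hne
    -- the two orbits are disjoint
    have hdisj : ∀ g h : G, (ρ g).mulVec v ≠ (ρ h).mulVec w := by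
      intro g h heq
      refine hne ⟨h⁻¹ * g, ?_⟩
      rw [map_mul, ← Matrix.mulVec_mulVec, heq, Matrix.mulVec_mulVec, ← map_mul,
        inv_mul_cancel, map_one, Matrix.one_mulVec]
    -- separating linear polynomials
    have hLex : ∀ x u : Fin n → F, x ≠ u → ∃ Lp : MvPolynomial (Fin n) F,
        eval x Lp = 1 ∧ eval u Lp = 0 := by
      intro x u hxu
      obtain ⟨i, hi⟩ := Function.ne_iff.mp hxu
      refine ⟨C ((x i - u i)⁻¹) * (X i - C (u i)), ?_, ?_⟩
      · simp [inv_mul_cancel₀ (sub_ne_zero.mpr hi)]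
      · simp
    choose! L hL1 hL0 using hLex
    set p : G → MvPolynomial (Fin n) F :=
      fun h => ∏ g : G, (1 - L ((ρ g).mulVec v) ((ρ h).mulVec w)) with hp
    have hp1 : ∀ h, eval ((ρ h).mulVec w) (p h) = 1 := by
      intro h
      simp only [hp, map_prod]
      exact Finset.prod_eq_one fun g _ => by simp [hL0 _ _ (hdisj g h)]
    have hp0 : ∀ h g, eval ((ρ g).mulVec v) (p h) = 0 := by
      intro h g
      simp only [hp, map_prod]
      exact Finset.prod_eq_zero (mem_univ g) (by simp [hL1 _ _ (hdisj g h)])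
    set q : MvPolynomial (Fin n) F := ∏ h : G, (1 - p h) with hq
    have hq1 : ∀ g, eval ((ρ g).mulVec v) q = 1 := by
      intro g
      simp only [hq, map_prod]
      exact Finset.prod_eq_one fun h _ => by simp [hp0 h g]
    have hq0 : ∀ h, eval ((ρ h).mulVec w) q = 0 := by
      intro h
      simp only [hq, map_prod]
      exact Finset.prod_eq_zero (mem_univ h) (by simp [hp1 h])
    -- average (sum) over the group
    set f : MvPolynomial (Fin n) F :=
      ∑ g : G, bind₁ (fun i => ∑ j, C (ρ g i j) * X j) q with hf
    have hcomp : ∀ (g : G) (u : Fin n → F),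
        eval u (bind₁ (fun i => ∑ j, C (ρ g i j) * X j) q) = eval ((ρ g).mulVec u) q := by
      intro g u
      have h1 : eval u ((bind₁ fun i => ∑ j, C (ρ g i j) * X j) q)
          = aeval (fun i => aeval u (∑ j, C (ρ g i j) * X j)) q := by
        rw [← aeval_bind₁]; rfl
      rw [h1]
      have h2 : (fun i => (aeval u (∑ j, C (ρ g i j) * X j) : F)) = (ρ g).mulVec u := by
        funext i
        simp [Matrix.mulVec, dotProduct]
      rw [h2]
      rfl
    have hfe : ∀ u : Fin n → F, eval u f = ∑ g : G, eval ((ρ g).mulVec u) q := by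
      intro u
      simp only [hf, map_sum]
      exact Finset.sum_congr rfl fun g _ => hcomp g u
    refine ⟨f, ?_, ?_⟩
    · intro g u
      rw [hfe, hfe]
      have : ∀ h : G, (ρ h).mulVec ((ρ g).mulVec u) = (ρ (h * g)).mulVec u := by
        intro h
        rw [Matrix.mulVec_mulVec, ← map_mul]
      simp only [this]
      exact Fintype.sum_equiv (Equiv.mulRight g)
        (fun h => eval ((ρ (h * g)).mulVec u) q) (fun h => eval ((ρ h).mulVec u) q)
        (fun h => rfl)
    · rw [hfe, hfe]
      simp only [hq1, hq0, Finset.sum_const, Finset.sum_const_zero, card_univ, smul_eq_mul,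
        mul_one]
      exact fun h => hchar (by simpa using h)
  · rintro ⟨f, hinv, hne⟩ ⟨g, hg⟩
    exact hne (by rw [← hg, hinv g v])
end
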